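/- arXiv:1911.07324 — 10 statements merged into one kernel-verified Lean document; each statement's English description precedes it below -/
import Mathlib

section
/- There exists an absolute constant c₁ > 0 such that the following holds for every integer n ≥ 1 and every ε ∈ (0,1): if s is an integer with s ≥ c₁·√n/ε², and X₁,…,X_s are independent random variables each distributed uniformly on [n], and Z = (1/C(s,2))·Σ_{1≤i<j≤s} 1[X_i = X_j] is the fraction of colliding pairs, then Pr[Z ≥ (1 + ε²/16)/n] ≤ 1/3. -/
open MeasureTheory ProbabilityTheory Finset
open scoped ENNReal

set_option maxHeartbeats 1000000 in
/-- The completeness case of the collision-based Uniformity-Tester (Theorem 3.1):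
if all samples are i.i.d. uniform on `[n]` and the number of samples `s` is at least
`c₁·√n/ε²`, then the fraction of colliding pairs exceeds `(1+ε²/16)/n` with probability
at most `1/3`. -/
theorem uniformity_tester_completeness :
    ∃ c₁ : ℝ, 0 < c₁ ∧
      ∀ (n : ℕ), 1 ≤ n → ∀ ε : ℝ, 0 < ε → ε < 1 →
      ∀ s : ℕ, c₁ * Real.sqrt n / ε ^ 2 ≤ (s : ℝ) →
      ∀ (Ω : Type) [MeasurableSpace Ω] (μ : Measure Ω) [IsProbabilityMeasure μ],
      ∀ X : Fin s → Ω → Fin n,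
        (∀ i, Measurable (X i)) →
        iIndepFun X μ →
        (∀ i x, μ {ω | X i ω = x} = ENNReal.ofReal (1 / n)) →
        μ {ω | (1 + ε ^ 2 / 16) / n ≤
            (∑ ij ∈ Finset.univ.filter (fun ij : Fin s × Fin s => ij.1 < ij.2),
              if X ij.1 ω = X ij.2 ω then (1 : ℝ) else 0) / (s.choose 2)} ≤ 1 / 3 := by
  refine ⟨100, by norm_num, ?_⟩
  intro n hn ε hε hε1 s hs Ω _ μ _ X hX hind hunif
  classical
  set N : ℝ := (n : ℝ) with hNdef
  have hN : (0:ℝ) < N := by rw [hNdef]; exact_mod_cast hn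
  have hN1 : (1:ℝ) ≤ N := by rw [hNdef]; exact_mod_cast hn
  have hnne : ((n:ℝ≥0∞)) ≠ 0 := by exact_mod_cast (Nat.one_le_iff_ne_zero.mp hn)
  -- basic facts about s
  have hε2 : (0:ℝ) < ε ^ 2 := by positivity
  have hε21 : ε ^ 2 ≤ 1 := by nlinarith
  have hsqrt1 : (1:ℝ) ≤ Real.sqrt N := Real.one_le_sqrt.mpr hN1
  have hsqrtsq : Real.sqrt N ^ 2 = N := Real.sq_sqrt hN.le
  have hs100 : (100:ℝ) ≤ (s:ℝ) := by
    refine le_trans ?_ hs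
    rw [le_div_iff₀ hε2]
    nlinarith
  have hs2 : 2 ≤ s := by
    have : (2:ℝ) ≤ (s:ℝ) := by linarith
    exact_mod_cast this
  have hsε : 100 * Real.sqrt N ≤ (s:ℝ) * ε ^ 2 := by
    rw [div_le_iff₀ hε2] at hs
    linarith
  -- the P set and its cardinality
  set P : Finset (Fin s × Fin s) :=
    Finset.univ.filter (fun ij : Fin s × Fin s => ij.1 < ij.2) with hPdef
  have hcard : P.card = s.choose 2 := by
    rw [hPdef, Finset.card_filter, Fintype.sum_prod_type_right]
    have h1 : ∀ j : Fin s, (∑ i : Fin s, if i < j then 1 else 0) = (j : ℕ) := by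
      intro j
      rw [← Finset.card_filter]
      have : Finset.univ.filter (fun i : Fin s => i < j) = Finset.Iio j := by ext; simp
      rw [this, Fin.card_Iio]
    rw [Finset.sum_congr rfl (fun j _ => h1 j)]
    exact (Fin.sum_univ_eq_sum_range (fun k => k) s).trans
      (by rw [Finset.sum_range_id, Nat.choose_two_right])
  set C : ℝ := ((s.choose 2 : ℕ) : ℝ) with hCdef
  have hCval : C = (s:ℝ) * ((s:ℝ) - 1) / 2 := by
    rw [hCdef, Nat.cast_choose_two]
  have hCpos : (0:ℝ) < C := by
    have h2 : (2:ℝ) ≤ (s:ℝ) := by linarith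
    rw [hCval]; nlinarith
  -- measure of basic intersections
  have hcap : ∀ (T : Finset (Fin s)) (v : Fin s → Fin n),
      μ (⋂ i ∈ T, X i ⁻¹' {v i}) = ((n : ℝ≥0∞))⁻¹ ^ T.card := by
    intro T v
    have hq : ENNReal.ofReal (1 / (n:ℝ)) = ((n : ℝ≥0∞))⁻¹ := by
      rw [one_div, ENNReal.ofReal_inv_of_pos (by exact_mod_cast hn), ENNReal.ofReal_natCast]
    rw [hind.meas_biInter (fun i _ => ⟨{v i}, measurableSet_singleton _, rfl⟩)]
    rw [Finset.prod_congr rfl (fun i _ => show μ (X i ⁻¹' {v i}) = ((n:ℝ≥0∞))⁻¹ from by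
      rw [show X i ⁻¹' {v i} = {ω | X i ω = v i} from rfl, hunif, hq]), Finset.prod_const]
  -- measure of "all equal on T" events
  have hAB : ∀ (T : Finset (Fin s)), T.Nonempty →
      μ (⋃ x : Fin n, ⋂ i ∈ T, X i ⁻¹' {x}) = ((n : ℝ≥0∞))⁻¹ ^ (T.card - 1) := by
    intro T hT
    obtain ⟨i₀, hi₀⟩ := hT
    rw [measure_iUnion ?disj ?meas]
    · rw [tsum_fintype]
      simp only [hcap]
      rw [Finset.sum_const, Finset.card_univ, Fintype.card_fin, nsmul_eq_mul]
      have hcd : T.card = (T.card - 1) + 1 :=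
        (Nat.succ_pred_eq_of_pos (Finset.card_pos.mpr ⟨i₀, hi₀⟩)).symm
      conv_lhs => rw [hcd]
      rw [pow_succ, ← mul_assoc, mul_comm ((n:ℝ≥0∞)) _, mul_assoc,
        ENNReal.mul_inv_cancel hnne (ENNReal.natCast_ne_top n), mul_one]
    case disj =>
      intro x y hxy
      refine Set.disjoint_left.mpr fun ω hx hy => hxy ?_
      simp only [Set.mem_iInter] at hx hy
      have h1 := hx i₀ hi₀
      have h2 := hy i₀ hi₀
      simp only [Set.mem_preimage, Set.mem_singleton_iff] at h1 h2
      rw [← h1, ← h2]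
    case meas =>
      intro x
      exact Finset.measurableSet_biInter T fun i _ => hX i (measurableSet_singleton _)
  -- the collision events
  set A : Fin s × Fin s → Set Ω := fun p => {ω | X p.1 ω = X p.2 ω} with hAdef
  have hdecomp : ∀ i j : Fin s, {ω | X i ω = X j ω} =
      ⋃ x : Fin n, ⋂ m ∈ ({i, j} : Finset (Fin s)), X m ⁻¹' {x} := by
    intro i j
    ext ω
    simp only [Set.mem_setOf_eq, Set.mem_iUnion, Set.mem_iInter, Finset.mem_insert,
      Finset.mem_singleton, Set.mem_preimage, Set.mem_singleton_iff]
    constructor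
    · intro h
      exact ⟨X i ω, by rintro m (rfl | rfl); exacts [rfl, h.symm]⟩
    · rintro ⟨x, hx⟩
      rw [hx i (Or.inl rfl), hx j (Or.inr rfl)]
  have hAmeas : ∀ p : Fin s × Fin s, MeasurableSet (A p) := by
    intro p
    rw [hAdef]
    simp only
    rw [hdecomp]
    exact MeasurableSet.iUnion fun x =>
      Finset.measurableSet_biInter _ fun i _ => hX i (measurableSet_singleton _)
  have hpair : ∀ i j : Fin s, i ≠ j → μ {ω | X i ω = X j ω} = ((n:ℝ≥0∞))⁻¹ := by
    intro i j hij
    rw [hdecomp, hAB _ ⟨i, by simp⟩]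
    rw [Finset.card_insert_of_notMem (by simpa using hij), Finset.card_singleton]
    norm_num
  -- three distinct indices
  have h3 : ∀ a b c : Fin s, a ≠ b → a ≠ c → b ≠ c →
      μ ({ω | X a ω = X b ω} ∩ {ω | X a ω = X c ω}) = ((n:ℝ≥0∞))⁻¹ ^ 2 := by
    intro a b c hab hac hbc
    have hset : ({ω | X a ω = X b ω} ∩ {ω | X a ω = X c ω}) =
        ⋃ x : Fin n, ⋂ m ∈ ({a, b, c} : Finset (Fin s)), X m ⁻¹' {x} := by
      ext ω
      simp only [Set.mem_inter_iff, Set.mem_setOf_eq, Set.mem_iUnion, Set.mem_iInter,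
        Finset.mem_insert, Finset.mem_singleton, Set.mem_preimage, Set.mem_singleton_iff]
      constructor
      · rintro ⟨h1, h2⟩
        exact ⟨X a ω, by rintro m (rfl | rfl | rfl); exacts [rfl, h1.symm, h2.symm]⟩
      · rintro ⟨x, hx⟩
        rw [hx a (Or.inl rfl), hx b (Or.inr (Or.inl rfl)), hx c (Or.inr (Or.inr rfl))]
        exact ⟨rfl, rfl⟩
    rw [hset, hAB _ ⟨a, by simp⟩]
    rw [Finset.card_insert_of_notMem (by simp [hab, hac]),
      Finset.card_insert_of_notMem (by simpa using hbc), Finset.card_singleton]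
  -- four distinct indices: use independence of the two pairs
  have hquad : ∀ i j k l : Fin s, i ≠ j → k ≠ l → i ≠ k → i ≠ l → j ≠ k → j ≠ l →
      μ ({ω | X i ω = X j ω} ∩ {ω | X k ω = X l ω}) = ((n:ℝ≥0∞))⁻¹ ^ 2 := by
    intro i j k l hij hkl hik hil hjk hjl
    have hI := hind.indepFun_prodMk_prodMk hX i j k l hik hil hjk hjl
    have hD : MeasurableSet {xy : Fin n × Fin n | xy.1 = xy.2} := by
      have : {xy : Fin n × Fin n | xy.1 = xy.2} = ⋃ x : Fin n, {(x, x)} := by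
        ext ⟨a, b⟩
        simp only [Set.mem_setOf_eq, Set.mem_iUnion, Set.mem_singleton_iff, Prod.mk.injEq]
        constructor
        · rintro rfl; exact ⟨a, rfl, rfl⟩
        · rintro ⟨x, rfl, rfl⟩; rfl
      rw [this]
      exact MeasurableSet.iUnion fun x => measurableSet_singleton _
    have h1 : {ω | X i ω = X j ω} =
        (fun ω => (X i ω, X j ω)) ⁻¹' {xy : Fin n × Fin n | xy.1 = xy.2} := rfl
    have h2 : {ω | X k ω = X l ω} =
        (fun ω => (X k ω, X l ω)) ⁻¹' {xy : Fin n × Fin n | xy.1 = xy.2} := rfl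
    rw [h1, h2, hI.measure_inter_preimage_eq_mul _ _ hD hD, ← h1, ← h2,
      hpair i j hij, hpair k l hkl, sq]
  -- joint measure for distinct ordered pairs
  have hjoint : ∀ p q : Fin s × Fin s, p ∈ P → q ∈ P → p ≠ q →
      μ (A p ∩ A q) = ((n:ℝ≥0∞))⁻¹ ^ 2 := by
    intro p q hp hq hpq
    obtain ⟨i, j⟩ := p
    obtain ⟨k, l⟩ := q
    rw [hPdef, Finset.mem_filter] at hp hq
    have hij : i < j := hp.2
    have hkl : k < l := hq.2
    have hcomm : ∀ a b : Fin s, {ω | X a ω = X b ω} = {ω | X b ω = X a ω} := by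
      intro a b; ext ω; exact eq_comm
    simp only [hAdef]
    by_cases hik : i = k
    · subst hik
      have hjl : j ≠ l := fun h => hpq (by rw [h])
      exact h3 i j l hij.ne hkl.ne hjl
    · by_cases hil : i = l
      · subst hil
        rw [Set.inter_comm, hcomm k i]
        exact h3 i k j hkl.ne.symm hij.ne (fun h => (hkl.trans (h ▸ hij)).false.elim)
      · by_cases hjk : j = k
        · subst hjk
          rw [hcomm i j]
          exact h3 j i l (hij.ne.symm) hkl.ne (fun h => (hij.trans (h ▸ hkl)).false.elim)
        · by_cases hjl : j = l
          · subst hjl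
            rw [hcomm i j, Set.inter_comm, hcomm k j, Set.inter_comm]
            exact h3 j i k hij.ne.symm hjk hik
          · exact hquad i j k l hij.ne hkl.ne hik hil hjk hjl
  -- real-valued measures
  have htoReal1 : (((n:ℝ≥0∞))⁻¹).toReal = 1 / N := by
    rw [ENNReal.toReal_inv, ENNReal.toReal_natCast, one_div]
  have htoReal2 : ((((n:ℝ≥0∞))⁻¹ ^ 2)).toReal = 1 / N ^ 2 := by
    rw [ENNReal.toReal_pow, htoReal1, div_pow, one_pow]
  -- indicator representation and integrals
  set Y : Fin s × Fin s → Ω → ℝ :=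
    fun p ω => if X p.1 ω = X p.2 ω then (1:ℝ) else 0 with hYdef
  have hYind : ∀ p, Y p = (A p).indicator (fun _ => (1:ℝ)) := by
    intro p
    funext ω
    by_cases h : X p.1 ω = X p.2 ω <;>
      simp [hYdef, hAdef, Set.indicator_apply, h]
  have hYmem : ∀ p, MemLp (Y p) 2 μ := by
    intro p
    rw [hYind p]
    exact memLp_indicator_const 2 (hAmeas p) 1 (Or.inr (measure_ne_top μ _))
  have hYint : ∀ p, Integrable (Y p) μ := fun p => (hYmem p).integrable one_le_two
  set S : Ω → ℝ := fun ω => ∑ p ∈ P, Y p ω with hSdef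
  have hSmem : MemLp S 2 μ := memLp_finset_sum P (fun p _ => hYmem p)
  -- expectation of S
  have hEY : ∀ p ∈ P, ∫ ω, Y p ω ∂μ = 1 / N := by
    intro p hp
    rw [hPdef, Finset.mem_filter] at hp
    rw [hYind p, integral_indicator_const (1:ℝ) (hAmeas p), smul_eq_mul, mul_one,
      show A p = {ω | X p.1 ω = X p.2 ω} from rfl, measureReal_def, hpair _ _ hp.2.ne, htoReal1]
  have hES : ∫ ω, S ω ∂μ = C / N := by
    rw [hSdef]
    rw [integral_finset_sum P (fun p _ => hYint p),
      Finset.sum_congr rfl hEY, Finset.sum_const, hcard, nsmul_eq_mul]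
    rw [hCdef]; ring
  -- second moment
  have hprodind : ∀ p q : Fin s × Fin s,
      (fun ω => Y p ω * Y q ω) = (A p ∩ A q).indicator (fun _ => (1:ℝ)) := by
    intro p q
    funext ω
    by_cases h1 : X p.1 ω = X p.2 ω <;> by_cases h2 : X q.1 ω = X q.2 ω <;>
      simp [hYdef, hAdef, Set.indicator_apply, Set.mem_inter_iff, h1, h2]
  have hEYY : ∀ p ∈ P, ∀ q ∈ P, ∫ ω, Y p ω * Y q ω ∂μ =
      if q = p then 1 / N else 1 / N ^ 2 := by
    intro p hp q hq
    rw [hprodind p q, integral_indicator_const (1:ℝ) ((hAmeas p).inter (hAmeas q)),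
      smul_eq_mul, mul_one]
    by_cases h : q = p
    · subst h
      rw [Set.inter_self, if_pos rfl]
      rw [hPdef, Finset.mem_filter] at hq
      rw [show A q = {ω | X q.1 ω = X q.2 ω} from rfl, measureReal_def, hpair _ _ hq.2.ne, htoReal1]
    · rw [if_neg h, measureReal_def, hjoint p q hp hq (Ne.symm h), htoReal2]
  have hES2 : ∫ ω, S ω ^ 2 ∂μ = C * (1 / N - 1 / N ^ 2) + C ^ 2 * (1 / N ^ 2) := by
    have hsq : ∀ ω, S ω ^ 2 = ∑ p ∈ P, ∑ q ∈ P, Y p ω * Y q ω := by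
      intro ω
      rw [hSdef, sq, Finset.sum_mul_sum]
    simp only [hsq]
    rw [integral_finset_sum P (fun p _ => integrable_finset_sum P (fun q _ => by
      rw [show (fun ω => Y p ω * Y q ω) = (A p ∩ A q).indicator (fun _ => (1:ℝ)) from
        hprodind p q]
      exact (memLp_indicator_const 2 ((hAmeas p).inter (hAmeas q)) 1
        (Or.inr (measure_ne_top μ _))).integrable one_le_two))]
    rw [Finset.sum_congr rfl (fun p hp => integral_finset_sum P (fun q _ => by
      rw [show (fun ω => Y p ω * Y q ω) = (A p ∩ A q).indicator (fun _ => (1:ℝ)) from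
        hprodind p q]
      exact (memLp_indicator_const 2 ((hAmeas p).inter (hAmeas q)) 1
        (Or.inr (measure_ne_top μ _))).integrable one_le_two))]
    rw [Finset.sum_congr rfl (fun p hp => Finset.sum_congr rfl (fun q hq => hEYY p hp q hq))]
    have hinner : ∀ p ∈ P, (∑ q ∈ P, if q = p then 1 / N else 1 / N ^ 2)
        = (1 / N - 1 / N ^ 2) + C * (1 / N ^ 2) := by
      intro p hp
      have : ∀ q ∈ P, (if q = p then 1 / N else 1 / N ^ 2)
          = (if q = p then 1 / N - 1 / N ^ 2 else 0) + 1 / N ^ 2 := by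
        intro q _
        by_cases h : q = p <;> simp [h]
      rw [Finset.sum_congr rfl this, Finset.sum_add_distrib, Finset.sum_ite_eq' P p]
      rw [if_pos hp, Finset.sum_const, hcard, nsmul_eq_mul, hCdef]
    rw [Finset.sum_congr rfl hinner, Finset.sum_const, hcard, nsmul_eq_mul, ← hCdef]
    ring
  -- variance
  have hVar : variance S μ = C / N - C / N ^ 2 := by
    rw [variance_eq_sub hSmem]
    have h1 : (μ[S ^ 2] : ℝ) = ∫ ω, S ω ^ 2 ∂μ := by
      congr 1
    rw [h1, hES2, hES]
    field_simp
    ring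
  -- Chebyshev
  set δ : ℝ := ε ^ 2 / 16 with hδdef
  have hδpos : 0 < δ := by positivity
  set c : ℝ := C * δ / N with hcdef
  have hcpos : 0 < c := by positivity
  have hcheb := meas_ge_le_variance_div_sq (μ := μ) hSmem hcpos
  -- the target event is contained in the Chebyshev event
  have hsub : {ω | (1 + ε ^ 2 / 16) / (n:ℝ) ≤
      (∑ ij ∈ Finset.univ.filter (fun ij : Fin s × Fin s => ij.1 < ij.2),
        if X ij.1 ω = X ij.2 ω then (1 : ℝ) else 0) / (s.choose 2 : ℝ)}
      ⊆ {ω | c ≤ |S ω - μ[S]|} := by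
    intro ω hω
    simp only [Set.mem_setOf_eq] at hω ⊢
    have hω' : (1 + δ) / N ≤ S ω / C := hω
    have h1 : (1 + δ) / N * C ≤ S ω := (le_div_iff₀ hCpos).mp hω'
    have h2 : c ≤ S ω - C / N := by
      rw [hcdef]
      have : (1 + δ) / N * C = C / N + C * δ / N := by ring
      linarith [this ▸ h1]
    calc c ≤ S ω - C / N := h2
      _ ≤ |S ω - C / N| := le_abs_self _
      _ = |S ω - μ[S]| := by rw [show (μ[S] : ℝ) = C / N from hES]
  refine le_trans (measure_mono hsub) (le_trans hcheb ?_)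
  -- final numeric bound
  have hkey : 3 * N ≤ C * δ ^ 2 := by
    rw [hCval, hδdef]
    have hs0 : (0:ℝ) ≤ (s:ℝ) := by positivity
    have hε4 : (0:ℝ) ≤ ε ^ 4 := by positivity
    have hsq : 10000 * N ≤ (s:ℝ) ^ 2 * ε ^ 4 := by
      have h := mul_le_mul hsε hsε (by positivity) (by positivity : (0:ℝ) ≤ (s:ℝ) * ε ^ 2)
      nlinarith [hsqrtsq, h]
    have hstep : (0:ℝ) ≤ (s:ℝ) * ε ^ 4 * ((s:ℝ) / 100 - 1) :=
      mul_nonneg (mul_nonneg hs0 hε4) (by linarith)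
    nlinarith [hsq, hstep, hN]
  have hfrac : variance S μ / c ^ 2 ≤ 1 / 3 := by
    rw [hVar, hcdef]
    have hsimp : (C / N - C / N ^ 2) / (C * δ / N) ^ 2 = (N - 1) / (C * δ ^ 2) := by
      field_simp
    rw [hsimp, div_le_iff₀ (by positivity)]
    linarith
  calc ENNReal.ofReal (variance S μ / c ^ 2) ≤ ENNReal.ofReal (1 / 3) :=
        ENNReal.ofReal_le_ofReal hfrac
    _ = 1 / 3 := by
        rw [ENNReal.ofReal_div_of_pos (by norm_num)]
        norm_num
end

section
/- Let n, s ≥ 2 be integers and ε ∈ (0,1) with s·ε ≥ 4. Let p₁,…,p_s be distributions over [n] such that ‖p_i − U_n‖₁ ≥ ε for every i and such that p₁,…,p_s satisfy the structural condition with respect to the uniform distribution U_n. Then (1/C(s,2))·Σ_{1≤i<j≤s} Σ_{x∈[n]} p_i(x)·p_j(x) ≥ (1 + ε²/8)/n. Equivalently, if X₁,…,X_s are independent with X_i ~ p_i and Z = (1/C(s,2))·Σ_{i<j} 1[X_i = X_j], then E[Z] ≥ (1 + ε²/8)/n. -/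
open Finset

/-- A distribution over `[n]`: a nonnegative function summing to `1`. -/
def IsDist {n : ℕ} (p : Fin n → ℝ) : Prop :=
  (∀ x, 0 ≤ p x) ∧ ∑ x, p x = 1

/-- The structural condition: there is a set `A ⊆ [n]` such that every `p i` is at least `q`
on `A` and at most `q` on the complement of `A`. -/
def StructCond {n s : ℕ} (p : Fin s → Fin n → ℝ) (q : Fin n → ℝ) : Prop :=
  ∃ A : Finset (Fin n),
    (∀ (i : Fin s), ∀ x ∈ A, q x ≤ p i x) ∧ (∀ (i : Fin s), ∀ x ∉ A, p i x ≤ q x)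

/-- Decomposition of a double sum of a symmetric function into the diagonal plus
twice the sum over ordered pairs. -/
lemma pair_sum_decomp {s : ℕ} (g : Fin s → Fin s → ℝ) (hsym : ∀ i j, g i j = g j i) :
    ∑ i, ∑ j, g i j =
      ∑ i, g i i +
        2 * ∑ ij ∈ Finset.univ.filter (fun ij : Fin s × Fin s => ij.1 < ij.2),
              g ij.1 ij.2 := by
  have h0 : ∑ i, ∑ j, g i j = ∑ ij : Fin s × Fin s, g ij.1 ij.2 := by
    rw [← Finset.univ_product_univ, Finset.sum_product]
  have h1 : ∑ ij : Fin s × Fin s, g ij.1 ij.2 =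
      (∑ ij ∈ Finset.univ.filter (fun ij : Fin s × Fin s => ij.1 < ij.2), g ij.1 ij.2) +
      (∑ ij ∈ Finset.univ.filter (fun ij : Fin s × Fin s => ¬ ij.1 < ij.2), g ij.1 ij.2) :=
    (Finset.sum_filter_add_sum_filter_not _ _ _).symm
  have h2 : (∑ ij ∈ Finset.univ.filter (fun ij : Fin s × Fin s => ¬ ij.1 < ij.2), g ij.1 ij.2) =
      (∑ ij ∈ Finset.univ.filter (fun ij : Fin s × Fin s => ij.1 = ij.2), g ij.1 ij.2) +
      (∑ ij ∈ Finset.univ.filter (fun ij : Fin s × Fin s => ij.2 < ij.1), g ij.1 ij.2) := by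
    rw [← Finset.sum_filter_add_sum_filter_not
      (Finset.univ.filter (fun ij : Fin s × Fin s => ¬ ij.1 < ij.2))
      (fun ij => ij.1 = ij.2)]
    congr 1
    · apply Finset.sum_congr _ (fun _ _ => rfl)
      rw [Finset.filter_filter]
      apply Finset.filter_congr
      intro ij _
      constructor
      · rintro ⟨_, h⟩; exact h
      · intro h; exact ⟨by simp [h], h⟩
    · apply Finset.sum_congr _ (fun _ _ => rfl)
      rw [Finset.filter_filter]
      apply Finset.filter_congr
      intro ij _
      constructor
      · rintro ⟨h1', h2'⟩
        rcases lt_trichotomy ij.1 ij.2 with h | h | h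
        · exact absurd h h1'
        · exact absurd h h2'
        · exact h
      · intro h
        exact ⟨fun h' => absurd h (not_lt.mpr h'.le), fun h' => absurd h (by simp [h'])⟩
  have h3 : (∑ ij ∈ Finset.univ.filter (fun ij : Fin s × Fin s => ij.1 = ij.2), g ij.1 ij.2) =
      ∑ i, g i i := by
    refine Finset.sum_nbij' (fun ij => ij.1) (fun i => (i, i)) ?_ ?_ ?_ ?_ ?_
    · intro ij _; exact Finset.mem_univ _
    · intro i _; simp
    · intro ij hij
      simp only [Finset.mem_filter] at hij
      exact Prod.ext rfl hij.2
    · intro i _; rfl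
    · intro ij hij
      simp only [Finset.mem_filter] at hij
      rw [← hij.2]
  have h4 : (∑ ij ∈ Finset.univ.filter (fun ij : Fin s × Fin s => ij.2 < ij.1), g ij.1 ij.2) =
      (∑ ij ∈ Finset.univ.filter (fun ij : Fin s × Fin s => ij.1 < ij.2), g ij.1 ij.2) := by
    refine Finset.sum_nbij' Prod.swap Prod.swap ?_ ?_ ?_ ?_ ?_
    · intro ij hij
      simp only [Finset.mem_filter] at hij ⊢
      exact ⟨Finset.mem_univ _, hij.2⟩
    · intro ij hij
      simp only [Finset.mem_filter] at hij ⊢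
      exact ⟨Finset.mem_univ _, hij.2⟩
    · intro ij _; rfl
    · intro ij _; rfl
    · intro ij _; exact hsym _ _
  rw [h0, h1, h2, h3, h4]
  ring

set_option maxHeartbeats 1000000 in
/-- Lemma 3.2: the lower bound on the expected collision statistic in the soundness case.
If `p₁, …, p_s` are distributions over `[n]`, all `ε`-far from uniform in `ℓ₁` and
satisfying the structural condition with respect to the uniform distribution, and
`s·ε ≥ 4`, then the average pairwise collision probability is at least `(1+ε²/8)/n`. -/
theorem expected_collision_lower_bound
    (n s : ℕ) (hn : 2 ≤ n) (hs : 2 ≤ s)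
    (ε : ℝ) (hε0 : 0 < ε) (hε1 : ε < 1) (hsε : 4 ≤ (s : ℝ) * ε)
    (p : Fin s → Fin n → ℝ)
    (hdist : ∀ i, IsDist (p i))
    (hfar : ∀ i, ∑ x, |p i x - 1 / n| ≥ ε)
    (hstruct : StructCond p (fun _ => 1 / n)) :
    (1 + ε ^ 2 / 8) / n ≤
      (∑ ij ∈ Finset.univ.filter (fun ij : Fin s × Fin s => ij.1 < ij.2),
        ∑ x, p ij.1 x * p ij.2 x) / (s.choose 2) := by
  obtain ⟨A, hA, hB⟩ := hstruct
  have npos : (0:ℝ) < n := by positivity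
  have spos : (0:ℝ) < s := by positivity
  simp only at hA hB
  have hunif : ∑ _x : Fin n, (1:ℝ)/n = 1 := by
    rw [Finset.sum_const, card_univ, Fintype.card_fin, nsmul_eq_mul]
    field_simp
  have hsum0 : ∀ i, ∑ x, (p i x - 1/n) = 0 := by
    intro i
    rw [Finset.sum_sub_distrib, (hdist i).2, hunif, sub_self]
  -- f i x = 1/n - p i x : nonneg on Aᶜ and ≤ 1/n everywhere
  set f : Fin s → Fin n → ℝ := fun i x => 1/n - p i x with hf
  have hf0 : ∀ i, ∀ x ∈ Aᶜ, 0 ≤ f i x := by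
    intro i x hx
    have := hB i x (Finset.mem_compl.mp hx)
    simp only [hf]; linarith
  have hf1 : ∀ i x, f i x ≤ 1/n := by
    intro i x
    have := (hdist i).1 x
    simp only [hf]; linarith
  -- the mass of f on Aᶜ is at least ε/2
  have hhalf : ∀ i, ε/2 ≤ ∑ x ∈ Aᶜ, f i x := by
    intro i
    have h1 : ∑ x ∈ A, (p i x - 1/n) + ∑ x ∈ Aᶜ, (p i x - 1/n) = 0 := by
      rw [Finset.sum_add_sum_compl]; exact hsum0 i
    have h2 : ∑ x ∈ A, |p i x - 1/n| = ∑ x ∈ A, (p i x - 1/n) := by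
      refine Finset.sum_congr rfl fun x hx => ?_
      have := hA i x hx
      exact abs_of_nonneg (by linarith)
    have h3 : ∑ x ∈ Aᶜ, |p i x - 1/n| = ∑ x ∈ Aᶜ, f i x := by
      refine Finset.sum_congr rfl fun x hx => ?_
      have := hf0 i x hx
      simp only [hf] at this ⊢
      rw [abs_of_nonpos (by linarith)]; ring
    have h4 : ε ≤ ∑ x ∈ A, |p i x - 1/n| + ∑ x ∈ Aᶜ, |p i x - 1/n| := by
      rw [Finset.sum_add_sum_compl]; exact hfar i
    have h5 : ∑ x ∈ Aᶜ, (p i x - 1/n) = - ∑ x ∈ Aᶜ, f i x := by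
      rw [← Finset.sum_neg_distrib]
      refine Finset.sum_congr rfl fun x _ => ?_
      simp only [hf]; ring
    rw [h2, h3] at h4
    rw [h5] at h1
    linarith
  -- the total mass T
  set T : ℝ := ∑ i, ∑ x ∈ Aᶜ, f i x with hT
  have hTlb : (s:ℝ) * ε / 2 ≤ T := by
    have h := Finset.sum_le_sum (fun i (_ : i ∈ (Finset.univ : Finset (Fin s))) => hhalf i)
    rw [Finset.sum_const, card_univ, Fintype.card_fin, nsmul_eq_mul] at h
    calc (s:ℝ) * ε / 2 = s * (ε/2) := by ring
      _ ≤ T := h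
  have hT2 : (2:ℝ) ≤ T := by linarith
  -- pairwise correlations on Aᶜ
  set G : Fin s → Fin s → ℝ := fun i j => ∑ x ∈ Aᶜ, f i x * f j x with hG
  have hGsym : ∀ i j, G i j = G j i := by
    intro i j
    exact Finset.sum_congr rfl fun x _ => mul_comm _ _
  -- diagonal bound
  have hdiag : ∑ i, G i i ≤ T / n := by
    have key : ∀ i, G i i ≤ (∑ x ∈ Aᶜ, f i x) / n := by
      intro i
      have h : G i i ≤ ∑ x ∈ Aᶜ, (1/(n:ℝ)) * f i x := by
        refine Finset.sum_le_sum fun x hx => ?_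
        exact mul_le_mul_of_nonneg_right (hf1 i x) (hf0 i x hx)
      rw [← Finset.mul_sum] at h
      calc G i i ≤ (1/(n:ℝ)) * ∑ x ∈ Aᶜ, f i x := h
        _ = (∑ x ∈ Aᶜ, f i x) / n := by ring
    calc ∑ i, G i i ≤ ∑ i, (∑ x ∈ Aᶜ, f i x) / n :=
          Finset.sum_le_sum fun i _ => key i
      _ = T / n := by rw [hT, Finset.sum_div]
  -- total bound via Cauchy-Schwarz
  have htotal : T^2 / n ≤ ∑ i, ∑ j, G i j := by
    have hexp : ∑ i, ∑ j, G i j = ∑ x ∈ Aᶜ, (∑ i, f i x)^2 := by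
      simp only [hG]
      calc ∑ i, ∑ j, ∑ x ∈ Aᶜ, f i x * f j x
          = ∑ i, ∑ x ∈ Aᶜ, ∑ j, f i x * f j x := by
            exact Finset.sum_congr rfl fun i _ => Finset.sum_comm
        _ = ∑ x ∈ Aᶜ, ∑ i, ∑ j, f i x * f j x := Finset.sum_comm
        _ = ∑ x ∈ Aᶜ, (∑ i, f i x)^2 := by
            refine Finset.sum_congr rfl fun x _ => ?_
            rw [sq, Finset.sum_mul_sum]
    have hTalt : T = ∑ x ∈ Aᶜ, ∑ i, f i x := Finset.sum_comm
    have hCS : T^2 ≤ (Aᶜ.card : ℝ) * ∑ x ∈ Aᶜ, (∑ i, f i x)^2 := by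
      rw [hTalt]
      exact sq_sum_le_card_mul_sum_sq (s := Aᶜ) (f := fun x => ∑ i, f i x)
    have hcard : (Aᶜ.card : ℝ) ≤ n := by
      have h := Finset.card_le_univ Aᶜ
      have h2 : Aᶜ.card ≤ n := by simpa using h
      exact_mod_cast h2
    have hnn : 0 ≤ ∑ x ∈ Aᶜ, (∑ i, f i x)^2 :=
      Finset.sum_nonneg fun x _ => sq_nonneg _
    rw [hexp, div_le_iff₀ npos]
    calc T^2 ≤ (Aᶜ.card : ℝ) * ∑ x ∈ Aᶜ, (∑ i, f i x)^2 := hCS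
      _ ≤ (n:ℝ) * ∑ x ∈ Aᶜ, (∑ i, f i x)^2 := by
          exact mul_le_mul_of_nonneg_right hcard hnn
      _ = (∑ x ∈ Aᶜ, (∑ i, f i x)^2) * n := mul_comm _ _
  -- the off-diagonal sum
  set S : ℝ := ∑ ij ∈ Finset.univ.filter (fun ij : Fin s × Fin s => ij.1 < ij.2),
      G ij.1 ij.2 with hSdef
  have hdecomp := pair_sum_decomp G hGsym
  have h2S : T^2/n - T/n ≤ 2*S := by
    rw [← hSdef] at hdecomp
    linarith
  -- per-pair collision bound
  have hpair : ∀ i j, 1/(n:ℝ) + G i j ≤ ∑ x, p i x * p j x := by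
    intro i j
    have hid : ∑ x, (p i x - 1/n)*(p j x - 1/n) = ∑ x, p i x * p j x - 1/n := by
      have e : ∀ x : Fin n, (p i x - 1/n)*(p j x - 1/n)
          = p i x * p j x - (1/n)*(p i x - 1/n) - (1/n)*(p j x - 1/n) - (1/n)*(1/n) := by
        intro x; ring
      rw [Finset.sum_congr rfl fun x _ => e x]
      rw [Finset.sum_sub_distrib, Finset.sum_sub_distrib, Finset.sum_sub_distrib,
        ← Finset.mul_sum, ← Finset.mul_sum, hsum0 i, hsum0 j]
      rw [Finset.sum_const, card_univ, Fintype.card_fin, nsmul_eq_mul]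
      field_simp
      ring
    have hsplit : ∑ x, (p i x - 1/n)*(p j x - 1/n)
        = ∑ x ∈ A, (p i x - 1/n)*(p j x - 1/n) + ∑ x ∈ Aᶜ, (p i x - 1/n)*(p j x - 1/n) :=
      (Finset.sum_add_sum_compl A _).symm
    have hApos : 0 ≤ ∑ x ∈ A, (p i x - 1/n)*(p j x - 1/n) := by
      refine Finset.sum_nonneg fun x hx => mul_nonneg ?_ ?_
      · have := hA i x hx; linarith
      · have := hA j x hx; linarith
    have hBeq : ∑ x ∈ Aᶜ, (p i x - 1/n)*(p j x - 1/n) = G i j := by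
      refine Finset.sum_congr rfl fun x _ => ?_
      simp only [hf]; ring
    rw [hBeq] at hsplit
    linarith
  -- cardinality of the set of ordered pairs
  have hcardP : 2 * ((Finset.univ.filter (fun ij : Fin s × Fin s => ij.1 < ij.2)).card : ℝ)
      = (s:ℝ) * s - s := by
    have hone := pair_sum_decomp (s := s) (fun _ _ => (1:ℝ)) (fun _ _ => rfl)
    have h1 : ∑ _i : Fin s, ∑ _j : Fin s, (1:ℝ) = (s:ℝ) * s := by
      simp [Finset.sum_const, mul_comm]
    have h2 : ∑ _i : Fin s, (1:ℝ) = (s:ℝ) := by simp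
    rw [h1, h2, Finset.sum_const, nsmul_eq_mul, mul_one] at hone
    linarith
  have hchoose : (s.choose 2 : ℝ)
      = ((Finset.univ.filter (fun ij : Fin s × Fin s => ij.1 < ij.2)).card : ℝ) := by
    rw [Nat.cast_choose_two]
    have h : (s:ℝ) * ((s:ℝ) - 1) = (s:ℝ) * s - s := by ring
    rw [h]
    linarith
  have hchoosepos : (0:ℝ) < (s.choose 2 : ℝ) := by
    have h : 0 < s.choose 2 := Nat.choose_pos hs
    exact_mod_cast h
  -- lower bound on the big sum
  have hmain : ((Finset.univ.filter (fun ij : Fin s × Fin s => ij.1 < ij.2)).card : ℝ) * (1/n) + S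
      ≤ ∑ ij ∈ Finset.univ.filter (fun ij : Fin s × Fin s => ij.1 < ij.2),
          ∑ x, p ij.1 x * p ij.2 x := by
    have h := Finset.sum_le_sum
      (fun ij (_ : ij ∈ Finset.univ.filter (fun ij : Fin s × Fin s => ij.1 < ij.2)) =>
        hpair ij.1 ij.2)
    rw [Finset.sum_add_distrib, Finset.sum_const, nsmul_eq_mul, ← hSdef] at h
    exact h
  -- final arithmetic
  rw [div_le_div_iff₀ npos hchoosepos, hchoose]
  set C : ℝ := ((Finset.univ.filter (fun ij : Fin s × Fin s => ij.1 < ij.2)).card : ℝ) with hC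
  have hCnonneg : (0:ℝ) ≤ C := by positivity
  set X : ℝ := ∑ ij ∈ Finset.univ.filter (fun ij : Fin s × Fin s => ij.1 < ij.2),
      ∑ x, p ij.1 x * p ij.2 x with hX
  clear_value f T G S C X
  -- goal : (1 + ε^2/8) * C ≤ X * n
  have hXn : C + S * n ≤ X * n := by
    have h := mul_le_mul_of_nonneg_right hmain npos.le
    have hrw : (C * (1/(n:ℝ)) + S) * n = C + S * n := by field_simp
    rw [hrw] at h
    exact h
  have e1 : T^2 - T ≤ 2*S*n := by
    have h := mul_le_mul_of_nonneg_right h2S npos.le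
    rw [sub_mul, div_mul_cancel₀ _ (ne_of_gt npos), div_mul_cancel₀ _ (ne_of_gt npos)] at h
    linarith
  have e2 : ((s:ℝ)*ε/2)^2 - (s:ℝ)*ε/2 ≤ T^2 - T := by
    nlinarith [mul_nonneg (sub_nonneg.2 hTlb) (by linarith : (0:ℝ) ≤ T + (s:ℝ)*ε/2 - 1)]
  have e3 : (s:ℝ)^2*ε^2/8 ≤ ((s:ℝ)*ε/2)^2 - (s:ℝ)*ε/2 := by
    have hse : (0:ℝ) ≤ (s:ℝ)*ε := by positivity
    nlinarith [mul_le_mul_of_nonneg_left hsε hse]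
  have e4 : C ≤ (s:ℝ)^2/2 := by nlinarith [hcardP]
  have e4' : C * ε^2 ≤ (s:ℝ)^2/2 * ε^2 :=
    mul_le_mul_of_nonneg_right e4 (sq_nonneg ε)
  have e5 : C * (ε^2/8) ≤ S * n := by linarith
  have hfin : (1 + ε^2/8) * C = C + C * (ε^2/8) := by ring
  linarith
end

section
/- Let n, s ≥ 2 be integers and ε ∈ (0,1). Let p₁,…,p_s be distributions over [n], each with ‖p_i − U_n‖₁ ≥ ε, satisfying the structural condition with respect to the uniform distribution U_n. Let X₁,…,X_s be independent random variables with X_i distributed according to p_i, let σ_{ij} = 1[X_i = X_j] for i < j, let W = Σ_{1≤i<j≤s} σ_{ij}, and define α by E[W]/C(s,2) = (1+α)/n (that is, α = n·E[W]/C(s,2) − 1). Then Var(W) ≤ (18·α·s/n²)·C(s,2) + 3·(α·C(s,2)/n)^{3/2} + Σ_{1≤i<j≤s} E[σ_{ij}]. -/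
open MeasureTheory ProbabilityTheory Finset

/-- Triple Cauchy–Schwarz on a finset, for nonneg functions. -/
lemma triple_cs {ι : Type*} (A : Finset ι) (f g h : ι → ℝ)
    (hf : ∀ x ∈ A, 0 ≤ f x) (hg : ∀ x ∈ A, 0 ≤ g x) (hh : ∀ x ∈ A, 0 ≤ h x) :
    ∑ x ∈ A, f x * g x * h x ≤
      Real.sqrt ((∑ x ∈ A, f x * g x) * (∑ x ∈ A, f x * h x)) * Real.sqrt (∑ x ∈ A, g x * h x) := by
  have key : ∑ x ∈ A, f x * g x * h x
      = ∑ x ∈ A, (Real.sqrt (f x * g x) * Real.sqrt (f x * h x)) * Real.sqrt (g x * h x) := by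
    refine Finset.sum_congr rfl fun x hx => ?_
    rw [Real.sqrt_mul (hf x hx), Real.sqrt_mul (hf x hx), Real.sqrt_mul (hg x hx)]
    ring_nf
    rw [Real.sq_sqrt (hf x hx), Real.sq_sqrt (hg x hx), Real.sq_sqrt (hh x hx)]
  rw [key]
  calc ∑ x ∈ A, (Real.sqrt (f x * g x) * Real.sqrt (f x * h x)) * Real.sqrt (g x * h x)
      ≤ Real.sqrt (∑ x ∈ A, (Real.sqrt (f x * g x) * Real.sqrt (f x * h x))^2)
        * Real.sqrt (∑ x ∈ A, (Real.sqrt (g x * h x))^2) :=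
        Real.sum_mul_le_sqrt_mul_sqrt _ _ _
    _ ≤ Real.sqrt ((∑ x ∈ A, f x * g x) * (∑ x ∈ A, f x * h x)) * Real.sqrt (∑ x ∈ A, g x * h x) := by
        gcongr
        · -- ∑ (√(fg)√(fh))² ≤ (∑fg)(∑fh)
          have e1 : ∀ x ∈ A, (Real.sqrt (f x * g x) * Real.sqrt (f x * h x))^2
              = (f x * g x) * (f x * h x) := by
            intro x hx
            rw [mul_pow, Real.sq_sqrt (mul_nonneg (hf x hx) (hg x hx)),
              Real.sq_sqrt (mul_nonneg (hf x hx) (hh x hx))]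
          rw [Finset.sum_congr rfl e1]
          calc ∑ x ∈ A, (f x * g x) * (f x * h x)
              ≤ Real.sqrt (∑ x ∈ A, (f x * g x)^2) * Real.sqrt (∑ x ∈ A, (f x * h x)^2) :=
                Real.sum_mul_le_sqrt_mul_sqrt _ _ _
            _ ≤ Real.sqrt ((∑ x ∈ A, f x * g x)^2) * Real.sqrt ((∑ x ∈ A, f x * h x)^2) := by
                gcongr <;>
                  exact Finset.sum_sq_le_sq_sum_of_nonneg fun x hx =>
                    mul_nonneg (hf x hx) (by first | exact hg x hx | exact hh x hx)
            _ = (∑ x ∈ A, f x * g x) * (∑ x ∈ A, f x * h x) := by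
                rw [Real.sqrt_sq (Finset.sum_nonneg fun x hx => mul_nonneg (hf x hx) (hg x hx)),
                  Real.sqrt_sq (Finset.sum_nonneg fun x hx => mul_nonneg (hf x hx) (hh x hx))]
        · exact le_of_eq (Real.sq_sqrt (mul_nonneg (hg _ ‹_›) (hh _ ‹_›)))

lemma cube_sum_le {s : ℕ} (b : Fin s → Fin s → ℝ) (hb : ∀ i j, 0 ≤ b i j) :
    ∑ m, ∑ a, ∑ c, b m a * b m c * b a c
      ≤ (∑ a, ∑ c, (b a c)^2) * Real.sqrt (∑ a, ∑ c, (b a c)^2) := by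
  set Q : ℝ := ∑ a, ∑ c, (b a c)^2 with hQ
  have hQ0 : 0 ≤ Q := Finset.sum_nonneg fun a _ => Finset.sum_nonneg fun c _ => sq_nonneg _
  have hQprod : Q = ∑ x : Fin s × Fin s, (b x.1 x.2)^2 := by
    rw [hQ, ← Finset.sum_product']
    rfl

  have step : ∀ m : Fin s, ∑ a, ∑ c, b m a * b m c * b a c
      ≤ (∑ a, (b m a)^2) * Real.sqrt Q := by
    intro m
    have e1 : ∑ a, ∑ c, b m a * b m c * b a c
        = ∑ x : Fin s × Fin s, (b m x.1 * b m x.2) * b x.1 x.2 := by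
      rw [← Finset.sum_product']
      rfl
    rw [e1]
    calc ∑ x : Fin s × Fin s, (b m x.1 * b m x.2) * b x.1 x.2
        ≤ Real.sqrt (∑ x : Fin s × Fin s, (b m x.1 * b m x.2)^2)
          * Real.sqrt (∑ x : Fin s × Fin s, (b x.1 x.2)^2) :=
          Real.sum_mul_le_sqrt_mul_sqrt _ _ _
      _ = (∑ a, (b m a)^2) * Real.sqrt Q := by
          rw [← hQprod]
          congr 1
          have e2 : ∑ x : Fin s × Fin s, (b m x.1 * b m x.2)^2
              = (∑ a, (b m a)^2) * (∑ c, (b m c)^2) := by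
            rw [Finset.sum_mul_sum, ← Finset.sum_product']
            exact Finset.sum_congr rfl fun x _ => by ring
          rw [e2]
          have : (∑ c, (b m c)^2) = (∑ a, (b m a)^2) := rfl
          rw [this, Real.sqrt_mul_self (Finset.sum_nonneg fun a _ => sq_nonneg _)]
  calc ∑ m, ∑ a, ∑ c, b m a * b m c * b a c
      ≤ ∑ m, (∑ a, (b m a)^2) * Real.sqrt Q := Finset.sum_le_sum fun m _ => step m
    _ = Q * Real.sqrt Q := by rw [← Finset.sum_mul, ← hQ]

def colPsi {s : ℕ} (ef : (Fin s × Fin s) × (Fin s × Fin s)) : Fin s × Fin s × Fin s :=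
  if ef.1.1 = ef.2.1 then (ef.1.1, ef.1.2, ef.2.2)
  else if ef.1.1 = ef.2.2 then (ef.1.1, ef.1.2, ef.2.1)
  else if ef.1.2 = ef.2.1 then (ef.1.2, ef.1.1, ef.2.2)
  else (ef.1.2, ef.1.1, ef.2.1)

def colRecov {s : ℕ} (t : Fin s × Fin s × Fin s) : (Fin s × Fin s) × (Fin s × Fin s) :=
  ((if t.1 < t.2.1 then (t.1, t.2.1) else (t.2.1, t.1)),
   (if t.1 < t.2.2 then (t.1, t.2.2) else (t.2.2, t.1)))

lemma colPsi_spec {s : ℕ} (e f : Fin s × Fin s) (he : e.1 < e.2) (hf : f.1 < f.2)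
    (hne : e ≠ f) (hsh : e.1 = f.1 ∨ e.1 = f.2 ∨ e.2 = f.1 ∨ e.2 = f.2) :
    colRecov (colPsi (e, f)) = (e, f)
      ∧ (colPsi (e, f)).1 ≠ (colPsi (e, f)).2.1
      ∧ (colPsi (e, f)).1 ≠ (colPsi (e, f)).2.2
      ∧ (colPsi (e, f)).2.1 ≠ (colPsi (e, f)).2.2 := by
  obtain ⟨a, b⟩ := e
  obtain ⟨c, d⟩ := f
  dsimp at he hf hsh ⊢
  by_cases h1 : a = c
  · subst h1
    have hbd : b ≠ d := by
      intro h; exact hne (by rw [h])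
    have h : colPsi ((a, b), (a, d)) = (a, b, d) := by simp [colPsi]
    rw [h]
    exact ⟨by simp [colRecov, if_pos he, if_pos hf], he.ne, hf.ne, hbd⟩
  · by_cases h2 : a = d
    · subst h2
      have h : colPsi ((a, b), (c, a)) = (a, b, c) := by simp [colPsi, h1]
      rw [h]
      have hnba : ¬ a < c := asymm hf
      exact ⟨by simp [colRecov, if_pos he, if_neg hnba], he.ne, h1, (hf.trans he).ne'⟩
    · by_cases h3 : b = c
      · subst h3
        have h : colPsi ((a, b), (b, d)) = (b, a, d) := by simp [colPsi, h1, h2]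
        rw [h]
        have hnba : ¬ b < a := asymm he
        refine ⟨by simp [colRecov, if_neg hnba, if_pos hf], he.ne', hf.ne, ?_⟩
        exact (lt_trans he hf).ne
      · have h4 : b = d := by tauto
        subst h4
        have h : colPsi ((a, b), (c, b)) = (b, a, c) := by simp [colPsi, h1, h2, h3]
        rw [h]
        have hnba : ¬ b < a := asymm he
        have hnbc : ¬ b < c := asymm hf
        exact ⟨by simp [colRecov, if_neg hnba, if_neg hnbc], he.ne', hf.ne',
          fun hac => h1 hac⟩

lemma card_lt_filter (s : ℕ) :
    (Finset.univ.filter (fun ij : Fin s × Fin s => ij.1 < ij.2)).card = s.choose 2 := by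
  classical
  have hswap : (Finset.univ.filter (fun ij : Fin s × Fin s => ij.1 < ij.2)).card
      = (Finset.univ.filter (fun ij : Fin s × Fin s => ij.2 < ij.1)).card := by
    refine Finset.card_nbij' (fun x => (x.2, x.1)) (fun x => (x.2, x.1)) ?_ ?_ ?_ ?_ <;>
      simp [Finset.mem_filter, Set.MapsTo, Set.LeftInvOn, Set.RightInvOn]
  have hdiag : (Finset.univ.filter (fun ij : Fin s × Fin s => ij.1 = ij.2)).card = s := by
    rw [show (Finset.univ.filter (fun ij : Fin s × Fin s => ij.1 = ij.2))
        = Finset.univ.image (fun i : Fin s => (i, i)) from by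
      ext x
      simp only [Finset.mem_filter, Finset.mem_image, Finset.mem_univ, true_and]
      constructor
      · intro h; exact ⟨x.1, by rw [Prod.ext_iff]; exact ⟨rfl, h⟩⟩
      · rintro ⟨i, rfl⟩; rfl]
    rw [Finset.card_image_of_injective _ (fun i j h => (Prod.ext_iff.1 h).1)]
    simp
  have htot : (Finset.univ.filter (fun ij : Fin s × Fin s => ij.1 < ij.2)).card
      + (Finset.univ.filter (fun ij : Fin s × Fin s => ij.2 < ij.1)).card
      + (Finset.univ.filter (fun ij : Fin s × Fin s => ij.1 = ij.2)).card = s * s := by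
    rw [Finset.card_filter, Finset.card_filter, Finset.card_filter, ← Finset.sum_add_distrib,
      ← Finset.sum_add_distrib]
    have : ∀ x : Fin s × Fin s, ((if x.1 < x.2 then 1 else 0) + (if x.2 < x.1 then 1 else 0))
        + (if x.1 = x.2 then 1 else 0) = 1 := by
      intro x
      rcases lt_trichotomy x.1 x.2 with h | h | h
      · simp [h, asymm h, h.ne]
      · simp [h, lt_irrefl]
      · simp [h, asymm h, h.ne']
    rw [Finset.sum_congr rfl fun x _ => this x]
    simp [Finset.card_univ, mul_comm]
  rw [← hswap] at htot
  rw [hdiag] at htot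
  rw [Nat.choose_two_right]
  have hss : s * s = s * (s - 1) + s := by
    rcases Nat.eq_zero_or_pos s with h | h
    · simp [h]
    · have : s - 1 + 1 = s := Nat.succ_pred_eq_of_pos h
      calc s * s = s * ((s - 1) + 1) := by rw [this]
        _ = s * (s - 1) + s := by ring
  rw [hss] at htot
  generalize s * (s - 1) = t at htot ⊢
  omega

lemma sum_offdiag_eq {s : ℕ} (c : Fin s → Fin s → ℝ) (hsym : ∀ a b, c a b = c b a) :
    ∑ x ∈ Finset.univ.filter (fun x : Fin s × Fin s => x.1 ≠ x.2), c x.1 x.2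
      = 2 * ∑ x ∈ Finset.univ.filter (fun x : Fin s × Fin s => x.1 < x.2), c x.1 x.2 := by
  classical
  have hsplit : Finset.univ.filter (fun x : Fin s × Fin s => x.1 ≠ x.2)
      = (Finset.univ.filter (fun x : Fin s × Fin s => x.1 < x.2))
        ∪ (Finset.univ.filter (fun x : Fin s × Fin s => x.2 < x.1)) := by
    ext x
    simp only [Finset.mem_filter, Finset.mem_union, Finset.mem_univ, true_and]
    constructor
    · intro h; exact h.lt_or_gt
    · intro h; rcases h with h | h
      · exact h.ne
      · exact h.ne'
  rw [hsplit, Finset.sum_union]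
  · have : ∑ x ∈ Finset.univ.filter (fun x : Fin s × Fin s => x.2 < x.1), c x.1 x.2
        = ∑ x ∈ Finset.univ.filter (fun x : Fin s × Fin s => x.1 < x.2), c x.1 x.2 := by
      refine Finset.sum_nbij' (fun x => (x.2, x.1)) (fun x => (x.2, x.1)) ?_ ?_ ?_ ?_ ?_ <;>
        simp [Finset.mem_filter, hsym]
    rw [this]; ring
  · refine Finset.disjoint_left.2 fun x hx hx' => ?_
    simp only [Finset.mem_filter] at hx hx'
    exact absurd hx'.2 (asymm hx.2)

section Prob
variable {n s : ℕ} {Ω : Type} [MeasurableSpace Ω] {μ : Measure Ω} [IsProbabilityMeasure μ]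
  {X : Fin s → Ω → Fin n} {p : Fin s → Fin n → ℝ}

lemma meas_inter_eq (hindep : iIndepFun X μ)
    (hlaw : ∀ i x, μ {ω | X i ω = x} = ENNReal.ofReal (p i x))
    (S : Finset (Fin s)) (f : Fin s → Fin n) :
    μ (⋂ i ∈ S, X i ⁻¹' {f i}) = ∏ i ∈ S, ENNReal.ofReal (p i (f i)) := by
  rw [hindep.measure_inter_preimage_eq_mul S (sets := fun i => {f i})
    (fun i _ => measurableSet_singleton _)]
  refine Finset.prod_congr rfl fun i _ => ?_
  rw [← hlaw i (f i)]
  congr 1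

lemma meas_eq2 (hmeas : ∀ i, Measurable (X i))
    (hindep : iIndepFun X μ)
    (hlaw : ∀ i x, μ {ω | X i ω = x} = ENNReal.ofReal (p i x))
    {i j : Fin s} (hij : i ≠ j) :
    μ {ω | X i ω = X j ω} = ∑ x, ENNReal.ofReal (p i x) * ENNReal.ofReal (p j x) := by
  have hset : {ω | X i ω = X j ω} = ⋃ x : Fin n, (X i ⁻¹' {x} ∩ X j ⁻¹' {x}) := by
    ext ω
    simp only [Set.mem_setOf_eq, Set.mem_iUnion, Set.mem_inter_iff, Set.mem_preimage,
      Set.mem_singleton_iff]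
    exact ⟨fun h => ⟨X j ω, h, rfl⟩, fun ⟨x, h1, h2⟩ => h1.trans h2.symm⟩
  rw [hset, measure_iUnion]
  · rw [tsum_fintype]
    refine Finset.sum_congr rfl fun x _ => ?_
    have e : X i ⁻¹' {x} ∩ X j ⁻¹' {x}
        = ⋂ k ∈ ({i, j} : Finset (Fin s)), X k ⁻¹' {(fun _ => x) k} := by
      simp [Set.biInter_insert]
    rw [e, meas_inter_eq hindep hlaw, Finset.prod_pair hij]
  · intro x y hxy
    simp only [Function.onFun]
    refine Set.disjoint_left.2 fun ω hω hω' => hxy ?_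
    have h1 := hω.1
    have h2 := hω'.1
    simp only [Set.mem_preimage, Set.mem_singleton_iff] at *
    rw [← h1, h2]
  · exact fun x => ((hmeas i) (measurableSet_singleton x)).inter
      ((hmeas j) (measurableSet_singleton x))

lemma meas_eq3 (hmeas : ∀ i, Measurable (X i))
    (hindep : iIndepFun X μ)
    (hlaw : ∀ i x, μ {ω | X i ω = x} = ENNReal.ofReal (p i x))
    {i j k : Fin s} (hij : i ≠ j) (hik : i ≠ k) (hjk : j ≠ k) :
    μ {ω | X i ω = X j ω ∧ X i ω = X k ω}
      = ∑ x, ENNReal.ofReal (p i x) * (ENNReal.ofReal (p j x) * ENNReal.ofReal (p k x)) := by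
  have hset : {ω | X i ω = X j ω ∧ X i ω = X k ω}
      = ⋃ x : Fin n, (X i ⁻¹' {x} ∩ (X j ⁻¹' {x} ∩ X k ⁻¹' {x})) := by
    ext ω
    simp only [Set.mem_setOf_eq, Set.mem_iUnion, Set.mem_inter_iff, Set.mem_preimage,
      Set.mem_singleton_iff]
    constructor
    · rintro ⟨h1, h2⟩; exact ⟨X i ω, rfl, h1.symm, h2.symm⟩
    · rintro ⟨x, h1, h2, h3⟩; exact ⟨h1.trans h2.symm, h1.trans h3.symm⟩
  rw [hset, measure_iUnion]
  · rw [tsum_fintype]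
    refine Finset.sum_congr rfl fun x _ => ?_
    have e : X i ⁻¹' {x} ∩ (X j ⁻¹' {x} ∩ X k ⁻¹' {x})
        = ⋂ m ∈ ({i, j, k} : Finset (Fin s)), X m ⁻¹' {(fun _ => x) m} := by
      simp [Set.biInter_insert]
    rw [e, meas_inter_eq hindep hlaw]
    rw [Finset.prod_insert (by simp [hij, hik]), Finset.prod_pair hjk]
  · intro x y hxy
    simp only [Function.onFun]
    refine Set.disjoint_left.2 fun ω hω hω' => hxy ?_
    have h1 := hω.1
    have h2 := hω'.1
    simp only [Set.mem_preimage, Set.mem_singleton_iff] at *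
    rw [← h1, h2]
  · exact fun x => ((hmeas i) (measurableSet_singleton x)).inter
      (((hmeas j) (measurableSet_singleton x)).inter ((hmeas k) (measurableSet_singleton x)))

lemma intY_eq (hmeas : ∀ i, Measurable (X i))
    (hindep : iIndepFun X μ)
    (hlaw : ∀ i x, μ {ω | X i ω = x} = ENNReal.ofReal (p i x))
    (hp : ∀ i x, 0 ≤ p i x)
    {i j : Fin s} (hij : i ≠ j) :
    ∫ ω, (if X i ω = X j ω then (1:ℝ) else 0) ∂μ = ∑ x, p i x * p j x := by
  have hS : MeasurableSet {ω | X i ω = X j ω} :=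
    measurableSet_eq_fun (hmeas i) (hmeas j)
  have hind : (fun ω => if X i ω = X j ω then (1:ℝ) else 0)
      = Set.indicator {ω | X i ω = X j ω} (1 : Ω → ℝ) := by
    ext ω; simp [Set.indicator_apply]
  rw [hind, integral_indicator_one hS, measureReal_def, meas_eq2 hmeas hindep hlaw hij, ENNReal.toReal_sum
    (fun x _ => ENNReal.mul_ne_top ENNReal.ofReal_ne_top ENNReal.ofReal_ne_top)]
  refine Finset.sum_congr rfl fun x _ => ?_
  rw [ENNReal.toReal_mul, ENNReal.toReal_ofReal (hp i x), ENNReal.toReal_ofReal (hp j x)]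

lemma intYY_ov (hmeas : ∀ i, Measurable (X i))
    (hindep : iIndepFun X μ)
    (hlaw : ∀ i x, μ {ω | X i ω = x} = ENNReal.ofReal (p i x))
    (hp : ∀ i x, 0 ≤ p i x)
    {i j k : Fin s} (hij : i ≠ j) (hik : i ≠ k) (hjk : j ≠ k) :
    ∫ ω, (if X i ω = X j ω then (1:ℝ) else 0) * (if X i ω = X k ω then (1:ℝ) else 0) ∂μ
      = ∑ x, p i x * (p j x * p k x) := by
  have hS : MeasurableSet {ω | X i ω = X j ω ∧ X i ω = X k ω} :=
    (measurableSet_eq_fun (hmeas i) (hmeas j)).inter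
      (measurableSet_eq_fun (hmeas i) (hmeas k))
  have hind : (fun ω => (if X i ω = X j ω then (1:ℝ) else 0) * (if X i ω = X k ω then (1:ℝ) else 0))
      = Set.indicator {ω | X i ω = X j ω ∧ X i ω = X k ω} (1 : Ω → ℝ) := by
    ext ω
    by_cases h1 : X i ω = X j ω <;> by_cases h2 : X i ω = X k ω <;>
      simp [Set.indicator_apply, h1, h2]
  rw [hind, integral_indicator_one hS, measureReal_def, meas_eq3 hmeas hindep hlaw hij hik hjk,
    ENNReal.toReal_sum (fun x _ => ENNReal.mul_ne_top ENNReal.ofReal_ne_top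
      (ENNReal.mul_ne_top ENNReal.ofReal_ne_top ENNReal.ofReal_ne_top))]
  refine Finset.sum_congr rfl fun x _ => ?_
  rw [ENNReal.toReal_mul, ENNReal.toReal_mul, ENNReal.toReal_ofReal (hp i x),
    ENNReal.toReal_ofReal (hp j x), ENNReal.toReal_ofReal (hp k x)]

lemma integrableY (hmeas : ∀ i, Measurable (X i)) (i j : Fin s) :
    Integrable (fun ω => if X i ω = X j ω then (1:ℝ) else 0) μ := by
  have hS : MeasurableSet {ω | X i ω = X j ω} :=
    measurableSet_eq_fun (hmeas i) (hmeas j)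
  have hind : (fun ω => if X i ω = X j ω then (1:ℝ) else 0)
      = Set.indicator {ω | X i ω = X j ω} (fun _ => (1:ℝ)) := by
    ext ω; simp [Set.indicator_apply]
  rw [hind]
  exact (integrable_const 1).indicator hS

lemma integrableYY (hmeas : ∀ i, Measurable (X i)) (i j k l : Fin s) :
    Integrable (fun ω => (if X i ω = X j ω then (1:ℝ) else 0)
      * (if X k ω = X l ω then (1:ℝ) else 0)) μ := by
  have hS : MeasurableSet ({ω | X i ω = X j ω} ∩ {ω | X k ω = X l ω}) :=
    (measurableSet_eq_fun (hmeas i) (hmeas j)).inter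
      (measurableSet_eq_fun (hmeas k) (hmeas l))
  have hind : (fun ω => (if X i ω = X j ω then (1:ℝ) else 0)
      * (if X k ω = X l ω then (1:ℝ) else 0))
      = Set.indicator ({ω | X i ω = X j ω} ∩ {ω | X k ω = X l ω}) (fun _ => (1:ℝ)) := by
    ext ω
    by_cases h1 : X i ω = X j ω <;> by_cases h2 : X k ω = X l ω <;>
      simp [Set.indicator_apply, h1, h2, Set.mem_inter_iff]
  rw [hind]
  exact (integrable_const 1).indicator hS

lemma intYY_dj (hmeas : ∀ i, Measurable (X i))
    (hindep : iIndepFun X μ)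
    {i j k l : Fin s} (hik : i ≠ k) (hil : i ≠ l) (hjk : j ≠ k) (hjl : j ≠ l) :
    ∫ ω, (if X i ω = X j ω then (1:ℝ) else 0) * (if X k ω = X l ω then (1:ℝ) else 0) ∂μ
      = (∫ ω, (if X i ω = X j ω then (1:ℝ) else 0) ∂μ)
        * ∫ ω, (if X k ω = X l ω then (1:ℝ) else 0) ∂μ := by
  have hpair : IndepFun (fun ω => (X i ω, X j ω)) (fun ω => (X k ω, X l ω)) μ :=
    hindep.indepFun_prodMk_prodMk hmeas i j k l hik hil hjk hjl
  have hcomp : IndepFun (fun ω => if X i ω = X j ω then (1:ℝ) else 0)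
      (fun ω => if X k ω = X l ω then (1:ℝ) else 0) μ := by
    have := hpair.comp (φ := fun v : Fin n × Fin n => if v.1 = v.2 then (1:ℝ) else 0)
      (ψ := fun v : Fin n × Fin n => if v.1 = v.2 then (1:ℝ) else 0)
      (measurable_of_countable _) (measurable_of_countable _)
    exact this
  exact hcomp.integral_fun_mul_eq_mul_integral (integrableY hmeas i j).aestronglyMeasurable
    (integrableY hmeas k l).aestronglyMeasurable

end Prob
set_option maxHeartbeats 1000000 in
/-- Lemma 3.3: the tight variance bound for the collision statistic.
Let `X i ~ p i` be independent, where the `p i` are all `ε`-far from uniform in `ℓ₁` and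
satisfy the structural condition with respect to the uniform distribution. Let
`W = Σ_{i<j} 1[X i = X j]` and define `α` by `E[W]/C(s,2) = (1+α)/n`. Then
`Var(W) ≤ (18·α·s/n²)·C(s,2) + 3·(α·C(s,2)/n)^{3/2} + Σ_{i<j} E[1[X i = X j]]`. -/
theorem collision_variance_upper_bound
    (n s : ℕ) (hn : 2 ≤ n) (hs : 2 ≤ s)
    (ε : ℝ) (hε0 : 0 < ε) (hε1 : ε < 1)
    (p : Fin s → Fin n → ℝ)
    (hdist : ∀ i, IsDist (p i))
    (hfar : ∀ i, ∑ x, |p i x - 1 / n| ≥ ε)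
    (hstruct : StructCond p (fun _ => 1 / n))
    (Ω : Type) [MeasurableSpace Ω] (μ : Measure Ω) [IsProbabilityMeasure μ]
    (X : Fin s → Ω → Fin n)
    (hmeas : ∀ i, Measurable (X i))
    (hindep : iIndepFun X μ)
    (hlaw : ∀ i x, μ {ω | X i ω = x} = ENNReal.ofReal (p i x))
    (W : Ω → ℝ)
    (hW : W = fun ω => ∑ ij ∈ Finset.univ.filter (fun ij : Fin s × Fin s => ij.1 < ij.2),
      if X ij.1 ω = X ij.2 ω then (1 : ℝ) else 0)
    (α : ℝ)
    (hα : α = (n : ℝ) * (∫ ω, W ω ∂μ) / (s.choose 2) - 1) :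
    variance W μ ≤ 18 * α * s / (n : ℝ) ^ 2 * (s.choose 2)
      + 3 * (α * (s.choose 2) / n) ^ ((3 : ℝ) / 2)
      + ∑ ij ∈ Finset.univ.filter (fun ij : Fin s × Fin s => ij.1 < ij.2),
          ∫ ω, (if X ij.1 ω = X ij.2 ω then (1 : ℝ) else 0) ∂μ := by
  classical
  obtain ⟨A, hA1, hA2⟩ := hstruct
  have hp0 : ∀ i x, 0 ≤ p i x := fun i => (hdist i).1
  have hp1 : ∀ i, ∑ x, p i x = 1 := fun i => (hdist i).2
  have hnR : (0:ℝ) < n := by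
    have : (0:ℕ) < n := by omega
    exact_mod_cast this
  set u : ℝ := 1 / n with hu
  have hu0 : 0 < u := by rw [hu]; positivity
  set d : Fin s → Fin n → ℝ := fun i x => p i x - u with hd
  have hdsum : ∀ i, ∑ x, d i x = 0 := by
    intro i
    simp only [hd]
    rw [Finset.sum_sub_distrib, hp1 i, Finset.sum_const, Finset.card_univ, Fintype.card_fin,
      nsmul_eq_mul, hu]
    field_simp
    ring
  set c : Fin s → Fin s → ℝ := fun i j => ∑ x, d i x * d j x with hc
  have hcsym : ∀ i j, c i j = c j i := fun i j =>
    Finset.sum_congr rfl fun x _ => mul_comm _ _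
  have hdA : ∀ i x, x ∈ A → 0 ≤ d i x := fun i x hx => sub_nonneg.2 (hA1 i x hx)
  have hdB : ∀ i x, x ∉ A → d i x ≤ 0 := fun i x hx => sub_nonpos.2 (hA2 i x hx)
  have hsplit : ∀ f : Fin n → ℝ, ∑ x, f x = ∑ x ∈ A, f x + ∑ x ∈ Aᶜ, f x :=
    fun f => (Finset.sum_add_sum_compl A f).symm
  have hmulnn : ∀ {x y : ℝ}, x ≤ 0 → y ≤ 0 → 0 ≤ x * y := fun hx hy => by nlinarith
  have hcompl2 : ∀ i j, 0 ≤ ∑ x ∈ Aᶜ, d i x * d j x := fun i j =>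
    Finset.sum_nonneg fun x hx =>
      hmulnn (hdB i x (Finset.mem_compl.1 hx)) (hdB j x (Finset.mem_compl.1 hx))
  have hcA0 : ∀ i j, 0 ≤ ∑ x ∈ A, d i x * d j x := fun i j =>
    Finset.sum_nonneg fun x hx => mul_nonneg (hdA i x hx) (hdA j x hx)
  have hc0 : ∀ i j, 0 ≤ c i j := by
    intro i j
    rw [hc]
    dsimp only
    rw [hsplit]
    exact add_nonneg (hcA0 i j) (hcompl2 i j)
  have hcA_le : ∀ i j, ∑ x ∈ A, d i x * d j x ≤ c i j := by
    intro i j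
    rw [hc]
    dsimp only
    rw [hsplit]
    linarith [hcompl2 i j]
  set b : Fin s → Fin s → ℝ := fun i j => if i = j then 0 else Real.sqrt (c i j) with hb
  have hb0 : ∀ i j, 0 ≤ b i j := by
    intro i j
    rw [hb]
    dsimp only
    split
    · exact le_refl 0
    · exact Real.sqrt_nonneg _
  have hbsq : ∀ i j, i ≠ j → (b i j)^2 = c i j := by
    intro i j hij
    rw [hb]
    dsimp only
    rw [if_neg hij, Real.sq_sqrt (hc0 i j)]
  -- T bound
  have hT : ∀ i j k, i ≠ j → i ≠ k → j ≠ k →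
      (∑ x, d i x * d j x * d k x) ≤ b i j * b i k * b j k := by
    intro i j k hij hik hjk
    have h1 : ∑ x, d i x * d j x * d k x ≤ ∑ x ∈ A, d i x * d j x * d k x := by
      rw [hsplit (fun x => d i x * d j x * d k x)]
      have hneg : ∑ x ∈ Aᶜ, d i x * d j x * d k x ≤ 0 :=
        Finset.sum_nonpos fun x hx =>
          mul_nonpos_of_nonneg_of_nonpos
            (hmulnn (hdB i x (Finset.mem_compl.1 hx))
              (hdB j x (Finset.mem_compl.1 hx)))
            (hdB k x (Finset.mem_compl.1 hx))
      linarith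
    have h2 := triple_cs A (d i) (d j) (d k) (fun x hx => hdA i x hx)
      (fun x hx => hdA j x hx) (fun x hx => hdA k x hx)
    have h3 : Real.sqrt ((∑ x ∈ A, d i x * d j x) * (∑ x ∈ A, d i x * d k x))
        ≤ Real.sqrt (c i j * c i k) :=
      Real.sqrt_le_sqrt (mul_le_mul (hcA_le i j) (hcA_le i k) (hcA0 i k) (hc0 i j))
    have h4 : Real.sqrt (∑ x ∈ A, d j x * d k x) ≤ Real.sqrt (c j k) :=
      Real.sqrt_le_sqrt (hcA_le j k)
    have h5 : Real.sqrt (c i j * c i k) * Real.sqrt (c j k) = b i j * b i k * b j k := by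
      rw [hb]
      dsimp only
      rw [if_neg hij, if_neg hik, if_neg hjk, Real.sqrt_mul (hc0 i j)]
    calc ∑ x, d i x * d j x * d k x ≤ ∑ x ∈ A, d i x * d j x * d k x := h1
      _ ≤ Real.sqrt ((∑ x ∈ A, d i x * d j x) * (∑ x ∈ A, d i x * d k x))
          * Real.sqrt (∑ x ∈ A, d j x * d k x) := h2
      _ ≤ Real.sqrt (c i j * c i k) * Real.sqrt (c j k) := by
          apply mul_le_mul h3 h4 (Real.sqrt_nonneg _)
          exact Real.sqrt_nonneg _
      _ = b i j * b i k * b j k := h5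
  -- identities for sums of products of p's
  have esumu3 : ∑ _x : Fin n, (u*u*u : ℝ) = u * u := by
    rw [Finset.sum_const, Finset.card_univ, Fintype.card_fin, nsmul_eq_mul, hu]
    field_simp
  have esumu2 : ∑ _x : Fin n, (u*u : ℝ) = u := by
    rw [Finset.sum_const, Finset.card_univ, Fintype.card_fin, nsmul_eq_mul, hu]
    field_simp
  have esumd : ∀ (v : ℝ) (i : Fin s), ∑ x, v * d i x = 0 := by
    intro v i
    rw [← Finset.mul_sum, hdsum, mul_zero]
  have esumdd : ∀ i j : Fin s, ∑ x, u * (d i x * d j x) = u * c i j := by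
    intro i j
    rw [← Finset.mul_sum]
  have hee : ∀ i j, ∑ x, p i x * p j x = u + c i j := by
    intro i j
    have hx : ∀ x : Fin n, p i x * p j x
        = u * u + (u * d j x + (u * d i x + d i x * d j x)) := by
      intro x
      have hi : p i x = u + d i x := by rw [hd]; ring
      have hj : p j x = u + d j x := by rw [hd]; ring
      rw [hi, hj]; ring
    rw [Finset.sum_congr rfl fun x _ => hx x]
    simp only [Finset.sum_add_distrib]
    have hcij : ∑ x, d i x * d j x = c i j := rfl
    rw [esumu2, esumd, esumd, hcij]
    ring
  have htt : ∀ i j k, ∑ x, p i x * (p j x * p k x)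
      = u * u + (c i j + c i k + c j k) * u + ∑ x, d i x * d j x * d k x := by
    intro i j k
    have hx : ∀ x : Fin n, p i x * (p j x * p k x)
        = u*u*u + (u*u * d i x + (u*u * d j x + (u*u * d k x
          + (u*(d i x * d j x) + (u*(d i x * d k x) + (u*(d j x * d k x)
          + d i x * d j x * d k x)))))) := by
      intro x
      have h1 : p i x = u + d i x := by rw [hd]; ring
      have h2 : p j x = u + d j x := by rw [hd]; ring
      have h3 : p k x = u + d k x := by rw [hd]; ring
      rw [h1, h2, h3]; ring
    rw [Finset.sum_congr rfl fun x _ => hx x]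
    simp only [Finset.sum_add_distrib]
    rw [esumu3, esumd (u*u) i, esumd (u*u) j, esumd (u*u) k, esumdd i j, esumdd i k, esumdd j k]
    ring
  -- integral notations
  set E : Finset (Fin s × Fin s) := Finset.univ.filter (fun ij : Fin s × Fin s => ij.1 < ij.2)
    with hE
  set I1 : Fin s × Fin s → ℝ :=
    fun e => ∫ ω, (if X e.1 ω = X e.2 ω then (1:ℝ) else 0) ∂μ with hI1
  set I2 : Fin s × Fin s → Fin s × Fin s → ℝ :=
    fun e f => ∫ ω, (if X e.1 ω = X e.2 ω then (1:ℝ) else 0)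
      * (if X f.1 ω = X f.2 ω then (1:ℝ) else 0) ∂μ with hI2
  have hI1val : ∀ i j : Fin s, i ≠ j → I1 (i, j) = u + c i j := by
    intro i j hij
    rw [hI1]
    dsimp only
    rw [intY_eq hmeas hindep hlaw hp0 hij, hee i j]
  -- key overlap bound
  have hkey : ∀ m a e : Fin s, m ≠ a → m ≠ e → a ≠ e →
      I2 (m, a) (m, e) - I1 (m, a) * I1 (m, e)
        ≤ c a e * u + b m a * b m e * b a e := by
    intro m a e hma hme hae
    rw [hI2, hI1]
    dsimp only
    rw [intYY_ov hmeas hindep hlaw hp0 hma hme hae,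
      intY_eq hmeas hindep hlaw hp0 hma, intY_eq hmeas hindep hlaw hp0 hme,
      htt m a e, hee m a, hee m e]
    have h1 := hT m a e hma hme hae
    have h2 : 0 ≤ c m a * c m e := mul_nonneg (hc0 m a) (hc0 m e)
    nlinarith [h1, h2]

  -- measurability of W, moments
  have hYm : ∀ i j : Fin s, Measurable (fun ω => if X i ω = X j ω then (1:ℝ) else 0) := by
    intro i j
    have hS : MeasurableSet {ω | X i ω = X j ω} :=
      measurableSet_eq_fun (hmeas i) (hmeas j)
    have hind : (fun ω => if X i ω = X j ω then (1:ℝ) else 0)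
        = Set.indicator {ω | X i ω = X j ω} (fun _ => (1:ℝ)) := by
      ext ω; simp [Set.indicator_apply]
    rw [hind]
    exact measurable_const.indicator hS
  have hWmeas : Measurable W := by
    rw [hW]
    exact Finset.measurable_sum _ (fun e _ => hYm e.1 e.2)
  have hWbdd : ∀ ω, ‖W ω‖ ≤ (E.card : ℝ) := by
    intro ω
    rw [hW]
    calc ‖∑ e ∈ E, if X e.1 ω = X e.2 ω then (1:ℝ) else 0‖
        ≤ ∑ e ∈ E, ‖if X e.1 ω = X e.2 ω then (1:ℝ) else 0‖ := norm_sum_le _ _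
      _ ≤ ∑ _e ∈ E, (1:ℝ) := Finset.sum_le_sum fun e _ => by split <;> simp
      _ = E.card := by simp
  have hmemW : MemLp W 2 μ :=
    (memLp_top_of_bound hWmeas.aestronglyMeasurable _
      (Filter.Eventually.of_forall hWbdd)).mono_exponent le_top
  have hvar := variance_eq_sub hmemW
  have hIW : ∫ ω, W ω ∂μ = ∑ e ∈ E, I1 e := by
    rw [hW]
    exact integral_finset_sum E fun e _ => integrableY hmeas e.1 e.2
  have hI2W : ∫ ω, (W ω)^2 ∂μ = ∑ e ∈ E, ∑ f ∈ E, I2 e f := by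
    have hsq : (fun ω => (W ω)^2) = fun ω => ∑ e ∈ E, ∑ f ∈ E,
        (if X e.1 ω = X e.2 ω then (1:ℝ) else 0) * (if X f.1 ω = X f.2 ω then (1:ℝ) else 0) := by
      funext ω
      rw [hW]
      dsimp only
      rw [sq, Finset.sum_mul_sum]
    calc ∫ ω, (W ω)^2 ∂μ
        = ∫ ω, ∑ e ∈ E, ∑ f ∈ E, (if X e.1 ω = X e.2 ω then (1:ℝ) else 0)
            * (if X f.1 ω = X f.2 ω then (1:ℝ) else 0) ∂μ := by rw [← hsq]
      _ = ∑ e ∈ E, ∫ ω, ∑ f ∈ E, (if X e.1 ω = X e.2 ω then (1:ℝ) else 0)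
            * (if X f.1 ω = X f.2 ω then (1:ℝ) else 0) ∂μ :=
          integral_finset_sum E fun e _ =>
            integrable_finset_sum E fun f _ => integrableYY hmeas e.1 e.2 f.1 f.2
      _ = ∑ e ∈ E, ∑ f ∈ E, I2 e f :=
          Finset.sum_congr rfl fun e _ =>
            integral_finset_sum E fun f _ => integrableYY hmeas e.1 e.2 f.1 f.2
  have hvar2 : variance W μ = ∑ e ∈ E, ∑ f ∈ E, (I2 e f - I1 e * I1 f) := by
    rw [hvar]
    have hWpow : (W ^ 2) = fun ω => (W ω)^2 := by funext ω; simp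
    have h1 : μ[W ^ 2] = ∑ e ∈ E, ∑ f ∈ E, I2 e f := by
      rw [hWpow] at *
      exact hI2W
    have h2 : μ[W] = ∑ e ∈ E, I1 e := hIW
    rw [h1, h2, sq, Finset.sum_mul_sum]
    rw [← Finset.sum_sub_distrib]
    refine Finset.sum_congr rfl fun e _ => ?_
    rw [← Finset.sum_sub_distrib]
  -- symmetry helpers
  have hflip1 : ∀ a bb : Fin s, I1 (a, bb) = I1 (bb, a) := by
    intro a bb
    rw [hI1]
    dsimp only
    congr 1
    funext ω
    exact if_congr eq_comm rfl rfl
  have hflip2r : ∀ (e : Fin s × Fin s) (a bb : Fin s), I2 e (a, bb) = I2 e (bb, a) := by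
    intro e a bb
    rw [hI2]
    dsimp only
    congr 1
    funext ω
    congr 1
    exact if_congr eq_comm rfl rfl
  have hflip2l : ∀ (a bb : Fin s) (f : Fin s × Fin s), I2 (a, bb) f = I2 (bb, a) f := by
    intro a bb f
    rw [hI2]
    dsimp only
    congr 1
    funext ω
    congr 1
    exact if_congr eq_comm rfl rfl
  -- the bound function on triples
  set F : Fin s × Fin s × Fin s → ℝ :=
    fun t => c t.2.1 t.2.2 * u + b t.1 t.2.1 * b t.1 t.2.2 * b t.2.1 t.2.2 with hF
  have hF0 : ∀ t, 0 ≤ F t := fun t =>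
    add_nonneg (mul_nonneg (hc0 _ _) hu0.le)
      (mul_nonneg (mul_nonneg (hb0 _ _) (hb0 _ _)) (hb0 _ _))
  have hEmem : ∀ e : Fin s × Fin s, e ∈ E ↔ e.1 < e.2 := by
    intro e
    rw [hE]
    simp
  -- per-pair bound
  have hpair : ∀ e ∈ E, ∀ f ∈ E, I2 e f - I1 e * I1 f ≤
      (if e = f then I1 e else 0)
      + (if e ≠ f ∧ (e.1 = f.1 ∨ e.1 = f.2 ∨ e.2 = f.1 ∨ e.2 = f.2)
          then F (colPsi (e, f)) else 0) := by
    intro e he f hf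
    have he' : e.1 < e.2 := (hEmem e).1 he
    have hf' : f.1 < f.2 := (hEmem f).1 hf
    by_cases heq : e = f
    · subst heq
      rw [if_pos rfl, if_neg (by simp)]
      have hY2 : I2 e e = I1 e := by
        rw [hI2, hI1]
        dsimp only
        congr 1
        funext ω
        split <;> simp
      rw [hY2]
      nlinarith [sq_nonneg (I1 e)]
    · rw [if_neg heq, zero_add]
      by_cases hsh : e.1 = f.1 ∨ e.1 = f.2 ∨ e.2 = f.1 ∨ e.2 = f.2
      · rw [if_pos ⟨heq, hsh⟩]
        obtain ⟨i, j⟩ := e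
        obtain ⟨k, l⟩ := f
        dsimp only at he' hf' hsh ⊢
        by_cases h1 : i = k
        · subst h1
          have hjl : j ≠ l := fun h => heq (by rw [h])
          have hpsi : colPsi ((i, j), (i, l)) = (i, j, l) := by simp [colPsi]
          rw [hpsi]
          have hk := hkey i j l he'.ne hf'.ne hjl
          rw [hF]
          dsimp only
          linarith [hk]
        · by_cases h2 : i = l
          · subst h2
            have hpsi : colPsi ((i, j), (k, i)) = (i, j, k) := by simp [colPsi, h1]
            rw [hpsi, hflip2r (i, j) k i, hflip1 k i]
            have hk := hkey i j k he'.ne (Ne.symm (hf'.ne)) (hf'.trans he').ne'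
            rw [hF]
            dsimp only
            linarith [hk]
          · by_cases h3 : j = k
            · subst h3
              have hpsi : colPsi ((i, j), (j, l)) = (j, i, l) := by
                simp [colPsi, he'.ne, (he'.trans hf').ne]
              rw [hpsi, hflip2l i j (j, l), hflip1 i j]
              have hk := hkey j i l he'.ne' hf'.ne (he'.trans hf').ne
              rw [hF]
              dsimp only
              linarith [hk]
            · have h4 : j = l := by tauto
              subst h4
              have hik : i ≠ k := fun h => heq (by rw [h])
              have hpsi : colPsi ((i, j), (k, j)) = (j, i, k) := by
                simp [colPsi, h1, he'.ne, h3]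
              rw [hpsi, hflip2l i j (k, j), hflip2r (j, i) k j, hflip1 i j, hflip1 k j]
              have hk := hkey j i k he'.ne' hf'.ne' hik
              rw [hF]
              dsimp only
              linarith [hk]
      · rw [if_neg (fun hcon => hsh hcon.2)]
        push_neg at hsh
        obtain ⟨h1, h2, h3, h4⟩ := hsh
        have hdj : I2 e f = I1 e * I1 f := by
          rw [hI2, hI1]
          dsimp only
          exact intYY_dj hmeas hindep h1 h2 h3 h4
        rw [hdj]
        simp
  -- sum the bound
  set D : Finset (Fin s × Fin s) :=
    Finset.univ.filter (fun ab : Fin s × Fin s => ab.1 ≠ ab.2) with hD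
  set S : ℝ := ∑ e ∈ E, c e.1 e.2 with hSdef
  have hS0 : 0 ≤ S := Finset.sum_nonneg fun e _ => hc0 _ _
  set Q : ℝ := ∑ a, ∑ e, (b a e)^2 with hQdef
  have hQ2S : Q = 2 * S := by
    rw [hQdef]
    rw [← Finset.sum_product', Finset.univ_product_univ]
    rw [← Finset.sum_filter_add_sum_filter_not Finset.univ
      (fun ab : Fin s × Fin s => ab.1 ≠ ab.2)]
    have hzero : ∑ ab ∈ Finset.univ.filter
        (fun ab : Fin s × Fin s => ¬ ab.1 ≠ ab.2), (b ab.1 ab.2)^2 = 0 := by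
      refine Finset.sum_eq_zero fun ab hab => ?_
      rw [Finset.mem_filter] at hab
      have : ab.1 = ab.2 := not_not.1 hab.2
      rw [hb]
      dsimp only
      rw [if_pos this]
      norm_num
    have hsq : ∑ ab ∈ Finset.univ.filter (fun ab : Fin s × Fin s => ab.1 ≠ ab.2),
        (b ab.1 ab.2)^2 = ∑ ab ∈ Finset.univ.filter
        (fun ab : Fin s × Fin s => ab.1 ≠ ab.2), c ab.1 ab.2 := by
      refine Finset.sum_congr rfl fun ab hab => ?_
      rw [Finset.mem_filter] at hab
      exact hbsq _ _ hab.2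
    rw [hzero, hsq, add_zero, sum_offdiag_eq _ hcsym]
  -- the main chained estimate
  have hOVsum : ∑ e ∈ E, ∑ f ∈ E,
      (if e ≠ f ∧ (e.1 = f.1 ∨ e.1 = f.2 ∨ e.2 = f.1 ∨ e.2 = f.2)
        then F (colPsi (e, f)) else 0)
      ≤ (s:ℝ) * ((2 * S) * u) + Q * Real.sqrt Q := by
    rw [← Finset.sum_product']
    set OV : Finset ((Fin s × Fin s) × (Fin s × Fin s)) :=
      (E ×ˢ E).filter (fun ef => ef.1 ≠ ef.2
        ∧ (ef.1.1 = ef.2.1 ∨ ef.1.1 = ef.2.2 ∨ ef.1.2 = ef.2.1 ∨ ef.1.2 = ef.2.2)) with hOV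
    have step1 : ∑ ef ∈ E ×ˢ E,
        (if ef.1 ≠ ef.2 ∧ (ef.1.1 = ef.2.1 ∨ ef.1.1 = ef.2.2 ∨ ef.1.2 = ef.2.1 ∨ ef.1.2 = ef.2.2)
          then F (colPsi (ef.1, ef.2)) else 0)
        = ∑ ef ∈ OV, F (colPsi ef) := by
      rw [hOV, Finset.sum_filter]
    rw [step1]
    have hrecov : ∀ ef ∈ OV, colRecov (colPsi ef) = ef := by
      intro ef hef
      rw [hOV, Finset.mem_filter, Finset.mem_product] at hef
      obtain ⟨⟨he, hf⟩, hne, hsh⟩ := hef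
      have hspec := colPsi_spec ef.1 ef.2 ((hEmem _).1 he) ((hEmem _).1 hf) hne hsh
      calc colRecov (colPsi ef) = colRecov (colPsi (ef.1, ef.2)) := by rw [Prod.mk.eta]
        _ = (ef.1, ef.2) := hspec.1
        _ = ef := Prod.mk.eta
    have himg : ∑ ef ∈ OV, F (colPsi ef) = ∑ t ∈ OV.image colPsi, F t :=
      (Finset.sum_image (fun x hx y hy h => by
        rw [← hrecov x hx, ← hrecov y hy, h])).symm
    rw [himg]
    have hsub : OV.image colPsi ⊆ Finset.univ ×ˢ D := by
      intro t ht
      obtain ⟨ef, hef, rfl⟩ := Finset.mem_image.1 ht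
      rw [hOV, Finset.mem_filter, Finset.mem_product] at hef
      obtain ⟨⟨he, hf⟩, hne, hsh⟩ := hef
      have hspec := colPsi_spec ef.1 ef.2 ((hEmem _).1 he) ((hEmem _).1 hf) hne hsh
      rw [Finset.mem_product, hD, Finset.mem_filter]
      refine ⟨Finset.mem_univ _, Finset.mem_univ _, ?_⟩
      have := hspec.2.2.2
      rw [Prod.mk.eta] at this
      exact this
    have hstep2 : ∑ t ∈ OV.image colPsi, F t ≤ ∑ t ∈ Finset.univ ×ˢ D, F t :=
      Finset.sum_le_sum_of_subset_of_nonneg hsub (fun t _ _ => hF0 t)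
    refine hstep2.trans ?_
    rw [Finset.sum_product]
    have hsplitF : ∀ m : Fin s, ∑ ab ∈ D, F (m, ab)
        = (∑ ab ∈ D, c ab.1 ab.2 * u) + ∑ ab ∈ D, b m ab.1 * b m ab.2 * b ab.1 ab.2 := by
      intro m
      rw [← Finset.sum_add_distrib]
    rw [Finset.sum_congr rfl fun m _ => hsplitF m, Finset.sum_add_distrib]
    have hpart1 : ∑ _m : Fin s, (∑ ab ∈ D, c ab.1 ab.2 * u) = (s:ℝ) * ((2 * S) * u) := by
      rw [Finset.sum_const, Finset.card_univ, Fintype.card_fin, nsmul_eq_mul]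
      congr 1
      rw [← Finset.sum_mul]
      congr 1
      rw [hD, sum_offdiag_eq _ hcsym, hSdef, hE]
    have hpart2 : ∑ m : Fin s, ∑ ab ∈ D, b m ab.1 * b m ab.2 * b ab.1 ab.2
        ≤ Q * Real.sqrt Q := by
      have hmono : ∀ m : Fin s, ∑ ab ∈ D, b m ab.1 * b m ab.2 * b ab.1 ab.2
          ≤ ∑ a, ∑ e, b m a * b m e * b a e := by
        intro m
        rw [← Finset.sum_product']
        refine Finset.sum_le_sum_of_subset_of_nonneg ?_ fun t _ _ =>
          mul_nonneg (mul_nonneg (hb0 _ _) (hb0 _ _)) (hb0 _ _)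
        intro x _
        simp [Finset.mem_product]
      calc ∑ m : Fin s, ∑ ab ∈ D, b m ab.1 * b m ab.2 * b ab.1 ab.2
          ≤ ∑ m : Fin s, ∑ a, ∑ e, b m a * b m e * b a e :=
            Finset.sum_le_sum fun m _ => hmono m
        _ ≤ Q * Real.sqrt Q := by
            rw [hQdef]
            exact cube_sum_le b hb0
    linarith [hpart1, hpart2]

  -- cardinality / expectation / alpha
  have hEcardN : E.card = s.choose 2 := by
    rw [hE]
    exact card_lt_filter s
  have hI1E : ∀ e ∈ E, I1 e = u + c e.1 e.2 := by
    intro e he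
    have h := hI1val e.1 e.2 ((hEmem e).1 he).ne
    rw [Prod.mk.eta] at h
    exact h
  have hEW : ∫ ω, W ω ∂μ = ((s.choose 2 : ℕ) : ℝ) * u + S := by
    rw [hIW, Finset.sum_congr rfl hI1E, Finset.sum_add_distrib, Finset.sum_const,
      nsmul_eq_mul, hEcardN, ← hSdef]
  have hchoosePos : 0 < s.choose 2 := Nat.choose_pos hs
  have hCpos : (0:ℝ) < ((s.choose 2 : ℕ) : ℝ) := by exact_mod_cast hchoosePos
  have hαval : α = (n:ℝ) * S / ((s.choose 2 : ℕ) : ℝ) := by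
    rw [hα, hEW, hu]
    field_simp
    ring
  have hterm1 : (s:ℝ) * ((2 * S) * u) ≤ 18 * α * s / (n:ℝ)^2 * ((s.choose 2 : ℕ) : ℝ) := by
    have heq : 18 * α * s / (n:ℝ)^2 * ((s.choose 2 : ℕ) : ℝ) = 18 * (s:ℝ) * S * u := by
      rw [hαval, hu]
      field_simp
    rw [heq]
    have hs0 : (0:ℝ) ≤ s := Nat.cast_nonneg s
    have hkey16 : 0 ≤ (s:ℝ) * S * u := mul_nonneg (mul_nonneg hs0 hS0) hu0.le
    linarith [hkey16]
  have hterm2 : Q * Real.sqrt Q ≤ 3 * (α * ((s.choose 2 : ℕ) : ℝ) / n) ^ ((3:ℝ)/2) := by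
    have hACn : α * ((s.choose 2 : ℕ) : ℝ) / n = S := by
      rw [hαval]
      field_simp
    rw [hACn]
    have h32 : S ^ ((3:ℝ)/2) = S * Real.sqrt S := by
      rcases eq_or_lt_of_le hS0 with h | h
      · rw [← h, Real.zero_rpow (by norm_num : ((3:ℝ)/2) ≠ 0), Real.sqrt_zero, mul_zero]
      · rw [show ((3:ℝ)/2) = 1 + 1/2 by norm_num, Real.rpow_add h, Real.rpow_one,
          ← Real.sqrt_eq_rpow]
    rw [h32, hQ2S, Real.sqrt_mul (by norm_num : (0:ℝ) ≤ 2) S]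
    have h2le : Real.sqrt 2 ≤ 3/2 := by
      nlinarith [Real.sq_sqrt (show (0:ℝ) ≤ 2 by norm_num), Real.sqrt_nonneg 2]
    have hmul := mul_le_mul_of_nonneg_right h2le (mul_nonneg hS0 (Real.sqrt_nonneg S))
    linarith [hmul]
  -- put everything together
  have hsum1 : ∑ e ∈ E, (∑ f ∈ E, (if e = f then I1 e else 0)) = ∑ e ∈ E, I1 e := by
    refine Finset.sum_congr rfl fun e he => ?_
    rw [Finset.sum_ite_eq E e (fun _ => I1 e), if_pos he]
  have hstep : variance W μ
      ≤ (∑ e ∈ E, I1 e) + ((s:ℝ) * ((2 * S) * u) + Q * Real.sqrt Q) := by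
    rw [hvar2]
    calc ∑ e ∈ E, ∑ f ∈ E, (I2 e f - I1 e * I1 f)
        ≤ ∑ e ∈ E, ∑ f ∈ E, ((if e = f then I1 e else 0)
            + (if e ≠ f ∧ (e.1 = f.1 ∨ e.1 = f.2 ∨ e.2 = f.1 ∨ e.2 = f.2)
                then F (colPsi (e, f)) else 0)) :=
          Finset.sum_le_sum fun e he => Finset.sum_le_sum fun f hf => hpair e he f hf
      _ = (∑ e ∈ E, ∑ f ∈ E, (if e = f then I1 e else 0))
          + ∑ e ∈ E, ∑ f ∈ E,
            (if e ≠ f ∧ (e.1 = f.1 ∨ e.1 = f.2 ∨ e.2 = f.1 ∨ e.2 = f.2)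
              then F (colPsi (e, f)) else 0) := by
          simp only [Finset.sum_add_distrib]
      _ ≤ (∑ e ∈ E, I1 e) + ((s:ℝ) * ((2 * S) * u) + Q * Real.sqrt Q) := by
          rw [hsum1]
          exact add_le_add_right hOVsum _
  have hlast : ∑ ij ∈ E, (∫ ω, (if X ij.1 ω = X ij.2 ω then (1:ℝ) else 0) ∂μ)
      = ∑ e ∈ E, I1 e := rfl
  linarith [hstep, hterm1, hterm2, hlast]
end

section
/- (Strengthened Maclaurin inequality) Let n ≥ 1 and s ≥ 3 be integers, and let e_i(x) ≥ 0 be nonnegative real numbers for i ∈ [s] and x ∈ [n]. Then (2·Σ_{1≤i<j<k≤s} Σ_{x∈[n]} e_i(x)·e_j(x)·e_k(x))² ≤ (Σ_{1≤i<j≤s} Σ_{x∈[n]} e_i(x)·e_j(x))³. -/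
open Finset

noncomputable def Pf (f : ℕ → ℝ) (n : ℕ) : ℝ := ∑ i ∈ range n, f i
noncomputable def Qf (f : ℕ → ℝ) (n : ℕ) : ℝ := ∑ j ∈ range n, f j * Pf f j
noncomputable def Rf (f : ℕ → ℝ) (n : ℕ) : ℝ := ∑ k ∈ range n, f k * Qf f k

lemma key_ind (f : ℕ → ℝ) (hf : ∀ i, 0 ≤ f i) (n : ℕ) :
    0 ≤ Pf f n ∧ 0 ≤ Qf f n ∧ 0 ≤ Rf f n ∧ 2 * Qf f n ≤ Pf f n ^ 2 ∧
      3 * Rf f n ≤ Pf f n * Qf f n ∧ 4 * Rf f n ^ 2 ≤ Qf f n ^ 3 := by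
  induction n with
  | zero => norm_num [Pf, Qf, Rf]
  | succ n ih =>
    obtain ⟨hP, hQ, hR, h1, h2, h3⟩ := ih
    have ht : (0:ℝ) ≤ f n := hf n
    have eP : Pf f (n+1) = Pf f n + f n := sum_range_succ _ _
    have eQ : Qf f (n+1) = Qf f n + f n * Pf f n := sum_range_succ _ _
    have eR : Rf f (n+1) = Rf f n + f n * Qf f n := sum_range_succ _ _
    rw [eP, eQ, eR]
    have k1 : f n * (2 * Qf f n) ≤ f n * Pf f n ^ 2 :=
      mul_le_mul_of_nonneg_left h1 ht
    have k2 : (f n * Qf f n) * (3 * Rf f n) ≤ (f n * Qf f n) * (Pf f n * Qf f n) :=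
      mul_le_mul_of_nonneg_left h2 (mul_nonneg ht hQ)
    have k3 : (f n ^ 2 * Qf f n) * (2 * Qf f n) ≤ (f n ^ 2 * Qf f n) * Pf f n ^ 2 :=
      mul_le_mul_of_nonneg_left h1 (mul_nonneg (sq_nonneg _) hQ)
    have k4 : 0 ≤ f n * Pf f n * Qf f n ^ 2 :=
      mul_nonneg (mul_nonneg ht hP) (sq_nonneg _)
    have k5 : 0 ≤ f n ^ 2 * Qf f n * Pf f n ^ 2 :=
      mul_nonneg (mul_nonneg (sq_nonneg _) hQ) (sq_nonneg _)
    have k6 : 0 ≤ f n ^ 3 * Pf f n ^ 3 :=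
      mul_nonneg (pow_nonneg ht 3) (pow_nonneg hP 3)
    have k7 : 0 ≤ f n ^ 2 * Pf f n := mul_nonneg (sq_nonneg _) hP
    refine ⟨by positivity, by positivity, by positivity, by nlinarith, by nlinarith, ?_⟩
    nlinarith [k2, k3, k4, k5, k6, h3]

lemma fin_ite_sum (s m : ℕ) (hm : m ≤ s) (F : ℕ → ℝ) :
    ∑ i : Fin s, (if (i : ℕ) < m then F i else 0) = ∑ i ∈ range m, F i := by
  rw [Fin.sum_univ_eq_sum_range (fun i => if i < m then F i else 0) s, ← sum_filter]
  congr 1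
  ext a
  simp only [Finset.mem_filter, Finset.mem_range]
  omega

lemma pair_bridge (s : ℕ) (g : Fin s → ℝ) :
    ∑ ij ∈ (univ : Finset (Fin s × Fin s)).filter (fun ij => ij.1 < ij.2),
        g ij.1 * g ij.2
      = Qf (fun i => if h : i < s then g ⟨i, h⟩ else 0) s := by
  set f : ℕ → ℝ := fun i => if h : i < s then g ⟨i, h⟩ else 0 with hf
  have fval : ∀ i : Fin s, f (i : ℕ) = g i := by
    intro i
    simp [hf, i.isLt]
  rw [sum_filter, Fintype.sum_prod_type, Finset.sum_comm]
  have inner : ∀ j : Fin s,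
      ∑ i : Fin s, (if i < j then g i * g j else 0) = f (j : ℕ) * Pf f (j : ℕ) := by
    intro j
    have : ∀ i : Fin s, (if i < j then g i * g j else 0)
        = (if (i : ℕ) < (j : ℕ) then f (i : ℕ) * f (j : ℕ) else 0) := by
      intro i
      rw [fval, fval]
      rfl
    rw [sum_congr rfl fun i _ => this i,
      fin_ite_sum s (j : ℕ) j.isLt.le (fun i => f i * f (j : ℕ)), ← sum_mul, Pf, mul_comm]
  rw [sum_congr rfl fun j _ => inner j,
    Fin.sum_univ_eq_sum_range (fun j => f j * Pf f j) s, Qf]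

lemma triple_bridge (s : ℕ) (g : Fin s → ℝ) :
    ∑ t ∈ (univ : Finset (Fin s × Fin s × Fin s)).filter
        (fun t => t.1 < t.2.1 ∧ t.2.1 < t.2.2), g t.1 * g t.2.1 * g t.2.2
      = Rf (fun i => if h : i < s then g ⟨i, h⟩ else 0) s := by
  set f : ℕ → ℝ := fun i => if h : i < s then g ⟨i, h⟩ else 0 with hf
  have fval : ∀ i : Fin s, f (i : ℕ) = g i := by
    intro i
    simp [hf, i.isLt]
  rw [sum_filter]
  simp only [Fintype.sum_prod_type]
  -- now : ∑ i, ∑ j, ∑ k, if i < j ∧ j < k then g i * g j * g k else 0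
  have swap3 : ∀ (G : Fin s → Fin s → Fin s → ℝ),
      ∑ i : Fin s, ∑ j : Fin s, ∑ k : Fin s, G i j k
        = ∑ k : Fin s, ∑ j : Fin s, ∑ i : Fin s, G i j k := by
    intro G
    calc ∑ i : Fin s, ∑ j : Fin s, ∑ k : Fin s, G i j k
        = ∑ j : Fin s, ∑ i : Fin s, ∑ k : Fin s, G i j k := Finset.sum_comm
      _ = ∑ j : Fin s, ∑ k : Fin s, ∑ i : Fin s, G i j k :=
          Finset.sum_congr rfl fun _ _ => Finset.sum_comm
      _ = ∑ k : Fin s, ∑ j : Fin s, ∑ i : Fin s, G i j k := Finset.sum_comm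
  rw [swap3]
  have innerk : ∀ k : Fin s,
      ∑ j : Fin s, ∑ i : Fin s, (if i < j ∧ j < k then g i * g j * g k else 0)
        = f (k : ℕ) * Qf f (k : ℕ) := by
    intro k
    have step1 : ∀ j : Fin s,
        ∑ i : Fin s, (if i < j ∧ j < k then g i * g j * g k else 0)
          = (if (j : ℕ) < (k : ℕ) then f (j : ℕ) * Pf f (j : ℕ) * f (k : ℕ) else 0) := by
      intro j
      by_cases hjk : j < k
      · rw [if_pos (show (j:ℕ) < (k:ℕ) from hjk)]
        have : ∀ i : Fin s, (if i < j ∧ j < k then g i * g j * g k else 0)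
            = (if (i : ℕ) < (j : ℕ) then f (i : ℕ) * (f (j : ℕ) * f (k : ℕ)) else 0) := by
          intro i
          rw [fval, fval, fval]
          by_cases hij : i < j
          · rw [if_pos ⟨hij, hjk⟩, if_pos (show (i:ℕ) < (j:ℕ) from hij)]; ring
          · rw [if_neg (fun h => hij h.1), if_neg (show ¬(i:ℕ) < (j:ℕ) from hij)]
        rw [sum_congr rfl fun i _ => this i,
          fin_ite_sum s (j : ℕ) j.isLt.le (fun i => f i * (f (j : ℕ) * f (k : ℕ))),
          ← sum_mul]
        rw [← Pf]
        ring
      · rw [if_neg (show ¬(j:ℕ) < (k:ℕ) from hjk)]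
        refine Finset.sum_eq_zero fun i _ => ?_
        rw [if_neg (fun h => hjk h.2)]
    rw [sum_congr rfl fun j _ => step1 j,
      fin_ite_sum s (k : ℕ) k.isLt.le (fun j => f j * Pf f j * f (k : ℕ)), ← sum_mul,
      ← Qf]
    ring
  rw [sum_congr rfl fun k _ => innerk k,
    Fin.sum_univ_eq_sum_range (fun k => f k * Qf f k) s, Rf]

lemma sum_sq_le_sum_cube {ι : Type*} (A : Finset ι) (a b : ι → ℝ)
    (ha : ∀ x ∈ A, 0 ≤ a x) (hb : ∀ x ∈ A, 0 ≤ b x)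
    (h : ∀ x ∈ A, a x ^ 2 ≤ b x ^ 3) :
    (∑ x ∈ A, a x) ^ 2 ≤ (∑ x ∈ A, b x) ^ 3 := by
  set B := ∑ x ∈ A, b x with hB
  have hB0 : 0 ≤ B := sum_nonneg hb
  have step : ∀ x ∈ A, a x ≤ b x * Real.sqrt B := by
    intro x hx
    have h1 : a x = Real.sqrt (a x ^ 2) := (Real.sqrt_sq (ha x hx)).symm
    have h2 : b x ^ 3 ≤ b x ^ 2 * B := by
      have : b x ≤ B := Finset.single_le_sum hb hx
      nlinarith [sq_nonneg (b x)]
    calc a x = Real.sqrt (a x ^ 2) := h1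
      _ ≤ Real.sqrt (b x ^ 2 * B) := Real.sqrt_le_sqrt (le_trans (h x hx) h2)
      _ = b x * Real.sqrt B := by
          rw [Real.sqrt_mul (sq_nonneg _), Real.sqrt_sq (hb x hx)]
  have hsum : ∑ x ∈ A, a x ≤ B * Real.sqrt B := by
    calc ∑ x ∈ A, a x ≤ ∑ x ∈ A, b x * Real.sqrt B := Finset.sum_le_sum step
      _ = B * Real.sqrt B := by rw [← sum_mul]
  have hA0 : 0 ≤ ∑ x ∈ A, a x := sum_nonneg ha
  calc (∑ x ∈ A, a x) ^ 2 ≤ (B * Real.sqrt B) ^ 2 := by nlinarith [Real.sqrt_nonneg B]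
    _ = B ^ 3 := by rw [mul_pow, Real.sq_sqrt hB0]; ring

/-- Lemma 3.5 (Strengthened Maclaurin inequality): for nonnegative reals `e i x`
(`i ∈ [s]`, `x ∈ [n]`, with `s ≥ 3`),
`(2·Σ_{i<j<k} Σ_x e_i(x)e_j(x)e_k(x))² ≤ (Σ_{i<j} Σ_x e_i(x)e_j(x))³`. -/
theorem strengthened_maclaurin
    (n s : ℕ) (hn : 1 ≤ n) (hs : 3 ≤ s)
    (e : Fin s → Fin n → ℝ) (he : ∀ i x, 0 ≤ e i x) :
    (2 * ∑ t ∈ Finset.univ.filter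
        (fun t : Fin s × Fin s × Fin s => t.1 < t.2.1 ∧ t.2.1 < t.2.2),
        ∑ x, e t.1 x * e t.2.1 x * e t.2.2 x) ^ 2
      ≤ (∑ ij ∈ Finset.univ.filter (fun ij : Fin s × Fin s => ij.1 < ij.2),
        ∑ x, e ij.1 x * e ij.2 x) ^ 3 := by
  rw [Finset.sum_comm (γ := Fin s × Fin s × Fin s),
    Finset.sum_comm (γ := Fin s × Fin s)]
  have hfx : ∀ x : Fin n, ∀ i, (0:ℝ) ≤ (fun i => if h : i < s then e ⟨i, h⟩ x else 0) i := by
    intro x i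
    dsimp only
    split
    · exact he _ _
    · exact le_rfl
  have htrip : ∀ x : Fin n,
      ∑ t ∈ (univ : Finset (Fin s × Fin s × Fin s)).filter
          (fun t => t.1 < t.2.1 ∧ t.2.1 < t.2.2), e t.1 x * e t.2.1 x * e t.2.2 x
        = Rf (fun i => if h : i < s then e ⟨i, h⟩ x else 0) s :=
    fun x => triple_bridge s (fun i => e i x)
  have hpair : ∀ x : Fin n,
      ∑ ij ∈ (univ : Finset (Fin s × Fin s)).filter (fun ij => ij.1 < ij.2),
          e ij.1 x * e ij.2 x
        = Qf (fun i => if h : i < s then e ⟨i, h⟩ x else 0) s :=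
    fun x => pair_bridge s (fun i => e i x)
  rw [sum_congr rfl fun x _ => htrip x, sum_congr rfl fun x _ => hpair x, Finset.mul_sum]
  refine sum_sq_le_sum_cube univ _ _ (fun x _ => ?_) (fun x _ => ?_) (fun x _ => ?_)
  · obtain ⟨hP, hQ, hR, -, -, -⟩ := key_ind _ (hfx x) s
    positivity
  · exact (key_ind _ (hfx x) s).2.1
  · obtain ⟨hP, hQ, hR, h1, h2, h3⟩ := key_ind _ (hfx x) s
    nlinarith
end

section
/- Let s ≥ 3 and let a₁,…,a_s be nonnegative real numbers. Then 4·(Σ_{1≤i<j<k≤s} a_i·a_j·a_k)² ≤ (Σ_{1≤i<j≤s} a_i·a_j)³. -/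
open Finset

noncomputable def E {ι : Type*} (a : ι → ℝ) (S : Finset ι) (n : ℕ) : ℝ :=
  ∑ t ∈ S.powersetCard n, ∏ i ∈ t, a i

lemma E_insert {ι : Type*} [DecidableEq ι] (a : ι → ℝ) {x : ι} {S : Finset ι}
    (hx : x ∉ S) (n : ℕ) :
    E a (insert x S) (n+1) = E a S (n+1) + a x * E a S n := by
  unfold E
  rw [powersetCard_succ_insert hx, sum_union, sum_image, mul_sum]
  · congr 1
    refine sum_congr rfl fun t ht => ?_
    rw [prod_insert fun h => hx ((mem_powersetCard.mp ht).1 h)]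
  · intro t ht u hu h
    rw [mem_coe, mem_powersetCard] at ht hu
    have hxt : x ∉ t := fun h' => hx (ht.1 h')
    have hxu : x ∉ u := fun h' => hx (hu.1 h')
    have := congrArg (fun s => Finset.erase s x) h
    simpa [erase_insert hxt, erase_insert hxu] using this
  · rw [disjoint_right]
    intro t ht ht'
    simp only [mem_image] at ht
    obtain ⟨u, hu, rfl⟩ := ht
    rw [mem_powersetCard] at ht' hu
    exact hx (ht'.1 (mem_insert_self x u))

lemma E_nonneg {ι : Type*} (a : ι → ℝ) (S : Finset ι) (ha : ∀ i ∈ S, 0 ≤ a i) (n : ℕ) :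
    0 ≤ E a S n :=
  sum_nonneg fun t ht => prod_nonneg fun i hi => ha i ((mem_powersetCard.mp ht).1 hi)

lemma key {ι : Type*} [DecidableEq ι] (a : ι → ℝ) (S : Finset ι)
    (ha : ∀ i ∈ S, 0 ≤ a i) :
    2 * E a S 2 ≤ (E a S 1)^2 ∧ 4 * (E a S 3)^2 ≤ (E a S 2)^3 := by
  induction S using Finset.induction_on with
  | empty =>
    have h : ∀ n, 0 < n → E a (∅ : Finset ι) n = 0 := fun n hn => by
      rw [E, powersetCard_eq_empty.mpr (by simpa using hn)]; simp
    rw [h 1 one_pos, h 2 two_pos, h 3 three_pos]; norm_num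
  | insert x S hx ih =>
    have hax : 0 ≤ a x := ha x (mem_insert_self x S)
    have ha' : ∀ i ∈ S, 0 ≤ a i := fun i hi => ha i (mem_insert_of_mem hi)
    obtain ⟨ih1, ih2⟩ := ih ha'
    have he1 := E_nonneg a S ha' 1
    have he2 := E_nonneg a S ha' 2
    have he3 := E_nonneg a S ha' 3
    have hE3 : E a (insert x S) 3 = E a S 3 + a x * E a S 2 := E_insert a hx 2
    have hE2 : E a (insert x S) 2 = E a S 2 + a x * E a S 1 := E_insert a hx 1
    have hE1 : E a (insert x S) 1 = E a S 1 + a x * E a S 0 := E_insert a hx 0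
    have hE0 : E a S 0 = 1 := by simp [E]
    rw [hE0, mul_one] at hE1
    set e1 := E a S 1
    set e2 := E a S 2
    set e3 := E a S 3
    set y := a x
    constructor
    · rw [hE2, hE1]; nlinarith [sq_nonneg y]
    · rw [hE3, hE2]
      have hA : (8*e2*e3)^2 ≤ (3*e2^2*e1)^2 := by
        nlinarith [mul_nonneg (mul_nonneg (mul_nonneg he2 he2) (mul_nonneg he2 he2))
            (sub_nonneg.mpr ih1),
          mul_nonneg (mul_nonneg he2 he2) (sub_nonneg.mpr ih2),
          pow_nonneg he2 5]
      have hB : 8*e2*e3 ≤ 3*e2^2*e1 := by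
        have h1 : 0 ≤ 8*e2*e3 := by positivity
        have h2 : 0 ≤ 3*e2^2*e1 := by positivity
        exact le_of_pow_le_pow_left₀ two_ne_zero h2 hA
      nlinarith [mul_nonneg hax (sub_nonneg.mpr hB),
        mul_nonneg (mul_nonneg (sq_nonneg y) he2) (sub_nonneg.mpr ih1),
        mul_nonneg (mul_nonneg (mul_nonneg hax hax) hax)
          (mul_nonneg (mul_nonneg he1 he1) he1),
        mul_nonneg (sq_nonneg y) (mul_nonneg he2 he2)]

lemma pair_sum (s : ℕ) (a : Fin s → ℝ) :
    ∑ ij ∈ Finset.univ.filter (fun ij : Fin s × Fin s => ij.1 < ij.2),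
      a ij.1 * a ij.2 = E a Finset.univ 2 := by
  refine Finset.sum_bij (fun p _ => ({p.1, p.2} : Finset (Fin s))) ?_ ?_ ?_ ?_
  · intro p hp
    simp only [mem_filter] at hp
    rw [mem_powersetCard]
    exact ⟨subset_univ _, card_pair hp.2.ne⟩
  · intro p hp q hq h
    simp only [mem_filter] at hp hq
    have h' : ({p.1, p.2} : Finset (Fin s)) = {q.1, q.2} := h
    have h1 : p.1 ∈ ({q.1, q.2} : Finset (Fin s)) := by rw [← h']; simp
    have h2 : p.2 ∈ ({q.1, q.2} : Finset (Fin s)) := by rw [← h']; simp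
    have h3 : q.1 ∈ ({p.1, p.2} : Finset (Fin s)) := by rw [h']; simp
    simp only [mem_insert, mem_singleton] at h1 h2 h3
    have := hp.2; have := hq.2
    rw [Prod.ext_iff]
    simp only [Fin.ext_iff, Fin.lt_def] at *
    omega
  · intro t ht
    rw [mem_powersetCard] at ht
    obtain ⟨x, y, hxy, rfl⟩ := Finset.card_eq_two.mp ht.2
    rcases hxy.lt_or_gt with h | h
    · exact ⟨(x, y), by simp [h], rfl⟩
    · exact ⟨(y, x), by simp [h], by rw [pair_comm]⟩
  · intro p hp
    simp only [mem_filter] at hp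
    rw [prod_pair hp.2.ne]

lemma triple_sum (s : ℕ) (a : Fin s → ℝ) :
    ∑ t ∈ Finset.univ.filter
      (fun t : Fin s × Fin s × Fin s => t.1 < t.2.1 ∧ t.2.1 < t.2.2),
      a t.1 * a t.2.1 * a t.2.2 = E a Finset.univ 3 := by
  have card3 : ∀ x y z : Fin s, x ≠ y → x ≠ z → y ≠ z →
      ({x, y, z} : Finset (Fin s)).card = 3 := by
    intro x y z h1 h2 h3
    rw [card_insert_of_notMem (by simp [h1, h2]), card_pair h3]
  refine Finset.sum_bij (fun p _ => ({p.1, p.2.1, p.2.2} : Finset (Fin s))) ?_ ?_ ?_ ?_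
  · intro p hp
    simp only [mem_filter] at hp
    rw [mem_powersetCard]
    exact ⟨subset_univ _,
      card3 _ _ _ hp.2.1.ne (hp.2.1.trans hp.2.2).ne hp.2.2.ne⟩
  · intro p hp q hq h
    simp only [mem_filter] at hp hq
    have h' : ({p.1, p.2.1, p.2.2} : Finset (Fin s)) = {q.1, q.2.1, q.2.2} := h
    have h1 : p.1 ∈ ({q.1, q.2.1, q.2.2} : Finset (Fin s)) := by rw [← h']; simp
    have h2 : p.2.1 ∈ ({q.1, q.2.1, q.2.2} : Finset (Fin s)) := by rw [← h']; simp
    have h3 : p.2.2 ∈ ({q.1, q.2.1, q.2.2} : Finset (Fin s)) := by rw [← h']; simp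
    have h4 : q.1 ∈ ({p.1, p.2.1, p.2.2} : Finset (Fin s)) := by rw [h']; simp
    have h5 : q.2.1 ∈ ({p.1, p.2.1, p.2.2} : Finset (Fin s)) := by rw [h']; simp
    simp only [mem_insert, mem_singleton] at h1 h2 h3 h4 h5
    obtain ⟨hp1, hp2⟩ := hp.2; obtain ⟨hq1, hq2⟩ := hq.2
    rw [Prod.ext_iff, Prod.ext_iff]
    simp only [Fin.ext_iff, Fin.lt_def] at *
    omega
  · intro t ht
    rw [mem_powersetCard] at ht
    obtain ⟨x, y, z, hxy, hxz, hyz, rfl⟩ := Finset.card_eq_three.mp ht.2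
    have perm : ∀ u v w : Fin s, ({u, v, w} : Finset (Fin s)) = {x, y, z} →
        u < v → v < w →
        ∃ p, ∃ hp : p ∈ Finset.univ.filter
          (fun t : Fin s × Fin s × Fin s => t.1 < t.2.1 ∧ t.2.1 < t.2.2),
          ({p.1, p.2.1, p.2.2} : Finset (Fin s)) = {x, y, z} := by
      intro u v w he h1 h2
      exact ⟨(u, v, w), by simp [h1, h2], he⟩
    rcases hxy.lt_or_gt with h1 | h1 <;> rcases hxz.lt_or_gt with h2 | h2 <;>
      rcases hyz.lt_or_gt with h3 | h3
    · exact perm x y z rfl h1 h3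
    · exact perm x z y (by ext i; simp; tauto) h2 h3
    · exact absurd (h3.trans h2) (asymm h1)
    · exact perm z x y (by ext i; simp; tauto) h2 h1
    · exact perm y x z (by ext i; simp; tauto) h1 h2
    · exact absurd (h2.trans h3) (asymm h1)
    · exact perm y z x (by ext i; simp; tauto) h3 h2
    · exact perm z y x (by ext i; simp; tauto) h3 h1
  · intro p hp
    simp only [mem_filter] at hp
    obtain ⟨h1, h2⟩ := hp.2
    rw [prod_insert (by simp [h1.ne, (h1.trans h2).ne]), prod_pair h2.ne, mul_assoc]

/-- The base case (`n = 1`) of the strengthened Maclaurin inequality (Lemma 3.5):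
for nonnegative reals `a₁, …, a_s` with `s ≥ 3`,
`4·(Σ_{i<j<k} a_i a_j a_k)² ≤ (Σ_{i<j} a_i a_j)³`. -/
theorem strengthened_maclaurin_base
    (s : ℕ) (hs : 3 ≤ s) (a : Fin s → ℝ) (ha : ∀ i, 0 ≤ a i) :
    4 * (∑ t ∈ Finset.univ.filter
        (fun t : Fin s × Fin s × Fin s => t.1 < t.2.1 ∧ t.2.1 < t.2.2),
        a t.1 * a t.2.1 * a t.2.2) ^ 2
      ≤ (∑ ij ∈ Finset.univ.filter (fun ij : Fin s × Fin s => ij.1 < ij.2),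
        a ij.1 * a ij.2) ^ 3 := by
  rw [triple_sum, pair_sum]
  exact (key a Finset.univ fun i _ => ha i).2
end

section
/- Let n ≥ 1 and let p_i and p_j be two distributions over [n] that satisfy the structural condition with respect to the uniform distribution U_n (i.e., there exists a set A ⊆ [n] with complement B such that p_i(x) ≥ 1/n and p_j(x) ≥ 1/n for all x ∈ A, and p_i(x) ≤ 1/n and p_j(x) ≤ 1/n for all x ∈ B). Define e_i(x) = |p_i(x) − 1/n| and e_j(x) = |p_j(x) − 1/n| for each x ∈ [n]. Then Σ_{x∈[n]} p_i(x)·p_j(x) = 1/n + Σ_{x∈[n]} e_i(x)·e_j(x). -/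
open Finset

/-- Equation (eq1) in the proof of Lemma 3.2: for two distributions `pi, pj` over `[n]`
satisfying the structural condition with respect to the uniform distribution,
`Σ_x pi(x)·pj(x) = 1/n + Σ_x |pi(x) − 1/n|·|pj(x) − 1/n|`. -/
theorem collision_probability_identity
    (n : ℕ) (hn : 1 ≤ n)
    (pi pj : Fin n → ℝ) (hpi : IsDist pi) (hpj : IsDist pj)
    (hstruct : ∃ A : Finset (Fin n),
      (∀ x ∈ A, 1 / (n : ℝ) ≤ pi x ∧ 1 / (n : ℝ) ≤ pj x) ∧
      (∀ x ∉ A, pi x ≤ 1 / (n : ℝ) ∧ pj x ≤ 1 / (n : ℝ))) :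
    ∑ x, pi x * pj x = 1 / n + ∑ x, |pi x - 1 / n| * |pj x - 1 / n| := by
  obtain ⟨A, hA, hB⟩ := hstruct
  have hn0 : (n : ℝ) ≠ 0 := by positivity
  have habs : ∀ x, |pi x - 1 / n| * |pj x - 1 / n|
      = (pi x - 1 / n) * (pj x - 1 / n) := by
    intro x
    by_cases hx : x ∈ A
    · rw [abs_of_nonneg (by linarith [(hA x hx).1]),
        abs_of_nonneg (by linarith [(hA x hx).2])]
    · rw [abs_of_nonpos (by linarith [(hB x hx).1]),
        abs_of_nonpos (by linarith [(hB x hx).2]), neg_mul_neg]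
  simp only [habs, sub_mul, mul_sub]
  rw [Finset.sum_sub_distrib, Finset.sum_sub_distrib, Finset.sum_sub_distrib,
    ← Finset.sum_mul, ← Finset.mul_sum, hpi.2, hpj.2]
  simp [Finset.card_univ, hn0]
end

section
/- Let n, s ≥ 1 be integers, let q be a distribution over [n], and let p₁,…,p_s be distributions over [n] satisfying the structural condition with respect to q. For each x ∈ [n] let λ_x = Σ_{j=1}^s p_j(x), and let (T_x)_{x∈[n]} be independent random variables with T_x distributed Poisson(λ_x). Define Z = Σ_{x∈[n]} ((T_x − s·q(x))² − T_x). Then E[Z] = ‖e⃗₁ + ⋯ + e⃗_s‖₂², where e⃗_j ∈ ℝⁿ is the vector whose x-th coordinate is |q(x) − p_j(x)|. -/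
open MeasureTheory ProbabilityTheory Finset

open scoped ENNReal NNReal

noncomputable def ppmf (r : ℝ) (k : ℕ) : ℝ := Real.exp (-r) * r ^ k / (Nat.factorial k)

lemma ppmf_nonneg {r : ℝ} (hr : 0 ≤ r) (k : ℕ) : 0 ≤ ppmf r k := by
  unfold ppmf; positivity

lemma ppmf_hasSum {r : ℝ} (hr : 0 ≤ r) : HasSum (ppmf r) 1 := by
  have he : HasSum (fun k : ℕ => r ^ k / (Nat.factorial k)) (Real.exp r) := by
    rw [Real.exp_eq_exp_ℝ]
    exact NormedSpace.expSeries_div_hasSum_exp r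
  have := he.mul_left (Real.exp (-r))
  have h1 : Real.exp (-r) * Real.exp r = 1 := by
    rw [← Real.exp_add]; simp
  rw [h1] at this
  refine this.congr_fun fun k => ?_
  simp [ppmf, mul_div_assoc]

lemma ppmf_hasSum_one {r : ℝ} (hr : 0 ≤ r) :
    HasSum (fun k : ℕ => (k : ℝ) * ppmf r k) r := by
  have h0 := (ppmf_hasSum hr).mul_left r
  rw [mul_one] at h0
  have hshift : HasSum (fun k : ℕ => ((k + 1 : ℕ) : ℝ) * ppmf r (k + 1)) r := by
    refine h0.congr_fun fun k => ?_
    have hf : ((Nat.factorial (k+1) : ℝ)) = (k+1) * Nat.factorial k := by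
      push_cast [Nat.factorial_succ]; ring
    have hf0 : (Nat.factorial k : ℝ) ≠ 0 := Nat.cast_ne_zero.2 (Nat.factorial_ne_zero k)
    have hk1 : ((k : ℝ) + 1) ≠ 0 := by positivity
    simp only [ppmf, hf, pow_succ]
    push_cast
    field_simp
  have := (hasSum_nat_add_iff (f := fun k : ℕ => (k : ℝ) * ppmf r k) 1).mp hshift
  simpa using this

lemma ppmf_hasSum_two {r : ℝ} (hr : 0 ≤ r) :
    HasSum (fun k : ℕ => (k : ℝ) * ((k : ℝ) - 1) * ppmf r k) (r ^ 2) := by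
  have h0 := (ppmf_hasSum hr).mul_left (r ^ 2)
  rw [mul_one] at h0
  have hshift : HasSum (fun k : ℕ => ((k + 2 : ℕ) : ℝ) * (((k + 2 : ℕ) : ℝ) - 1) * ppmf r (k + 2))
      (r ^ 2) := by
    refine h0.congr_fun fun k => ?_
    have hf : ((Nat.factorial (k+2) : ℝ)) = (k+2) * ((k+1) * Nat.factorial k) := by
      rw [Nat.factorial_succ, Nat.factorial_succ]; push_cast; ring
    have hf0 : (Nat.factorial k : ℝ) ≠ 0 := Nat.cast_ne_zero.2 (Nat.factorial_ne_zero k)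
    have h2 : ((k : ℝ) + 2) ≠ 0 := by positivity
    have h1 : ((k : ℝ) + 1) ≠ 0 := by positivity
    simp only [ppmf, hf, pow_succ]
    push_cast
    field_simp
    ring
  have := (hasSum_nat_add_iff (f := fun k : ℕ => (k : ℝ) * ((k : ℝ) - 1) * ppmf r k) 2).mp hshift
  simpa [Finset.sum_range_succ] using this

lemma ppmf_hasSum_stat {r : ℝ} (hr : 0 ≤ r) (c : ℝ) :
    HasSum (fun k : ℕ => ppmf r k * (((k : ℝ) - c) ^ 2 - k)) ((r - c) ^ 2) := by
  have h := ((ppmf_hasSum_two hr).sub ((ppmf_hasSum_one hr).mul_left (2 * c))).add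
    ((ppmf_hasSum hr).mul_left (c ^ 2))
  have hv : r ^ 2 - 2 * c * r + c ^ 2 * 1 = (r - c) ^ 2 := by ring
  rw [hv] at h
  exact h.congr_fun fun k => by ring

lemma poisson_integral {r c : ℝ} (hr : 0 ≤ r) (ν : Measure ℕ)
    (hν : ∀ k : ℕ, ν {k} = ENNReal.ofReal (ppmf r k)) :
    Integrable (fun k : ℕ => ((k : ℝ) - c) ^ 2 - k) ν ∧
    ∫ k : ℕ, (((k : ℝ) - c) ^ 2 - k) ∂ν = (r - c) ^ 2 := by
  set g : ℕ → ℝ := fun k => ((k : ℝ) - c) ^ 2 - k with hg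
  have hsummable : Summable (fun k : ℕ => |g k| * ppmf r k) := by
    have hb : Summable (fun k : ℕ =>
        ((k : ℝ) * ((k : ℝ) - 1) + (2 * |c| + 1) * k + c ^ 2) * ppmf r k) := by
      have := ((ppmf_hasSum_two hr).add ((ppmf_hasSum_one hr).mul_left (2 * |c| + 1))).add
        ((ppmf_hasSum hr).mul_left (c ^ 2))
      exact (this.congr_fun fun k => by ring).summable
    refine Summable.of_nonneg_of_le (fun k => mul_nonneg (abs_nonneg _) (ppmf_nonneg hr k)) (fun k => ?_) hb
    have hp := ppmf_nonneg hr k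
    refine mul_le_mul_of_nonneg_right ?_ hp
    have h1 : g k = (k : ℝ) * ((k : ℝ) - 1) - 2 * c * k + c ^ 2 := by simp [hg]; ring
    calc |g k| ≤ |(k : ℝ) * ((k : ℝ) - 1)| + |2 * c * k| + |c ^ 2| := by
            rw [h1]; exact (abs_add_le _ _).trans (add_le_add_left (abs_sub _ _) _)
      _ ≤ (k : ℝ) * ((k : ℝ) - 1) + (2 * |c| + 1) * k + c ^ 2 := by
            have hk1 : |(k : ℝ) * ((k : ℝ) - 1)| = (k : ℝ) * ((k : ℝ) - 1) := by
              rcases Nat.eq_zero_or_pos k with hk | hk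
              · simp [hk]
              · refine abs_of_nonneg (mul_nonneg (Nat.cast_nonneg k) ?_)
                have : (1 : ℝ) ≤ k := by exact_mod_cast hk
                linarith
            have hk2 : |2 * c * (k : ℝ)| ≤ (2 * |c| + 1) * k := by
              rw [abs_mul, abs_mul]
              simp only [abs_two, Nat.abs_cast]
              nlinarith [abs_nonneg c, Nat.cast_nonneg (α := ℝ) k]
            have hk3 : |c ^ 2| = c ^ 2 := abs_of_nonneg (sq_nonneg c)
            linarith
  have hmeasg : Measurable g := measurable_from_nat
  have hInt : Integrable g ν := by
    refine ⟨hmeasg.aestronglyMeasurable, ?_⟩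
    rw [HasFiniteIntegral, lintegral_countable' (fun k => ‖g k‖ₑ) ]
    have heq : ∀ k : ℕ, (‖g k‖₊ : ℝ≥0∞) * ν {k} = ENNReal.ofReal (|g k| * ppmf r k) := by
      intro k
      rw [hν k, ENNReal.ofReal_mul (abs_nonneg _)]
      congr 1
      rw [← Real.norm_eq_abs, ofReal_norm, enorm_eq_nnnorm]
    calc ∑' k : ℕ, (‖g k‖₊ : ℝ≥0∞) * ν {k} = ∑' k : ℕ, ENNReal.ofReal (|g k| * ppmf r k) := by
          simp_rw [heq]
      _ = ENNReal.ofReal (∑' k : ℕ, |g k| * ppmf r k) := by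
          rw [ENNReal.ofReal_tsum_of_nonneg (fun k => mul_nonneg (abs_nonneg _) (ppmf_nonneg hr k)) hsummable]
      _ < ⊤ := ENNReal.ofReal_lt_top
  refine ⟨hInt, ?_⟩
  rw [integral_countable' hInt]
  have : ∀ k : ℕ, ν.real {k} • g k = ppmf r k * g k := by
    intro k
    rw [measureReal_def, hν k, ENNReal.toReal_ofReal (ppmf_nonneg hr k), smul_eq_mul]
  simp_rw [this]
  exact (ppmf_hasSum_stat hr c).tsum_eq

/-- Lemma 4.2: the expectation of the χ²-type identity-testing statistic under
Poissonization. With `T x ~ Poisson(λ_x)` independent, `λ_x = Σ_j p_j(x)`, and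
`Z = Σ_x ((T_x − s·q(x))² − T_x)`, one has `E[Z] = ‖e⃗₁ + ⋯ + e⃗_s‖₂²` where the `x`-th
coordinate of `e⃗_j` is `|q(x) − p_j(x)|`. -/
theorem identity_statistic_expectation
    (n s : ℕ) (hn : 1 ≤ n) (hs : 1 ≤ s)
    (q : Fin n → ℝ) (hq : IsDist q)
    (p : Fin s → Fin n → ℝ) (hp : ∀ j, IsDist (p j))
    (hstruct : StructCond p q)
    (Ω : Type) [MeasurableSpace Ω] (μ : Measure Ω) [IsProbabilityMeasure μ]
    (T : Fin n → Ω → ℕ)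
    (hmeas : ∀ x, Measurable (T x))
    (hindep : iIndepFun T μ)
    (hlaw : ∀ (x : Fin n) (k : ℕ), μ {ω | T x ω = k}
      = ENNReal.ofReal (Real.exp (-(∑ j, p j x)) * (∑ j, p j x) ^ k / (Nat.factorial k))) :
    ∫ ω, (∑ x, (((T x ω : ℝ) - s * q x) ^ 2 - T x ω)) ∂μ
      = ∑ x, (∑ j, |q x - p j x|) ^ 2 := by
  have key : ∀ x : Fin n,
      Integrable (fun ω => ((T x ω : ℝ) - s * q x) ^ 2 - T x ω) μ ∧
      ∫ ω, (((T x ω : ℝ) - s * q x) ^ 2 - T x ω) ∂μ = ((∑ j, p j x) - s * q x) ^ 2 := by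
    intro x
    set r : ℝ := ∑ j, p j x with hrdef
    have hr : 0 ≤ r := Finset.sum_nonneg fun j _ => (hp j).1 x
    set c : ℝ := (s : ℝ) * q x
    set ν : Measure ℕ := μ.map (T x) with hνdef
    have hν : ∀ k : ℕ, ν {k} = ENNReal.ofReal (ppmf r k) := by
      intro k
      rw [hνdef, Measure.map_apply (hmeas x) (measurableSet_singleton k)]
      have : T x ⁻¹' {k} = {ω | T x ω = k} := by ext ω; simp
      rw [this, hlaw x k]
      rfl
    obtain ⟨hint, hval⟩ := poisson_integral (c := c) hr ν hν
    have g : ℕ → ℝ := fun k => ((k : ℝ) - c) ^ 2 - k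
    have hgm : Measurable (fun k : ℕ => ((k : ℝ) - c) ^ 2 - k) := measurable_from_nat
    have hintμ : Integrable (fun ω => ((T x ω : ℝ) - c) ^ 2 - T x ω) μ := by
      have := (integrable_map_measure hgm.aestronglyMeasurable (hmeas x).aemeasurable).mp hint
      exact this
    refine ⟨hintμ, ?_⟩
    have hmap : ∫ ω, (((T x ω : ℝ) - c) ^ 2 - T x ω) ∂μ
        = ∫ k : ℕ, (((k : ℝ) - c) ^ 2 - k) ∂ν := by
      rw [hνdef, integral_map (hmeas x).aemeasurable hgm.aestronglyMeasurable]
    rw [hmap, hval]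
  rw [integral_finset_sum _ (fun x _ => (key x).1)]
  refine Finset.sum_congr rfl fun x _ => ?_
  rw [(key x).2]
  obtain ⟨A, hA, hB⟩ := hstruct
  have hsq : (∑ _j : Fin s, q x) = (s : ℝ) * q x := by
    rw [Finset.sum_const, Finset.card_univ, Fintype.card_fin, nsmul_eq_mul]
  by_cases hx : x ∈ A
  · have : ∑ j, |q x - p j x| = (∑ j, p j x) - (s : ℝ) * q x := by
      rw [← hsq, ← Finset.sum_sub_distrib]
      exact Finset.sum_congr rfl fun j _ => by
        rw [abs_of_nonpos (by linarith [hA j x hx])]; ring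
    rw [this]
  · have : ∑ j, |q x - p j x| = (s : ℝ) * q x - (∑ j, p j x) := by
      rw [← hsq, ← Finset.sum_sub_distrib]
      exact Finset.sum_congr rfl fun j _ => abs_of_nonneg (by linarith [hB j x hx])
    rw [this]; ring
end

section
/- Let n, s ≥ 1 be integers, let q be a distribution over [n], and let p₁,…,p_s be distributions over [n] satisfying the structural condition with respect to q. For each x ∈ [n] let λ_x = Σ_{j=1}^s p_j(x), and let (T_x)_{x∈[n]} be independent random variables with T_x distributed Poisson(λ_x). Define Z = Σ_{x∈[n]} ((T_x − s·q(x))² − T_x). Then Var(Z) ≤ 4s·‖q‖₂·‖Σ_{j=1}^s e⃗_j‖₄² + 2·‖Σ_{j=1}^s p⃗_j‖₂² + 4·‖Σ_{j=1}^s e⃗_j‖₃³, where e⃗_j ∈ ℝⁿ has x-th coordinate |q(x) − p_j(x)| and p⃗_j ∈ ℝⁿ has x-th coordinate p_j(x). -/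
open MeasureTheory ProbabilityTheory Finset
open scoped Nat

lemma cast_desc2 (k : ℕ) : (Nat.descFactorial k 2 : ℝ) = (k:ℝ)^2 - k := by
  rcases k with _|m <;> simp [Nat.descFactorial] <;> push_cast <;> ring

lemma cast_desc3 (k : ℕ) : (Nat.descFactorial k 3 : ℝ) = (k:ℝ)^3 - 3*(k:ℝ)^2 + 2*k := by
  rcases k with _|_|m <;> simp [Nat.descFactorial] <;> push_cast <;> ring

lemma cast_desc4 (k : ℕ) : (Nat.descFactorial k 4 : ℝ) = (k:ℝ)^4 - 6*(k:ℝ)^3 + 11*(k:ℝ)^2 - 6*k := by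
  rcases k with _|_|_|m <;> simp [Nat.descFactorial] <;> push_cast <;> ring

lemma desc_shift (l : ℝ) (r m : ℕ) :
    (Nat.descFactorial (m + r) r : ℝ) * (l ^ (m + r) / (m + r)!) = l ^ r * (l ^ m / m !) := by
  have h := Nat.factorial_mul_descFactorial (Nat.le_add_left r m)
  have h' : ((m + r - r)! : ℝ) * (Nat.descFactorial (m + r) r : ℝ) = ((m + r)! : ℝ) := by
    exact_mod_cast congrArg (Nat.cast : ℕ → ℝ) h
  rw [Nat.add_sub_cancel] at h'
  have hm : ((m)! : ℝ) ≠ 0 := Nat.cast_ne_zero.2 (Nat.factorial_ne_zero m)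
  have hmr : (((m+r))! : ℝ) ≠ 0 := Nat.cast_ne_zero.2 (Nat.factorial_ne_zero _)
  field_simp
  rw [pow_add]
  linear_combination l ^ m * l ^ r * h'

lemma summable_desc (l : ℝ) (r : ℕ) :
    Summable (fun k : ℕ => (Nat.descFactorial k r : ℝ) * (l ^ k / k !)) := by
  rw [← summable_nat_add_iff r]
  have : (fun m : ℕ => (Nat.descFactorial (m + r) r : ℝ) * (l ^ (m + r) / (m + r)!))
      = fun m : ℕ => l ^ r * (l ^ m / m !) := funext fun m => desc_shift l r m
  rw [this]
  exact (Real.summable_pow_div_factorial l).mul_left _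

lemma tsum_desc (l : ℝ) (r : ℕ) :
    ∑' k : ℕ, (Nat.descFactorial k r : ℝ) * (l ^ k / k !) = l ^ r * Real.exp l := by
  rw [← Summable.sum_add_tsum_nat_add r (summable_desc l r)]
  have h0 : ∑ k ∈ Finset.range r, (Nat.descFactorial k r : ℝ) * (l ^ k / k !) = 0 := by
    refine Finset.sum_eq_zero fun k hk => ?_
    rw [Nat.descFactorial_eq_zero_iff_lt.2 (Finset.mem_range.1 hk)]
    simp
  rw [h0, zero_add]
  have hexp : Real.exp l = ∑' n : ℕ, l ^ n / n ! := by
    rw [Real.exp_eq_exp_ℝ, NormedSpace.exp_eq_tsum_div]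
  simp only [desc_shift l r]
  rw [tsum_mul_left, hexp]


lemma poisson_desc_integral {Ω : Type} [MeasurableSpace Ω] (μ : Measure Ω)
    [IsProbabilityMeasure μ] (X : Ω → ℕ) (hX : Measurable X) (l : ℝ) (hl : 0 ≤ l)
    (hlaw : ∀ k : ℕ, μ {ω | X ω = k} = ENNReal.ofReal (Real.exp (-l) * l ^ k / k !)) (r : ℕ) :
    Integrable (fun ω => (Nat.descFactorial (X ω) r : ℝ)) μ ∧
      ∫ ω, (Nat.descFactorial (X ω) r : ℝ) ∂μ = l ^ r := by
  set g : ℕ → ℝ := fun k => (Nat.descFactorial k r : ℝ) with hg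
  have hgm : AEStronglyMeasurable g (μ.map X) :=
    (measurable_from_top (f := g)).aestronglyMeasurable
  have hν : ∀ k : ℕ, (μ.map X) {k} = ENNReal.ofReal (Real.exp (-l) * l ^ k / k !) := by
    intro k
    rw [Measure.map_apply hX (measurableSet_singleton k)]
    have : X ⁻¹' {k} = {ω | X ω = k} := by ext ω; simp
    rw [this, hlaw k]
  have hP : ∀ k : ℕ, 0 ≤ Real.exp (-l) * l ^ k / k ! := fun k => by positivity
  have hsum : Summable (fun k : ℕ => g k * (Real.exp (-l) * l ^ k / k !)) := by
    have : (fun k : ℕ => g k * (Real.exp (-l) * l ^ k / k !))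
        = fun k => Real.exp (-l) * ((Nat.descFactorial k r : ℝ) * (l ^ k / k !)) := by
      funext k; simp only [hg]; ring
    rw [this]
    exact (summable_desc l r).mul_left _
  have hgnn : ∀ k, 0 ≤ g k := fun k => Nat.cast_nonneg _
  have hint : Integrable g (μ.map X) := by
    refine ⟨hgm, ?_⟩
    rw [HasFiniteIntegral, lintegral_countable']
    have heq : ∀ k : ℕ, ‖g k‖ₑ * (μ.map X) {k}
        = ENNReal.ofReal (g k * (Real.exp (-l) * l ^ k / k !)) := by
      intro k
      rw [hν k, ENNReal.ofReal_mul (hgnn k)]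
      congr 1
      exact Real.enorm_eq_ofReal (hgnn k)
    simp only [heq]
    rw [← ENNReal.ofReal_tsum_of_nonneg (fun k => mul_nonneg (hgnn k) (hP k)) hsum]
    exact ENNReal.ofReal_lt_top
  have hintc : Integrable (fun ω => g (X ω)) μ :=
    (integrable_map_measure hgm hX.aemeasurable).1 hint
  refine ⟨hintc, ?_⟩
  have h1 : ∫ ω, g (X ω) ∂μ = ∫ k, g k ∂(μ.map X) :=
    (integral_map hX.aemeasurable hgm).symm
  rw [h1, integral_countable hint]
  have h2 : ∀ k : ℕ, (μ.map X).real {k} • g k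
      = Real.exp (-l) * ((Nat.descFactorial k r : ℝ) * (l ^ k / k !)) := by
    intro k
    rw [measureReal_def, hν k, ENNReal.toReal_ofReal (hP k), smul_eq_mul, hg]
    ring
  simp only [h2]
  rw [tsum_mul_left, tsum_desc l r,
    show Real.exp (-l) * (l ^ r * Real.exp l) = l ^ r * (Real.exp (-l) * Real.exp l) from by ring,
    ← Real.exp_add]
  simp

lemma poisson_var {Ω : Type} [MeasurableSpace Ω] (μ : Measure Ω) [IsProbabilityMeasure μ]
    (X : Ω → ℕ) (hX : Measurable X) (l a : ℝ) (hl : 0 ≤ l)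
    (hlaw : ∀ k : ℕ, μ {ω | X ω = k} = ENNReal.ofReal (Real.exp (-l) * l ^ k / k !)) :
    MemLp (fun ω => ((X ω : ℝ) - a) ^ 2 - X ω) 2 μ ∧
      variance (fun ω => ((X ω : ℝ) - a) ^ 2 - X ω) μ = 2*l^2 + 4*l*(l-a)^2 := by
  have D1 := poisson_desc_integral μ X hX l hl hlaw 1
  have D2 := poisson_desc_integral μ X hX l hl hlaw 2
  have D3 := poisson_desc_integral μ X hX l hl hlaw 3
  have D4 := poisson_desc_integral μ X hX l hl hlaw 4
  -- power moments
  have e1 : (fun ω => (Nat.descFactorial (X ω) 1 : ℝ)) = fun ω => (X ω : ℝ) := by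
    funext ω; rw [Nat.descFactorial_one]
  have P1 : Integrable (fun ω => (X ω : ℝ)) μ ∧ ∫ ω, (X ω : ℝ) ∂μ = l := by
    rw [← e1]; exact ⟨D1.1, by rw [D1.2]; ring⟩
  have e2 : (fun ω => ((X ω : ℝ))^2) = fun ω =>
      (Nat.descFactorial (X ω) 2 : ℝ) + (X ω : ℝ) := by
    funext ω; rw [cast_desc2]; ring
  have P2 : Integrable (fun ω => ((X ω : ℝ))^2) μ ∧ ∫ ω, ((X ω : ℝ))^2 ∂μ = l^2 + l := by
    rw [e2]
    exact ⟨D2.1.add P1.1, by rw [integral_add D2.1 P1.1, D2.2, P1.2]⟩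
  have e3 : (fun ω => ((X ω : ℝ))^3) = fun ω =>
      (Nat.descFactorial (X ω) 3 : ℝ) + (3*(Nat.descFactorial (X ω) 2 : ℝ) + (X ω : ℝ)) := by
    funext ω; rw [cast_desc3, cast_desc2]; ring
  have P3 : Integrable (fun ω => ((X ω : ℝ))^3) μ ∧
      ∫ ω, ((X ω : ℝ))^3 ∂μ = l^3 + 3*l^2 + l := by
    rw [e3]
    have i23 : Integrable (fun ω => 3*(Nat.descFactorial (X ω) 2 : ℝ) + (X ω : ℝ)) μ :=
      (D2.1.const_mul 3).add P1.1
    refine ⟨D3.1.add i23, ?_⟩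
    rw [integral_add D3.1 i23, integral_add (D2.1.const_mul 3) P1.1,
      integral_const_mul, D3.2, D2.2, P1.2]
    ring
  have e4 : (fun ω => ((X ω : ℝ))^4) = fun ω =>
      (Nat.descFactorial (X ω) 4 : ℝ) + (6*(Nat.descFactorial (X ω) 3 : ℝ) +
        (7*(Nat.descFactorial (X ω) 2 : ℝ) + (X ω : ℝ))) := by
    funext ω; rw [cast_desc4, cast_desc3, cast_desc2]; ring
  have P4 : Integrable (fun ω => ((X ω : ℝ))^4) μ ∧
      ∫ ω, ((X ω : ℝ))^4 ∂μ = l^4 + 6*l^3 + 7*l^2 + l := by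
    rw [e4]
    have i21 : Integrable (fun ω => 7*(Nat.descFactorial (X ω) 2 : ℝ) + (X ω : ℝ)) μ :=
      (D2.1.const_mul 7).add P1.1
    have i321 : Integrable (fun ω => 6*(Nat.descFactorial (X ω) 3 : ℝ) +
        (7*(Nat.descFactorial (X ω) 2 : ℝ) + (X ω : ℝ))) μ := (D3.1.const_mul 6).add i21
    refine ⟨D4.1.add i321, ?_⟩
    rw [integral_add D4.1 i321, integral_add (D3.1.const_mul 6) i21,
      integral_add (D2.1.const_mul 7) P1.1,
      integral_const_mul, integral_const_mul, D4.2, D3.2, D2.2, P1.2]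
    ring
  -- generic polynomial
  have poly : ∀ c4 c3 c2 c1 c0 : ℝ,
      Integrable (fun ω => c4*((X ω : ℝ))^4 + (c3*((X ω : ℝ))^3 +
        (c2*((X ω : ℝ))^2 + (c1*(X ω : ℝ) + c0)))) μ ∧
      ∫ ω, (c4*((X ω : ℝ))^4 + (c3*((X ω : ℝ))^3 +
        (c2*((X ω : ℝ))^2 + (c1*(X ω : ℝ) + c0)))) ∂μ
        = c4*(l^4 + 6*l^3 + 7*l^2 + l) + (c3*(l^3 + 3*l^2 + l) + (c2*(l^2 + l) + (c1*l + c0))) := by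
    intro c4 c3 c2 c1 c0
    have i0 : Integrable (fun _ : Ω => c0) μ := integrable_const c0
    have i1 := P1.1.const_mul c1
    have i2 := P2.1.const_mul c2
    have i3 := P3.1.const_mul c3
    have i4 := P4.1.const_mul c4
    have i10 : Integrable (fun ω => c1*(X ω : ℝ) + c0) μ := i1.add i0
    have i210 : Integrable (fun ω => c2*((X ω : ℝ))^2 + (c1*(X ω : ℝ) + c0)) μ := i2.add i10
    have i3210 : Integrable (fun ω => c3*((X ω : ℝ))^3 +
        (c2*((X ω : ℝ))^2 + (c1*(X ω : ℝ) + c0))) μ := i3.add i210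
    refine ⟨i4.add i3210, ?_⟩
    rw [integral_add i4 i3210, integral_add i3 i210, integral_add i2 i10, integral_add i1 i0,
      integral_const_mul, integral_const_mul, integral_const_mul, integral_const_mul,
      integral_const, P1.2, P2.2, P3.2, P4.2]
    simp
  set Z : Ω → ℝ := fun ω => ((X ω : ℝ) - a) ^ 2 - X ω with hZdef
  have hZeq : Z = fun ω => 0*((X ω : ℝ))^4 + (0*((X ω : ℝ))^3 +
      (1*((X ω : ℝ))^2 + ((-(2*a+1))*(X ω : ℝ) + a^2))) := by
    funext ω; simp only [hZdef]; ring
  have hZ2eq : (fun ω => (Z ω)^2) = fun ω => 1*((X ω : ℝ))^4 + ((-(4*a+2))*((X ω : ℝ))^3 +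
      ((6*a^2+4*a+1)*((X ω : ℝ))^2 + ((-(4*a^3+2*a^2))*(X ω : ℝ) + a^4))) := by
    funext ω; simp only [hZdef]; ring
  have hZmeas : AEStronglyMeasurable Z μ := by
    have : Measurable Z :=
      (measurable_from_top (f := fun k : ℕ => ((k : ℝ) - a) ^ 2 - k)).comp hX
    exact this.aestronglyMeasurable
  have hZ2int : Integrable (fun ω => (Z ω)^2) μ := by
    rw [hZ2eq]; exact (poly _ _ _ _ _).1
  have hmem : MemLp Z 2 μ := by
    rw [memLp_two_iff_integrable_sq hZmeas]
    exact hZ2int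
  refine ⟨hmem, ?_⟩
  rw [variance_eq_sub hmem]
  have hI2 : ∫ ω, (Z ^ 2) ω ∂μ = 1*(l^4 + 6*l^3 + 7*l^2 + l) + ((-(4*a+2))*(l^3 + 3*l^2 + l) +
      ((6*a^2+4*a+1)*(l^2 + l) + ((-(4*a^3+2*a^2))*l + a^4))) := by
    have : (fun ω => (Z ^ 2) ω) = fun ω => (Z ω)^2 := by funext ω; simp [Pi.pow_apply]
    rw [show (∫ ω, (Z ^ 2) ω ∂μ) = ∫ ω, (Z ω)^2 ∂μ from by rw [this]]
    rw [hZ2eq]; exact (poly _ _ _ _ _).2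
  have hI1 : ∫ ω, Z ω ∂μ = 0*(l^4 + 6*l^3 + 7*l^2 + l) + (0*(l^3 + 3*l^2 + l) +
      (1*(l^2 + l) + ((-(2*a+1))*l + a^2))) := by
    rw [show (∫ ω, Z ω ∂μ) = ∫ ω, (0*((X ω : ℝ))^4 + (0*((X ω : ℝ))^3 +
      (1*((X ω : ℝ))^2 + ((-(2*a+1))*(X ω : ℝ) + a^2)))) ∂μ from by rw [← hZeq]]
    exact (poly _ _ _ _ _).2
  rw [hI2, hI1]
  ring

/-- Lemma 4.3: the variance bound for the identity-testing statistic under Poissonization.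
With `T x ~ Poisson(λ_x)` independent, `λ_x = Σ_j p_j(x)`, and
`Z = Σ_x ((T_x − s·q(x))² − T_x)`, one has
`Var(Z) ≤ 4s·‖q‖₂·‖Σ_j e⃗_j‖₄² + 2·‖Σ_j p⃗_j‖₂² + 4·‖Σ_j e⃗_j‖₃³`,
where `‖q‖₂ = √(Σ_x q(x)²)`, `‖v‖₄² = √(Σ_x v(x)⁴)`, and `‖v‖₃³ = Σ_x v(x)³`. -/
theorem identity_statistic_variance_bound
    (n s : ℕ) (hn : 1 ≤ n) (hs : 1 ≤ s)
    (q : Fin n → ℝ) (hq : IsDist q)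
    (p : Fin s → Fin n → ℝ) (hp : ∀ j, IsDist (p j))
    (hstruct : StructCond p q)
    (Ω : Type) [MeasurableSpace Ω] (μ : Measure Ω) [IsProbabilityMeasure μ]
    (T : Fin n → Ω → ℕ)
    (hmeas : ∀ x, Measurable (T x))
    (hindep : iIndepFun T μ)
    (hlaw : ∀ (x : Fin n) (k : ℕ), μ {ω | T x ω = k}
      = ENNReal.ofReal (Real.exp (-(∑ j, p j x)) * (∑ j, p j x) ^ k / (Nat.factorial k))) :
    variance (fun ω => ∑ x, (((T x ω : ℝ) - s * q x) ^ 2 - T x ω)) μ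
      ≤ 4 * s * Real.sqrt (∑ x, q x ^ 2)
            * Real.sqrt (∑ x, (∑ j, |q x - p j x|) ^ 4)
        + 2 * ∑ x, (∑ j, p j x) ^ 2
        + 4 * ∑ x, (∑ j, |q x - p j x|) ^ 3 := by
  classical
  set l : Fin n → ℝ := fun x => ∑ j, p j x with hldef
  have hl : ∀ x, 0 ≤ l x := fun x => Finset.sum_nonneg fun j _ => (hp j).1 x
  set g : Fin n → ℕ → ℝ := fun x k => ((k : ℝ) - s * q x) ^ 2 - k with hgdef
  set Z : Fin n → Ω → ℝ := fun x => g x ∘ T x with hZdef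
  have hZx : ∀ x, MemLp (Z x) 2 μ ∧
      variance (Z x) μ = 2*(l x)^2 + 4*(l x)*(l x - s * q x)^2 :=
    fun x => poisson_var μ (T x) (hmeas x) (l x) (s * q x) (hl x) (hlaw x)
  have hZindep : iIndepFun Z μ :=
    hindep.comp g (fun x => measurable_from_top)
  have hvarsum : variance (∑ x, Z x) μ = ∑ x, variance (Z x) μ :=
    IndepFun.variance_sum (fun x _ => (hZx x).1)
      (fun i _ j _ hij => hZindep.indepFun hij)
  have hfun : (fun ω => ∑ x, (((T x ω : ℝ) - s * q x) ^ 2 - T x ω)) = ∑ x, Z x := by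
    funext ω; rw [Finset.sum_apply]; rfl
  rw [hfun, hvarsum, Finset.sum_congr rfl (fun x _ => (hZx x).2)]
  -- inequality part
  set e : Fin n → ℝ := fun x => ∑ j, |q x - p j x| with hedef
  have he : ∀ x, 0 ≤ e x := fun x => Finset.sum_nonneg fun j _ => abs_nonneg _
  have habs : ∀ x, |l x - s * q x| ≤ e x := by
    intro x
    have h1 : l x - s * q x = ∑ j, (p j x - q x) := by
      rw [Finset.sum_sub_distrib, Finset.sum_const, Finset.card_univ, Fintype.card_fin]
      push_cast; ring
    rw [h1]
    calc |∑ j, (p j x - q x)| ≤ ∑ j, |p j x - q x| := Finset.abs_sum_le_sum_abs _ _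
      _ = e x := by simp only [hedef, abs_sub_comm]
  have hterm : ∀ x ∈ Finset.univ, 2*(l x)^2 + 4*(l x)*(l x - s * q x)^2
      ≤ 2*(l x)^2 + 4*((s : ℝ) * q x * (e x)^2 + (e x)^3) := by
    intro x _
    obtain ⟨ha1, ha2⟩ := abs_le.1 (habs x)
    have hΔ : (l x - s * q x)^2 ≤ (e x)^2 := sq_le_sq' ha1 ha2
    have hle : l x ≤ s * q x + e x := by linarith
    have h2 : l x * (l x - s * q x)^2 ≤ (s * q x + e x) * (e x)^2 :=
      le_trans (mul_le_mul_of_nonneg_left hΔ (hl x))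
        (mul_le_mul_of_nonneg_right hle (sq_nonneg _))
    nlinarith [h2]
  refine le_trans (Finset.sum_le_sum hterm) ?_
  have hsplit : ∑ x, (2*(l x)^2 + 4*((s : ℝ) * q x * (e x)^2 + (e x)^3))
      = 4 * s * ∑ x, q x * (e x)^2 + 2 * ∑ x, (l x)^2 + 4 * ∑ x, (e x)^3 := by
    have h1 : ∀ x : Fin n, 2*(l x)^2 + 4*((s : ℝ) * q x * (e x)^2 + (e x)^3)
        = 2*(l x)^2 + ((4*(s : ℝ))*(q x*(e x)^2) + 4*(e x)^3) := fun x => by ring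
    simp only [h1]
    rw [Finset.sum_add_distrib, Finset.sum_add_distrib, ← Finset.mul_sum, ← Finset.mul_sum,
      ← Finset.mul_sum]
    ring
  rw [hsplit]
  have hCS : ∑ x, q x * (e x)^2 ≤ Real.sqrt (∑ x, q x ^ 2) * Real.sqrt (∑ x, (e x) ^ 4) := by
    have h := Finset.sum_mul_sq_le_sq_mul_sq Finset.univ q (fun x => (e x)^2)
    have h4 : ∑ x, ((e x)^2)^2 = ∑ x, (e x)^4 := by
      apply Finset.sum_congr rfl; intro x _; ring
    rw [h4] at h
    have hnn : 0 ≤ ∑ x, q x * (e x)^2 :=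
      Finset.sum_nonneg fun x _ => mul_nonneg (hq.1 x) (sq_nonneg _)
    calc ∑ x, q x * (e x)^2 = Real.sqrt ((∑ x, q x * (e x)^2)^2) := (Real.sqrt_sq hnn).symm
      _ ≤ Real.sqrt ((∑ x, q x ^ 2) * ∑ x, (e x)^4) := Real.sqrt_le_sqrt h
      _ = Real.sqrt (∑ x, q x ^ 2) * Real.sqrt (∑ x, (e x) ^ 4) := Real.sqrt_mul
          (Finset.sum_nonneg fun x _ => sq_nonneg _) _
  have hs0 : (0:ℝ) ≤ 4 * s := by positivity
  nlinarith [mul_le_mul_of_nonneg_left hCS hs0]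
end

section
/- Let n, s ≥ 1 be integers, let q be a distribution over [n], and let p₁,…,p_s be distributions over [n] satisfying the structural condition with respect to q. For each x ∈ [n] let λ_x = Σ_{j=1}^s p_j(x), and let (T_x)_{x∈[n]} and (Y_x)_{x∈[n]} be mutually independent random variables with T_x distributed Poisson(λ_x) and Y_x distributed Poisson(s·q(x)). Define Z = Σ_{x∈[n]} ((T_x − Y_x)² − T_x − Y_x). Then E[Z] = ‖e⃗₁ + ⋯ + e⃗_s‖₂², where e⃗_j ∈ ℝⁿ is the vector whose x-th coordinate is |q(x) − p_j(x)|. -/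
open MeasureTheory ProbabilityTheory Finset

lemma exp_hasSum (l : ℝ) : HasSum (fun k : ℕ => l ^ k / k.factorial) (Real.exp l) := by
  rw [Real.exp_eq_exp_ℝ]
  exact NormedSpace.expSeries_div_hasSum_exp l

lemma pois_hasSum_one (l : ℝ) :
    HasSum (fun k : ℕ => Real.exp (-l) * l ^ k / k.factorial) 1 := by
  have h := (exp_hasSum l).mul_left (Real.exp (-l))
  simp only [← mul_div_assoc] at h
  simpa [← Real.exp_add] using h

lemma pois_hasSum_id (l : ℝ) :
    HasSum (fun k : ℕ => (k : ℝ) * (Real.exp (-l) * l ^ k / k.factorial)) l := by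
  have h := (pois_hasSum_one l).mul_left l
  rw [mul_one] at h
  have heq : (fun k : ℕ => ((k+1 : ℕ) : ℝ) * (Real.exp (-l) * l ^ (k+1) / (k+1).factorial))
      = fun k : ℕ => l * (Real.exp (-l) * l ^ k / k.factorial) := by
    funext k
    have hk : ((k+1).factorial : ℝ) = (k+1) * k.factorial := by
      push_cast [Nat.factorial_succ]; ring
    have h1 : (k.factorial : ℝ) ≠ 0 := Nat.cast_ne_zero.2 k.factorial_ne_zero
    have h2 : ((k:ℝ)+1) ≠ 0 := by positivity
    rw [hk]; push_cast; field_simp; ring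
  have h2 : HasSum (fun k : ℕ => ((k+1 : ℕ) : ℝ) * (Real.exp (-l) * l ^ (k+1) / (k+1).factorial)) l := by
    rw [heq]; exact h
  have h3 := (hasSum_nat_add_iff (f := fun k : ℕ => (k : ℝ) * (Real.exp (-l) * l ^ k / k.factorial)) 1).mp h2
  simpa using h3

lemma pois_hasSum_sq (l : ℝ) :
    HasSum (fun k : ℕ => ((k : ℝ))^2 * (Real.exp (-l) * l ^ k / k.factorial)) (l + l^2) := by
  have hmm : HasSum (fun k : ℕ => (k : ℝ) * ((k:ℝ) - 1) * (Real.exp (-l) * l ^ k / k.factorial)) (l^2) := by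
    have h := (pois_hasSum_one l).mul_left (l^2)
    rw [mul_one] at h
    have heq : (fun k : ℕ => ((k+2 : ℕ) : ℝ) * (((k+2 : ℕ):ℝ) - 1) * (Real.exp (-l) * l ^ (k+2) / (k+2).factorial))
        = fun k : ℕ => l^2 * (Real.exp (-l) * l ^ k / k.factorial) := by
      funext k
      have hk : ((k+2).factorial : ℝ) = ((k:ℝ)+2) * ((k:ℝ)+1) * k.factorial := by
        rw [Nat.factorial_succ, Nat.factorial_succ]; push_cast; ring
      have h1 : (k.factorial : ℝ) ≠ 0 := Nat.cast_ne_zero.2 k.factorial_ne_zero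
      have h2 : ((k:ℝ)+1) ≠ 0 := by positivity
      have h3 : ((k:ℝ)+2) ≠ 0 := by positivity
      rw [hk]; push_cast; field_simp; ring
    have h2 : HasSum (fun k : ℕ => ((k+2 : ℕ) : ℝ) * (((k+2:ℕ):ℝ) - 1) * (Real.exp (-l) * l ^ (k+2) / (k+2).factorial)) (l^2) := by
      rw [heq]; exact h
    have h3 := (hasSum_nat_add_iff (f := fun k : ℕ => (k : ℝ) * ((k:ℝ)-1) * (Real.exp (-l) * l ^ k / k.factorial)) 2).mp h2
    simpa [Finset.sum_range_succ] using h3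
  have := hmm.add (pois_hasSum_id l)
  have heq : (fun k : ℕ => (k : ℝ) * ((k:ℝ) - 1) * (Real.exp (-l) * l ^ k / k.factorial)
      + (k : ℝ) * (Real.exp (-l) * l ^ k / k.factorial))
      = fun k : ℕ => ((k : ℝ))^2 * (Real.exp (-l) * l ^ k / k.factorial) := by
    funext k; ring
  rw [heq] at this
  convert this using 1; ring

lemma poisson_transfer {Ω : Type} [MeasurableSpace Ω] (μ : Measure Ω) [IsProbabilityMeasure μ]
    (X : Ω → ℕ) (hX : Measurable X) (l : ℝ) (hl : 0 ≤ l)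
    (hlaw : ∀ k : ℕ, μ {ω | X ω = k} = ENNReal.ofReal (Real.exp (-l) * l ^ k / k.factorial))
    (f : ℕ → ℝ) (hf : ∀ k, 0 ≤ f k) (S : ℝ)
    (hS : HasSum (fun k => f k * (Real.exp (-l) * l ^ k / k.factorial)) S) :
    Integrable (fun ω => f (X ω)) μ ∧ ∫ ω, f (X ω) ∂μ = S := by
  set ν : Measure ℕ := μ.map X with hν
  have hmeasf : Measurable f := measurable_from_top
  have hνk : ∀ k : ℕ, ν {k} = ENNReal.ofReal (Real.exp (-l) * l ^ k / k.factorial) := by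
    intro k
    rw [hν, Measure.map_apply hX (measurableSet_singleton k)]
    exact hlaw k
  have hpois : ∀ k : ℕ, 0 ≤ Real.exp (-l) * l ^ k / k.factorial := by
    intro k; positivity
  have hterm : ∀ k : ℕ, ‖f k‖ₑ * ν {k}
      = ENNReal.ofReal (f k * (Real.exp (-l) * l ^ k / k.factorial)) := by
    intro k
    rw [hνk k, Real.enorm_eq_ofReal (hf k), ← ENNReal.ofReal_mul (hf k)]
  have hintν : Integrable f ν := by
    refine ⟨hmeasf.aestronglyMeasurable, ?_⟩
    rw [HasFiniteIntegral, lintegral_countable']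
    have : ∑' k : ℕ, ‖f k‖ₑ * ν {k} = ENNReal.ofReal S := by
      rw [tsum_congr hterm, ← ENNReal.ofReal_tsum_of_nonneg
        (fun k => mul_nonneg (hf k) (hpois k)) hS.summable, hS.tsum_eq]
    rw [this]
    exact ENNReal.ofReal_lt_top
  have hint : Integrable (fun ω => f (X ω)) μ := by
    rw [← Function.comp_def]
    exact (integrable_map_measure hmeasf.aestronglyMeasurable hX.aemeasurable).mp hintν
  refine ⟨hint, ?_⟩
  have hS' : HasSum (fun k => (ν {k}).toReal • f k) S := by
    convert hS using 2 with k
    rw [hνk k, ENNReal.toReal_ofReal (hpois k), smul_eq_mul, mul_comm]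
  rw [← integral_map hX.aemeasurable hmeasf.aestronglyMeasurable, ← hν,
    integral_countable' hintν]
  exact hS'.tsum_eq

lemma poisson_pair {Ω : Type} [MeasurableSpace Ω] (μ : Measure Ω) [IsProbabilityMeasure μ]
    (Tx Yx : Ω → ℕ) (hT : Measurable Tx) (hY : Measurable Yx)
    (a b : ℝ) (ha : 0 ≤ a) (hb : 0 ≤ b)
    (hind : IndepFun Tx Yx μ)
    (hTlaw : ∀ k : ℕ, μ {ω | Tx ω = k} = ENNReal.ofReal (Real.exp (-a) * a ^ k / k.factorial))
    (hYlaw : ∀ k : ℕ, μ {ω | Yx ω = k} = ENNReal.ofReal (Real.exp (-b) * b ^ k / k.factorial)) :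
    Integrable (fun ω => ((Tx ω : ℝ) - Yx ω) ^ 2 - Tx ω - Yx ω) μ ∧
      ∫ ω, (((Tx ω : ℝ) - Yx ω) ^ 2 - Tx ω - Yx ω) ∂μ = (a - b) ^ 2 := by
  have hT1 := poisson_transfer μ Tx hT a ha hTlaw (fun k => (k : ℝ))
    (fun k => Nat.cast_nonneg k) a (pois_hasSum_id a)
  have hT2 := poisson_transfer μ Tx hT a ha hTlaw (fun k => ((k : ℝ)) ^ 2)
    (fun k => sq_nonneg _) (a + a ^ 2) (pois_hasSum_sq a)
  have hY1 := poisson_transfer μ Yx hY b hb hYlaw (fun k => (k : ℝ))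
    (fun k => Nat.cast_nonneg k) b (pois_hasSum_id b)
  have hY2 := poisson_transfer μ Yx hY b hb hYlaw (fun k => ((k : ℝ)) ^ 2)
    (fun k => sq_nonneg _) (b + b ^ 2) (pois_hasSum_sq b)
  have hindR : IndepFun (fun ω => (Tx ω : ℝ)) (fun ω => (Yx ω : ℝ)) μ :=
    hind.comp (measurable_from_top (f := fun k : ℕ => (k : ℝ)))
      (measurable_from_top (f := fun k : ℕ => (k : ℝ)))
  have hT1i : Integrable (fun ω => (Tx ω : ℝ)) μ := hT1.1
  have hT2i : Integrable (fun ω => (Tx ω : ℝ) ^ 2) μ := hT2.1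
  have hY1i : Integrable (fun ω => (Yx ω : ℝ)) μ := hY1.1
  have hY2i : Integrable (fun ω => (Yx ω : ℝ) ^ 2) μ := hY2.1
  have hT1v : ∫ ω, (Tx ω : ℝ) ∂μ = a := hT1.2
  have hT2v : ∫ ω, (Tx ω : ℝ) ^ 2 ∂μ = a + a ^ 2 := hT2.2
  have hY1v : ∫ ω, (Yx ω : ℝ) ∂μ = b := hY1.2
  have hY2v : ∫ ω, (Yx ω : ℝ) ^ 2 ∂μ = b + b ^ 2 := hY2.2
  have hprodInt : Integrable (fun ω => (Tx ω : ℝ) * (Yx ω : ℝ)) μ := by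
    have := hindR.integrable_mul hT1i hY1i
    simpa [Pi.mul_def] using this
  have hprodVal : ∫ ω, (Tx ω : ℝ) * (Yx ω : ℝ) ∂μ = a * b := by
    have := hindR.integral_mul_eq_mul_integral
      (((measurable_from_top (f := fun k : ℕ => (k : ℝ))).comp hT).aestronglyMeasurable)
      (((measurable_from_top (f := fun k : ℕ => (k : ℝ))).comp hY).aestronglyMeasurable)
    simpa [Pi.mul_def, hT1v, hY1v] using this
  have I2 : Integrable (fun ω => (Tx ω : ℝ) ^ 2 + (Yx ω : ℝ) ^ 2) μ := hT2i.add hY2i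
  have Ip2 : Integrable (fun ω => 2 * ((Tx ω : ℝ) * (Yx ω : ℝ))) μ := hprodInt.const_mul 2
  have I3 : Integrable (fun ω => (Tx ω : ℝ) ^ 2 + (Yx ω : ℝ) ^ 2
      - 2 * ((Tx ω : ℝ) * (Yx ω : ℝ))) μ := I2.sub Ip2
  have I4 : Integrable (fun ω => (Tx ω : ℝ) ^ 2 + (Yx ω : ℝ) ^ 2
      - 2 * ((Tx ω : ℝ) * (Yx ω : ℝ)) - (Tx ω : ℝ)) μ := I3.sub hT1i
  have heq2 : (fun ω => ((Tx ω : ℝ) - Yx ω) ^ 2 - Tx ω - Yx ω)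
      = fun ω => ((Tx ω : ℝ) ^ 2 + (Yx ω : ℝ) ^ 2 - 2 * ((Tx ω : ℝ) * (Yx ω : ℝ))
          - (Tx ω : ℝ) - (Yx ω : ℝ)) := by
    funext ω; ring
  have hint : Integrable (fun ω => ((Tx ω : ℝ) - Yx ω) ^ 2 - Tx ω - Yx ω) μ := by
    rw [heq2]; exact I4.sub hY1i
  refine ⟨hint, ?_⟩
  rw [heq2, integral_sub I4 hY1i, integral_sub I3 hT1i, integral_sub I2 Ip2,
    integral_add hT2i hY2i, integral_const_mul, hprodVal, hT1v, hT2v, hY1v, hY2v]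
  ring

/-- Lemma 5.2: the expectation of the χ²-type closeness-testing statistic under
Poissonization. With `T x ~ Poisson(λ_x)` and `Y x ~ Poisson(s·q(x))` all mutually
independent, `λ_x = Σ_j p_j(x)`, and `Z = Σ_x ((T_x − Y_x)² − T_x − Y_x)`, one has
`E[Z] = ‖e⃗₁ + ⋯ + e⃗_s‖₂²` where the `x`-th coordinate of `e⃗_j` is `|q(x) − p_j(x)|`. -/
theorem closeness_statistic_expectation
    (n s : ℕ) (hn : 1 ≤ n) (hs : 1 ≤ s)
    (q : Fin n → ℝ) (hq : IsDist q)
    (p : Fin s → Fin n → ℝ) (hp : ∀ j, IsDist (p j))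
    (hstruct : StructCond p q)
    (Ω : Type) [MeasurableSpace Ω] (μ : Measure Ω) [IsProbabilityMeasure μ]
    (T : Fin n → Ω → ℕ) (Y : Fin n → Ω → ℕ)
    (hTmeas : ∀ x, Measurable (T x)) (hYmeas : ∀ x, Measurable (Y x))
    (hindep : iIndepFun (Sum.elim T Y) μ)
    (hTlaw : ∀ (x : Fin n) (k : ℕ), μ {ω | T x ω = k}
      = ENNReal.ofReal (Real.exp (-(∑ j, p j x)) * (∑ j, p j x) ^ k / (Nat.factorial k)))
    (hYlaw : ∀ (x : Fin n) (k : ℕ), μ {ω | Y x ω = k}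
      = ENNReal.ofReal (Real.exp (-(s * q x)) * (s * q x) ^ k / (Nat.factorial k))) :
    ∫ ω, (∑ x, (((T x ω : ℝ) - Y x ω) ^ 2 - T x ω - Y x ω)) ∂μ
      = ∑ x, (∑ j, |q x - p j x|) ^ 2 := by
  obtain ⟨A, hA, hB⟩ := hstruct
  have hpair : ∀ x : Fin n,
      Integrable (fun ω => ((T x ω : ℝ) - Y x ω) ^ 2 - T x ω - Y x ω) μ ∧
      ∫ ω, (((T x ω : ℝ) - Y x ω) ^ 2 - T x ω - Y x ω) ∂μ
        = ((∑ j, p j x) - (s : ℝ) * q x) ^ 2 := by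
    intro x
    have ha : (0:ℝ) ≤ ∑ j, p j x := Finset.sum_nonneg fun j _ => (hp j).1 x
    have hb : (0:ℝ) ≤ (s : ℝ) * q x := mul_nonneg (by positivity) (hq.1 x)
    have hind : IndepFun (T x) (Y x) μ :=
      hindep.indepFun (show (Sum.inl x : Fin n ⊕ Fin n) ≠ Sum.inr x by simp)
    exact poisson_pair μ (T x) (Y x) (hTmeas x) (hYmeas x) (∑ j, p j x) ((s : ℝ) * q x)
      ha hb hind (hTlaw x) (hYlaw x)
  rw [integral_finset_sum univ (fun x _ => (hpair x).1)]
  refine Finset.sum_congr rfl fun x _ => ?_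
  rw [(hpair x).2]
  by_cases hx : x ∈ A
  · have habs : ∀ j ∈ (univ : Finset (Fin s)), |q x - p j x| = p j x - q x := by
      intro j _
      rw [abs_of_nonpos (sub_nonpos.2 (hA j x hx))]; ring
    rw [Finset.sum_congr rfl habs, Finset.sum_sub_distrib, Finset.sum_const, card_univ,
      Fintype.card_fin, nsmul_eq_mul]
  · have habs : ∀ j ∈ (univ : Finset (Fin s)), |q x - p j x| = q x - p j x := by
      intro j _
      exact abs_of_nonneg (sub_nonneg.2 (hB j x hx))
    rw [Finset.sum_congr rfl habs, Finset.sum_sub_distrib, Finset.sum_const, card_univ,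
      Fintype.card_fin, nsmul_eq_mul]
    ring
end

section
/- There exists an absolute constant c₁ > 0 such that the following holds for every integer n ≥ 1, every ε ∈ (0,1), and every distribution q over [n]: if s is an integer with s ≥ c₁·n·‖q‖₂/ε², and (T_x)_{x∈[n]} and (Y_x)_{x∈[n]} are mutually independent random variables with both T_x and Y_x distributed Poisson(s·q(x)), and Z = Σ_{x∈[n]} ((T_x − Y_x)² − T_x − Y_x), then Pr[Z ≥ 5s²ε²/(8n)] ≤ 1/3. -/
open MeasureTheory ProbabilityTheory Finset

open scoped ENNReal NNReal

namespace ClosenessAux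

noncomputable def ppmf (lam : ℝ) (k : ℕ) : ℝ := Real.exp (-lam) * lam ^ k / (Nat.factorial k)

lemma ppmf_nonneg {lam : ℝ} (h : 0 ≤ lam) (k : ℕ) : 0 ≤ ppmf lam k := by
  unfold ppmf; positivity

lemma hasSum_desc {lam : ℝ} (h : 0 ≤ lam) (j : ℕ) :
    HasSum (fun k : ℕ => (k.descFactorial j : ℝ) * ppmf lam k) (lam ^ j) := by
  have h1 : HasSum (fun m : ℕ => lam ^ m / (Nat.factorial m)) (Real.exp lam) := by
    rw [Real.exp_eq_exp_ℝ]
    exact NormedSpace.expSeries_div_hasSum_exp lam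
  have h2 := h1.mul_left (Real.exp (-lam) * lam ^ j)
  have key : (fun m : ℕ => Real.exp (-lam) * lam ^ j * (lam ^ m / (Nat.factorial m)))
      = (fun k : ℕ => (k.descFactorial j : ℝ) * ppmf lam k) ∘ (fun m => m + j) := by
    funext m
    have hfac := Nat.factorial_mul_descFactorial (n := m + j) (k := j) (Nat.le_add_left j m)
    rw [Nat.add_sub_cancel] at hfac
    have hfacR : (Nat.factorial m : ℝ) * ((m + j).descFactorial j : ℝ)
        = ((m + j).factorial : ℝ) := by exact_mod_cast congrArg Nat.cast hfac
    have hm : (Nat.factorial m : ℝ) ≠ 0 := by positivity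
    have hmj : ((m + j).factorial : ℝ) ≠ 0 := by positivity
    simp only [Function.comp, ppmf]
    rw [pow_add]
    field_simp
    rw [← hfacR]; ring
  rw [key] at h2
  have hinj : Function.Injective (fun m : ℕ => m + j) := add_left_injective j
  have hrange : ∀ k ∉ Set.range (fun m : ℕ => m + j),
      (k.descFactorial j : ℝ) * ppmf lam k = 0 := by
    intro k hk
    have : k < j := by
      by_contra hge
      push_neg at hge
      exact hk ⟨k - j, by simpa using Nat.sub_add_cancel hge⟩
    rw [Nat.descFactorial_of_lt this]
    simp
  have h3 := (hinj.hasSum_iff hrange).mp h2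
  have hval : Real.exp (-lam) * lam ^ j * Real.exp lam = lam ^ j := by
    rw [Real.exp_neg]; field_simp
  rwa [hval] at h3


lemma df1 (k : ℕ) : ((k.descFactorial 1 : ℕ) : ℝ) = k := by simp

lemma df2 (k : ℕ) : ((k.descFactorial 2 : ℕ) : ℝ) = k * (k - 1) := by
  rcases k with _ | k
  · simp [Nat.descFactorial]
  · simp only [Nat.descFactorial_succ, Nat.descFactorial_zero, Nat.succ_sub_one, mul_one,
      Nat.succ_sub_succ, Nat.sub_zero]
    push_cast; ring

lemma df3 (k : ℕ) : ((k.descFactorial 3 : ℕ) : ℝ) = k * (k - 1) * (k - 2) := by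
  rcases k with _ | _ | k
  · simp [Nat.descFactorial]
  · norm_num [Nat.descFactorial]
  · simp only [Nat.descFactorial_succ, Nat.descFactorial_zero, mul_one,
      Nat.succ_sub_succ, Nat.sub_zero, Nat.succ_sub_one]
    push_cast; ring

lemma df4 (k : ℕ) : ((k.descFactorial 4 : ℕ) : ℝ) = k * (k - 1) * (k - 2) * (k - 3) := by
  rcases k with _ | _ | _ | k
  · simp [Nat.descFactorial]
  · norm_num [Nat.descFactorial]
  · norm_num [Nat.descFactorial]
  · simp only [Nat.descFactorial_succ, Nat.descFactorial_zero, mul_one,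
      Nat.succ_sub_succ, Nat.sub_zero, Nat.succ_sub_one]
    push_cast; ring

variable {Ω : Type} [MeasurableSpace Ω] {μ : Measure Ω} [IsProbabilityMeasure μ]

lemma integral_comp {N : Ω → ℕ} (hN : Measurable N) {lam : ℝ} (hlam : 0 ≤ lam)
    (hpmf : ∀ k, μ {ω | N ω = k} = ENNReal.ofReal (ppmf lam k))
    {g : ℕ → ℝ} (hg : ∀ k, 0 ≤ g k) {S : ℝ}
    (hgs : HasSum (fun k => g k * ppmf lam k) S) :
    Integrable (fun ω => g (N ω)) μ ∧ ∫ ω, g (N ω) ∂μ = S := by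
  have hgm : Measurable g := measurable_from_top
  set ν : Measure ℕ := μ.map N with hν
  have hνk : ∀ k, ν {k} = ENNReal.ofReal (ppmf lam k) := by
    intro k
    rw [hν, Measure.map_apply hN (measurableSet_singleton k)]
    exact hpmf k
  have hterm : ∀ k : ℕ, (‖g k‖₊ : ℝ≥0∞) * ν {k} = ENNReal.ofReal (g k * ppmf lam k) := by
    intro k
    rw [hνk k, show (‖g k‖₊ : ℝ≥0∞) = ENNReal.ofReal (g k) from Real.enorm_eq_ofReal (hg k), ← ENNReal.ofReal_mul (hg k)]
  have hint : Integrable g ν := by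
    refine ⟨hgm.aestronglyMeasurable, ?_⟩
    rw [HasFiniteIntegral]
    calc ∫⁻ k, (‖g k‖₊ : ℝ≥0∞) ∂ν = ∑' k, (‖g k‖₊ : ℝ≥0∞) * ν {k} := lintegral_countable' _
    _ = ∑' k, ENNReal.ofReal (g k * ppmf lam k) := by simp_rw [hterm]
    _ = ENNReal.ofReal S := by
        rw [← ENNReal.ofReal_tsum_of_nonneg (fun k => mul_nonneg (hg k) (ppmf_nonneg hlam k))
          hgs.summable, hgs.tsum_eq]
    _ < ⊤ := ENNReal.ofReal_lt_top
  have hintc : Integrable (fun ω => g (N ω)) μ :=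
    (integrable_map_measure hgm.aestronglyMeasurable hN.aemeasurable).mp hint
  refine ⟨hintc, ?_⟩
  rw [← integral_map hN.aemeasurable hgm.aestronglyMeasurable, integral_countable' hint]
  have : ∀ k : ℕ, ν.real {k} • g k = g k * ppmf lam k := by
    intro k
    rw [measureReal_def, hνk k, ENNReal.toReal_ofReal (ppmf_nonneg hlam k), smul_eq_mul, mul_comm]
  simp_rw [this]
  exact hgs.tsum_eq


lemma knn (k : ℕ) : 0 ≤ (k : ℝ) * ((k : ℝ) - 1) := by
  rcases Nat.eq_zero_or_pos k with h | h
  · simp [h]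
  · have : (1 : ℝ) ≤ k := by exact_mod_cast h
    have : (0:ℝ) ≤ k := k.cast_nonneg
    nlinarith

section Moments

variable {N : Ω → ℕ} (hN : Measurable N) {lam : ℝ} (hlam : 0 ≤ lam)
  (hpmf : ∀ k, μ {ω | N ω = k} = ENNReal.ofReal (ppmf lam k))

include hN hlam hpmf

lemma mom1 : Integrable (fun ω => (N ω : ℝ)) μ ∧ ∫ ω, (N ω : ℝ) ∂μ = lam := by
  have hs : HasSum (fun k : ℕ => (k : ℝ) * ppmf lam k) lam := by
    have h := hasSum_desc (h := hlam) 1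
    rw [pow_one] at h
    convert h using 1
    funext k; rw [df1]
  exact integral_comp hN hlam hpmf (fun k => k.cast_nonneg) hs

lemma mom2 : Integrable (fun ω => (N ω : ℝ) ^ 2) μ ∧
    ∫ ω, (N ω : ℝ) ^ 2 ∂μ = lam ^ 2 + lam := by
  have hs : HasSum (fun k : ℕ => (k : ℝ) ^ 2 * ppmf lam k) (lam ^ 2 + lam) := by
    have h := (hasSum_desc (h := hlam) 2).add (hasSum_desc (h := hlam) 1)
    rw [pow_one] at h
    convert h using 1
    funext k; rw [df2, df1]; ring
  exact integral_comp hN hlam hpmf (fun k => sq_nonneg _) hs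

lemma momA : Integrable (fun ω => (N ω : ℝ) * ((N ω : ℝ) - 1)) μ ∧
    ∫ ω, (N ω : ℝ) * ((N ω : ℝ) - 1) ∂μ = lam ^ 2 := by
  have hs : HasSum (fun k : ℕ => ((k : ℝ) * ((k : ℝ) - 1)) * ppmf lam k) (lam ^ 2) := by
    have h := hasSum_desc (h := hlam) 2
    convert h using 1
    funext k; rw [df2]
  exact integral_comp hN hlam hpmf (fun k => knn k) hs

lemma momAT : Integrable (fun ω => (N ω : ℝ) * ((N ω : ℝ) - 1) * (N ω : ℝ)) μ ∧
    ∫ ω, (N ω : ℝ) * ((N ω : ℝ) - 1) * (N ω : ℝ) ∂μ = lam ^ 3 + 2 * lam ^ 2 := by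
  have hs : HasSum (fun k : ℕ => ((k : ℝ) * ((k : ℝ) - 1) * (k : ℝ)) * ppmf lam k)
      (lam ^ 3 + 2 * lam ^ 2) := by
    have h := (hasSum_desc (h := hlam) 3).add ((hasSum_desc (h := hlam) 2).mul_left 2)
    convert h using 1
    funext k; rw [df3, df2]; ring
  exact integral_comp hN hlam hpmf (fun k => mul_nonneg (knn k) k.cast_nonneg) hs

lemma momA2 : Integrable (fun ω => ((N ω : ℝ) * ((N ω : ℝ) - 1)) ^ 2) μ ∧
    ∫ ω, ((N ω : ℝ) * ((N ω : ℝ) - 1)) ^ 2 ∂μ = lam ^ 4 + 4 * lam ^ 3 + 2 * lam ^ 2 := by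
  have hs : HasSum (fun k : ℕ => (((k : ℝ) * ((k : ℝ) - 1)) ^ 2) * ppmf lam k)
      (lam ^ 4 + 4 * lam ^ 3 + 2 * lam ^ 2) := by
    have h := ((hasSum_desc (h := hlam) 4).add ((hasSum_desc (h := hlam) 3).mul_left 4)).add
      ((hasSum_desc (h := hlam) 2).mul_left 2)
    convert h using 1
    funext k; rw [df4, df3, df2]; ring
  exact integral_comp hN hlam hpmf (fun k => sq_nonneg _) hs

end Moments


lemma keyx {t y : Ω → ℕ} (ht : Measurable t) (hy : Measurable y) {lam : ℝ} (hlam : 0 ≤ lam)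
    (hpt : ∀ k, μ {ω | t ω = k} = ENNReal.ofReal (ppmf lam k))
    (hpy : ∀ k, μ {ω | y ω = k} = ENNReal.ofReal (ppmf lam k))
    (hind : IndepFun t y μ) :
    Integrable (fun ω => ((t ω : ℝ) - y ω) ^ 2 - t ω - y ω) μ ∧
    ∫ ω, (((t ω : ℝ) - y ω) ^ 2 - t ω - y ω) ∂μ = 0 ∧
    Integrable (fun ω => ((((t ω : ℝ) - y ω) ^ 2 - t ω - y ω) ^ 2)) μ ∧
    ∫ ω, ((((t ω : ℝ) - y ω) ^ 2 - t ω - y ω) ^ 2) ∂μ = 8 * lam ^ 2 := by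
  obtain ⟨iT, vT⟩ := mom1 ht hlam hpt
  obtain ⟨iY, vY⟩ := mom1 hy hlam hpy
  obtain ⟨iT2, vT2⟩ := mom2 ht hlam hpt
  obtain ⟨iY2, vY2⟩ := mom2 hy hlam hpy
  obtain ⟨iA, vA⟩ := momA ht hlam hpt
  obtain ⟨iB, vB⟩ := momA hy hlam hpy
  obtain ⟨iAT, vAT⟩ := momAT ht hlam hpt
  obtain ⟨iBY, vBY⟩ := momAT hy hlam hpy
  obtain ⟨iA2, vA2⟩ := momA2 ht hlam hpt
  obtain ⟨iB2, vB2⟩ := momA2 hy hlam hpy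
  have hcomp : ∀ (f g : ℕ → ℝ), IndepFun (fun ω => f (t ω)) (fun ω => g (y ω)) μ :=
    fun f g => hind.comp (measurable_from_top : Measurable f)
      (measurable_from_top : Measurable g)
  -- products
  have iTY : Integrable (fun ω => (t ω : ℝ) * (y ω : ℝ)) μ :=
    (hcomp (fun k => (k : ℝ)) (fun k => (k : ℝ))).integrable_mul iT iY
  have vTY : ∫ ω, (t ω : ℝ) * (y ω : ℝ) ∂μ = lam * lam := by
    have h := (hcomp (fun k => (k : ℝ)) (fun k => (k : ℝ))).integral_mul_eq_mul_integral iT.aestronglyMeasurable iY.aestronglyMeasurable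
    rw [vT, vY] at h; exact h
  have iT2Y2 : Integrable (fun ω => (t ω : ℝ) ^ 2 * (y ω : ℝ) ^ 2) μ :=
    (hcomp (fun k => (k : ℝ) ^ 2) (fun k => (k : ℝ) ^ 2)).integrable_mul iT2 iY2
  have vT2Y2 : ∫ ω, (t ω : ℝ) ^ 2 * (y ω : ℝ) ^ 2 ∂μ = (lam ^ 2 + lam) * (lam ^ 2 + lam) := by
    have h := (hcomp (fun k => (k : ℝ) ^ 2)
      (fun k => (k : ℝ) ^ 2)).integral_mul_eq_mul_integral iT2.aestronglyMeasurable iY2.aestronglyMeasurable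
    rw [vT2, vY2] at h; exact h
  have iAB : Integrable (fun ω => ((t ω : ℝ) * ((t ω : ℝ) - 1))
      * ((y ω : ℝ) * ((y ω : ℝ) - 1))) μ :=
    (hcomp (fun k => (k : ℝ) * ((k : ℝ) - 1)) (fun k => (k : ℝ) * ((k : ℝ) - 1))).integrable_mul
      iA iB
  have vAB : ∫ ω, ((t ω : ℝ) * ((t ω : ℝ) - 1)) * ((y ω : ℝ) * ((y ω : ℝ) - 1)) ∂μ
      = lam ^ 2 * lam ^ 2 := by
    have h := (hcomp (fun k => (k : ℝ) * ((k : ℝ) - 1))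
      (fun k => (k : ℝ) * ((k : ℝ) - 1))).integral_mul_eq_mul_integral iA.aestronglyMeasurable iB.aestronglyMeasurable
    rw [vA, vB] at h; exact h
  have iATY : Integrable (fun ω => ((t ω : ℝ) * ((t ω : ℝ) - 1) * (t ω : ℝ)) * (y ω : ℝ)) μ :=
    (hcomp (fun k => (k : ℝ) * ((k : ℝ) - 1) * (k : ℝ)) (fun k => (k : ℝ))).integrable_mul iAT iY
  have vATY : ∫ ω, ((t ω : ℝ) * ((t ω : ℝ) - 1) * (t ω : ℝ)) * (y ω : ℝ) ∂μ
      = (lam ^ 3 + 2 * lam ^ 2) * lam := by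
    have h := (hcomp (fun k => (k : ℝ) * ((k : ℝ) - 1) * (k : ℝ))
      (fun k => (k : ℝ))).integral_mul_eq_mul_integral iAT.aestronglyMeasurable iY.aestronglyMeasurable
    rw [vAT, vY] at h; exact h
  have iTBY : Integrable (fun ω => (t ω : ℝ) * ((y ω : ℝ) * ((y ω : ℝ) - 1) * (y ω : ℝ))) μ :=
    (hcomp (fun k => (k : ℝ)) (fun k => (k : ℝ) * ((k : ℝ) - 1) * (k : ℝ))).integrable_mul iT iBY
  have vTBY : ∫ ω, (t ω : ℝ) * ((y ω : ℝ) * ((y ω : ℝ) - 1) * (y ω : ℝ)) ∂μ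
      = lam * (lam ^ 3 + 2 * lam ^ 2) := by
    have h := (hcomp (fun k => (k : ℝ))
      (fun k => (k : ℝ) * ((k : ℝ) - 1) * (k : ℝ))).integral_mul_eq_mul_integral iT.aestronglyMeasurable iBY.aestronglyMeasurable
    rw [vT, vBY] at h; exact h
  -- Z
  have iTY2 : Integrable (fun ω => 2 * ((t ω : ℝ) * (y ω : ℝ))) μ := iTY.const_mul 2
  have iApB : Integrable (fun ω => (t ω : ℝ) * ((t ω : ℝ) - 1)
      + (y ω : ℝ) * ((y ω : ℝ) - 1)) μ := iA.add iB
  have hZfun : (fun ω => ((t ω : ℝ) - y ω) ^ 2 - t ω - y ω)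
      = fun ω => ((t ω : ℝ) * ((t ω : ℝ) - 1) + (y ω : ℝ) * ((y ω : ℝ) - 1))
        - 2 * ((t ω : ℝ) * (y ω : ℝ)) := by
    funext ω; ring
  have iZ : Integrable (fun ω => ((t ω : ℝ) - y ω) ^ 2 - t ω - y ω) μ := by
    rw [hZfun]; exact iApB.sub iTY2
  have vZ : ∫ ω, (((t ω : ℝ) - y ω) ^ 2 - t ω - y ω) ∂μ = 0 := by
    rw [hZfun, integral_sub iApB iTY2, integral_add iA iB, integral_const_mul, vA, vB, vTY]
    ring
  -- Z squared
  have i1 : Integrable (fun ω => ((t ω : ℝ) * ((t ω : ℝ) - 1)) ^ 2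
      + ((y ω : ℝ) * ((y ω : ℝ) - 1)) ^ 2) μ := iA2.add iB2
  have i1b : Integrable (fun ω => 4 * ((t ω : ℝ) ^ 2 * (y ω : ℝ) ^ 2)) μ := iT2Y2.const_mul 4
  have i2 : Integrable (fun ω => (((t ω : ℝ) * ((t ω : ℝ) - 1)) ^ 2
      + ((y ω : ℝ) * ((y ω : ℝ) - 1)) ^ 2) + 4 * ((t ω : ℝ) ^ 2 * (y ω : ℝ) ^ 2)) μ :=
    i1.add i1b
  have i2b : Integrable (fun ω => 2 * (((t ω : ℝ) * ((t ω : ℝ) - 1))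
      * ((y ω : ℝ) * ((y ω : ℝ) - 1)))) μ := iAB.const_mul 2
  have i3 : Integrable (fun ω => ((((t ω : ℝ) * ((t ω : ℝ) - 1)) ^ 2
      + ((y ω : ℝ) * ((y ω : ℝ) - 1)) ^ 2) + 4 * ((t ω : ℝ) ^ 2 * (y ω : ℝ) ^ 2))
      + 2 * (((t ω : ℝ) * ((t ω : ℝ) - 1)) * ((y ω : ℝ) * ((y ω : ℝ) - 1)))) μ := i2.add i2b
  have i5 : Integrable (fun ω => 4 * (((t ω : ℝ) * ((t ω : ℝ) - 1) * (t ω : ℝ))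
      * (y ω : ℝ))) μ := iATY.const_mul 4
  have i6 : Integrable (fun ω => 4 * ((t ω : ℝ)
      * ((y ω : ℝ) * ((y ω : ℝ) - 1) * (y ω : ℝ)))) μ := iTBY.const_mul 4
  have i4 : Integrable (fun ω => (((((t ω : ℝ) * ((t ω : ℝ) - 1)) ^ 2
      + ((y ω : ℝ) * ((y ω : ℝ) - 1)) ^ 2) + 4 * ((t ω : ℝ) ^ 2 * (y ω : ℝ) ^ 2))
      + 2 * (((t ω : ℝ) * ((t ω : ℝ) - 1)) * ((y ω : ℝ) * ((y ω : ℝ) - 1))))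
      - 4 * (((t ω : ℝ) * ((t ω : ℝ) - 1) * (t ω : ℝ)) * (y ω : ℝ))) μ := i3.sub i5
  have hZ2fun : (fun ω => ((((t ω : ℝ) - y ω) ^ 2 - t ω - y ω) ^ 2))
      = fun ω => (((((t ω : ℝ) * ((t ω : ℝ) - 1)) ^ 2 + ((y ω : ℝ) * ((y ω : ℝ) - 1)) ^ 2)
          + 4 * ((t ω : ℝ) ^ 2 * (y ω : ℝ) ^ 2)
          + 2 * (((t ω : ℝ) * ((t ω : ℝ) - 1)) * ((y ω : ℝ) * ((y ω : ℝ) - 1))))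
          - 4 * (((t ω : ℝ) * ((t ω : ℝ) - 1) * (t ω : ℝ)) * (y ω : ℝ)))
          - 4 * ((t ω : ℝ) * ((y ω : ℝ) * ((y ω : ℝ) - 1) * (y ω : ℝ))) := by
    funext ω; ring
  have iZ2 : Integrable (fun ω => ((((t ω : ℝ) - y ω) ^ 2 - t ω - y ω) ^ 2)) μ := by
    rw [hZ2fun]
    exact i4.sub i6
  have vZ2 : ∫ ω, ((((t ω : ℝ) - y ω) ^ 2 - t ω - y ω) ^ 2) ∂μ = 8 * lam ^ 2 := by
    rw [hZ2fun, integral_sub i4 i6, integral_sub i3 i5, integral_add i2 i2b,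
      integral_add i1 i1b, integral_add iA2 iB2]
    simp only [integral_const_mul]
    rw [vA2, vB2, vT2Y2, vAB, vATY, vTBY]
    ring
  exact ⟨iZ, vZ, iZ2, vZ2⟩

end ClosenessAux

/-- The completeness case of the correctness of the Closeness-Tester (Theorem 5.1):
when both Poissonized counts `T x` and `Y x` are `Poisson(s·q(x))`, all mutually
independent, and `s ≥ c₁·n·‖q‖₂/ε²`, the statistic `Z = Σ_x ((T_x − Y_x)² − T_x − Y_x)`
exceeds `5s²ε²/(8n)` with probability at most `1/3`. -/
theorem closeness_tester_completeness :
    ∃ c₁ : ℝ, 0 < c₁ ∧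
      ∀ (n : ℕ), 1 ≤ n → ∀ ε : ℝ, 0 < ε → ε < 1 →
      ∀ q : Fin n → ℝ, IsDist q →
      ∀ s : ℕ, c₁ * n * Real.sqrt (∑ x, q x ^ 2) / ε ^ 2 ≤ (s : ℝ) →
      ∀ (Ω : Type) [MeasurableSpace Ω] (μ : Measure Ω) [IsProbabilityMeasure μ],
      ∀ T Y : Fin n → Ω → ℕ,
        (∀ x, Measurable (T x)) → (∀ x, Measurable (Y x)) →
        iIndepFun (Sum.elim T Y) μ →
        (∀ (x : Fin n) (k : ℕ), μ {ω | T x ω = k}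
          = ENNReal.ofReal (Real.exp (-(s * q x)) * (s * q x) ^ k / (Nat.factorial k))) →
        (∀ (x : Fin n) (k : ℕ), μ {ω | Y x ω = k}
          = ENNReal.ofReal (Real.exp (-(s * q x)) * (s * q x) ^ k / (Nat.factorial k))) →
        μ {ω | 5 * (s : ℝ) ^ 2 * ε ^ 2 / (8 * n)
            ≤ ∑ x, (((T x ω : ℝ) - Y x ω) ^ 2 - T x ω - Y x ω)} ≤ 1 / 3 := by
  classical
  refine ⟨8, by norm_num, ?_⟩
  intro n hn ε hε hε1 q hq s hs Ω _ μ _ T Y hT hY hindep hpT hpY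
  set Q : ℝ := ∑ x, q x ^ 2 with hQdef
  have hnpos : (0 : ℝ) < n := by exact_mod_cast Nat.lt_of_lt_of_le Nat.zero_lt_one hn
  have hnQ : 1 ≤ (n : ℝ) * Q := by
    have h1 := sq_sum_le_card_mul_sum_sq (s := (Finset.univ : Finset (Fin n))) (f := q)
    rw [hq.2] at h1
    simpa using h1
  have hQpos : 0 < Q := by nlinarith
  have hsqQ : 0 < Real.sqrt Q := Real.sqrt_pos.mpr hQpos
  have hspos : (0 : ℝ) < s := by
    refine lt_of_lt_of_le ?_ hs
    positivity
  have h8 : 8 * (n : ℝ) * Real.sqrt Q ≤ (s : ℝ) * ε ^ 2 := by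
    rw [div_le_iff₀ (pow_pos hε 2)] at hs
    linarith
  have hsqQ2 : Real.sqrt Q ^ 2 = Q := Real.sq_sqrt hQpos.le
  have hkey : 64 * (n : ℝ) ^ 2 * Q ≤ (s : ℝ) ^ 2 * ε ^ 4 := by
    have hmul := mul_self_le_mul_self (by positivity) h8
    nlinarith [hmul, hsqQ2]
  -- per-coordinate facts
  have hlam : ∀ x : Fin n, 0 ≤ (s : ℝ) * q x := fun x => mul_nonneg (Nat.cast_nonneg s) (hq.1 x)
  have hpT' : ∀ (x : Fin n) (k : ℕ),
      μ {ω | T x ω = k} = ENNReal.ofReal (ClosenessAux.ppmf ((s : ℝ) * q x) k) :=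
    fun x k => by simpa [ClosenessAux.ppmf] using hpT x k
  have hpY' : ∀ (x : Fin n) (k : ℕ),
      μ {ω | Y x ω = k} = ENNReal.ofReal (ClosenessAux.ppmf ((s : ℝ) * q x) k) :=
    fun x k => by simpa [ClosenessAux.ppmf] using hpY x k
  have hmeasSum : ∀ i : Fin n ⊕ Fin n, Measurable (Sum.elim T Y i) := by
    intro i; cases i with
    | inl x => exact hT x
    | inr x => exact hY x
  have hpair : ∀ x : Fin n, IndepFun (T x) (Y x) μ := fun x =>
    hindep.indepFun (show (Sum.inl x : Fin n ⊕ Fin n) ≠ Sum.inr x by simp)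
  have hkx := fun x : Fin n =>
    ClosenessAux.keyx (hT x) (hY x) (hlam x) (hpT' x) (hpY' x) (hpair x)
  have hZint : ∀ x, Integrable (fun ω => (((T x ω : ℝ) - Y x ω) ^ 2 - T x ω - Y x ω)) μ := fun x => (hkx x).1
  have hZval : ∀ x, ∫ ω, (((T x ω : ℝ) - Y x ω) ^ 2 - T x ω - Y x ω) ∂μ = 0 := fun x => (hkx x).2.1
  have hZ2int : ∀ x, Integrable (fun ω => (((T x ω : ℝ) - Y x ω) ^ 2 - T x ω - Y x ω) ^ 2) μ := fun x => (hkx x).2.2.1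
  have hZ2val : ∀ x, ∫ ω, ((((T x ω : ℝ) - Y x ω) ^ 2 - T x ω - Y x ω) ^ 2) ∂μ = 8 * ((s : ℝ) * q x) ^ 2 :=
    fun x => (hkx x).2.2.2
  -- cross independence
  have hφ : Measurable (fun p : ℕ × ℕ => ((p.1 : ℝ) - p.2) ^ 2 - p.1 - p.2) := by
    have h1 : Measurable (fun p : ℕ × ℕ => (p.1 : ℝ)) :=
      (measurable_from_top : Measurable ((↑·) : ℕ → ℝ)).comp measurable_fst
    have h2 : Measurable (fun p : ℕ × ℕ => (p.2 : ℝ)) :=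
      (measurable_from_top : Measurable ((↑·) : ℕ → ℝ)).comp measurable_snd
    exact (((h1.sub h2).pow_const 2).sub h1).sub h2
  have hindZ : ∀ x x' : Fin n, x ≠ x' →
      IndepFun (fun ω => (((T x ω : ℝ) - Y x ω) ^ 2 - T x ω - Y x ω)) (fun ω => (((T x' ω : ℝ) - Y x' ω) ^ 2 - T x' ω - Y x' ω)) μ := by
    intro x x' hne
    have hpp := hindep.indepFun_prodMk_prodMk hmeasSum
      (Sum.inl x) (Sum.inr x) (Sum.inl x') (Sum.inr x')
      (by simp [hne]) (by simp) (by simp) (by simp [hne])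
    exact hpp.comp hφ hφ
  have hprod_int : ∀ x x' : Fin n, Integrable (fun ω => (((T x ω : ℝ) - Y x ω) ^ 2 - T x ω - Y x ω) * (((T x' ω : ℝ) - Y x' ω) ^ 2 - T x' ω - Y x' ω)) μ := by
    intro x x'
    by_cases h : x = x'
    · subst h
      have hsq : (fun ω : Ω => (((T x ω : ℝ) - Y x ω) ^ 2 - T x ω - Y x ω) * (((T x ω : ℝ) - Y x ω) ^ 2 - T x ω - Y x ω)) = fun ω : Ω => (((T x ω : ℝ) - Y x ω) ^ 2 - T x ω - Y x ω) ^ 2 := by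
        funext ω; ring
      rw [hsq]
      exact hZ2int x
    · exact (hindZ x x' h).integrable_mul (hZint x) (hZint x')
  have hprod_val : ∀ x x' : Fin n, x ≠ x' →
      ∫ ω, ((((T x ω : ℝ) - Y x ω) ^ 2 - T x ω - Y x ω) * (((T x' ω : ℝ) - Y x' ω) ^ 2 - T x' ω - Y x' ω)) ∂μ = 0 := by
    intro x x' hne
    have h := (hindZ x x' hne).integral_mul_eq_mul_integral (hZint x).aestronglyMeasurable (hZint x').aestronglyMeasurable
    rw [hZval x, hZval x'] at h
    simpa using h
  -- the statistic
  have hZZint : Integrable (fun ω => ∑ x, (((T x ω : ℝ) - Y x ω) ^ 2 - T x ω - Y x ω)) μ :=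
    integrable_finset_sum _ (fun x _ => hZint x)
  have hZZval : ∫ ω, (∑ x, (((T x ω : ℝ) - Y x ω) ^ 2 - T x ω - Y x ω)) ∂μ = 0 := by
    rw [integral_finset_sum _ (fun x _ => hZint x)]
    exact Finset.sum_eq_zero (fun x _ => hZval x)
  have hsq_expand : (fun ω => (∑ x, (((T x ω : ℝ) - Y x ω) ^ 2 - T x ω - Y x ω)) ^ 2)
      = fun ω => ∑ x, ∑ x', (((T x ω : ℝ) - Y x ω) ^ 2 - T x ω - Y x ω) * (((T x' ω : ℝ) - Y x' ω) ^ 2 - T x' ω - Y x' ω) := by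
    funext ω
    rw [sq, Finset.sum_mul_sum]
  have hZZ2int : Integrable (fun ω => (∑ x, (((T x ω : ℝ) - Y x ω) ^ 2 - T x ω - Y x ω)) ^ 2) μ := by
    rw [hsq_expand]
    exact integrable_finset_sum _ (fun x _ => integrable_finset_sum _ (fun x' _ => hprod_int x x'))
  have hZZ2val : ∫ ω, ((∑ x, (((T x ω : ℝ) - Y x ω) ^ 2 - T x ω - Y x ω)) ^ 2) ∂μ = 8 * (s : ℝ) ^ 2 * Q := by
    rw [hsq_expand, integral_finset_sum _
      (fun x _ => integrable_finset_sum _ (fun x' _ => hprod_int x x'))]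
    have hrow : ∀ x : Fin n, (∑ x', ∫ ω, ((((T x ω : ℝ) - Y x ω) ^ 2 - T x ω - Y x ω) * (((T x' ω : ℝ) - Y x' ω) ^ 2 - T x' ω - Y x' ω)) ∂μ)
        = 8 * ((s : ℝ) * q x) ^ 2 := by
      intro x
      rw [Finset.sum_eq_single x]
      · have hsq : (fun ω : Ω => (((T x ω : ℝ) - Y x ω) ^ 2 - T x ω - Y x ω) * (((T x ω : ℝ) - Y x ω) ^ 2 - T x ω - Y x ω)) = fun ω : Ω => (((T x ω : ℝ) - Y x ω) ^ 2 - T x ω - Y x ω) ^ 2 := by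
          funext ω; ring
        rw [hsq]
        exact hZ2val x
      · intro b _ hb
        exact hprod_val x b (Ne.symm hb)
      · intro hx
        exact absurd (Finset.mem_univ x) hx
    calc (∑ x, ∫ ω, (∑ x', (((T x ω : ℝ) - Y x ω) ^ 2 - T x ω - Y x ω) * (((T x' ω : ℝ) - Y x' ω) ^ 2 - T x' ω - Y x' ω)) ∂μ)
        = ∑ x, ∑ x', ∫ ω, ((((T x ω : ℝ) - Y x ω) ^ 2 - T x ω - Y x ω) * (((T x' ω : ℝ) - Y x' ω) ^ 2 - T x' ω - Y x' ω)) ∂μ := by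
          refine Finset.sum_congr rfl (fun x _ => ?_)
          rw [integral_finset_sum _ (fun x' _ => hprod_int x x')]
      _ = ∑ x : Fin n, 8 * ((s : ℝ) * q x) ^ 2 := Finset.sum_congr rfl (fun x _ => hrow x)
      _ = 8 * (s : ℝ) ^ 2 * Q := by
          rw [hQdef, Finset.mul_sum]
          exact Finset.sum_congr rfl (fun x _ => by ring)
  have hmem : MemLp (fun ω => ∑ x, (((T x ω : ℝ) - Y x ω) ^ 2 - T x ω - Y x ω)) 2 μ :=
    (memLp_two_iff_integrable_sq hZZint.aestronglyMeasurable).mpr hZZ2int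
  have hvar : variance (fun ω => ∑ x, (((T x ω : ℝ) - Y x ω) ^ 2 - T x ω - Y x ω)) μ = 8 * (s : ℝ) ^ 2 * Q := by
    rw [variance_eq_sub hmem]
    simp only [Pi.pow_apply]
    rw [hZZ2val, hZZval]
    ring
  set c : ℝ := 5 * (s : ℝ) ^ 2 * ε ^ 2 / (8 * n) with hcdef
  have hc : 0 < c := by
    rw [hcdef]
    exact div_pos (by positivity) (by positivity)
  have cheb := meas_ge_le_variance_div_sq hmem hc
  have hsubset : {ω | c ≤ ∑ x, (((T x ω : ℝ) - Y x ω) ^ 2 - T x ω - Y x ω)}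
      ⊆ {ω | c ≤ |(∑ x, (((T x ω : ℝ) - Y x ω) ^ 2 - T x ω - Y x ω)) - ∫ ω', (∑ x, (((T x ω' : ℝ) - Y x ω') ^ 2 - T x ω' - Y x ω')) ∂μ|} := by
    intro ω hω
    simp only [Set.mem_setOf_eq] at hω ⊢
    rw [hZZval, sub_zero]
    exact le_trans hω (le_abs_self _)
  have hbound : 8 * (s : ℝ) ^ 2 * Q / c ^ 2 ≤ 1 / 3 := by
    have hc2 : c ^ 2 = 25 * (s : ℝ) ^ 4 * ε ^ 4 / (64 * (n : ℝ) ^ 2) := by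
      rw [hcdef]; field_simp; ring
    rw [div_le_iff₀ (pow_pos hc 2), hc2]
    have h25 := mul_le_mul_of_nonneg_left hkey
      (by positivity : (0 : ℝ) ≤ 25 * (s : ℝ) ^ 2)
    have hden : (0 : ℝ) < 64 * (n : ℝ) ^ 2 := by positivity
    have hgoal : 8 * (s : ℝ) ^ 2 * Q * (64 * (n : ℝ) ^ 2) ≤
        (1 / 3) * (25 * (s : ℝ) ^ 4 * ε ^ 4) := by
      nlinarith [h25, mul_pos (pow_pos hspos 2) hQpos, mul_pos hnpos hnpos]
    calc 8 * (s : ℝ) ^ 2 * Q ≤ (1 / 3) * (25 * (s : ℝ) ^ 4 * ε ^ 4) / (64 * (n : ℝ) ^ 2) := by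
          rw [le_div_iff₀ hden]; linarith
      _ = 1 / 3 * (25 * (s : ℝ) ^ 4 * ε ^ 4 / (64 * (n : ℝ) ^ 2)) := by ring
  calc μ {ω | c ≤ ∑ x, (((T x ω : ℝ) - Y x ω) ^ 2 - T x ω - Y x ω)}
      ≤ μ {ω | c ≤ |(∑ x, (((T x ω : ℝ) - Y x ω) ^ 2 - T x ω - Y x ω)) - ∫ ω', (∑ x, (((T x ω' : ℝ) - Y x ω') ^ 2 - T x ω' - Y x ω')) ∂μ|} :=
        measure_mono hsubset
    _ ≤ ENNReal.ofReal (variance (fun ω => ∑ x, (((T x ω : ℝ) - Y x ω) ^ 2 - T x ω - Y x ω)) μ / c ^ 2) := cheb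
    _ ≤ 1 / 3 := by
        rw [hvar]
        refine le_trans (ENNReal.ofReal_le_ofReal hbound) ?_
        rw [ENNReal.ofReal_div_of_pos (by norm_num)]
        simp
end
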